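/- arXiv:2402.01139 — 9 statements merged into one kernel-verified Lean document; each statement's English description precedes it below -/
import Mathlib

section
/- Suppose the step sizes η_t are positive and nonincreasing and the initial threshold satisfies q_1 ∈ [0,B]. Then for every T ≥ 1, | (1/T)·Σ_{t=1}^T 1{s_t ≤ q_t} − (1−α) | ≤ (B + η_1)/(η_T·T). -/
open Finset

private lemma eta_mono (η : ℕ → ℝ) (hη_dec : ∀ t, 1 ≤ t → η (t + 1) ≤ η t) :
    ∀ a b : ℕ, 1 ≤ a → a ≤ b → η b ≤ η a := by
  intro a b ha hab
  induction b, hab using Nat.le_induction with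
  | base => exact le_rfl
  | succ b hb ih => exact (hη_dec b (ha.trans hb)).trans ih

private lemma q_bound (α B : ℝ) (hα : α ∈ Set.Ioo (0 : ℝ) 1)
    (s η q : ℕ → ℝ)
    (hs : ∀ t, 1 ≤ t → s t ∈ Set.Icc 0 B)
    (hη_pos : ∀ t, 1 ≤ t → 0 < η t)
    (hη_dec : ∀ t, 1 ≤ t → η (t + 1) ≤ η t)
    (hq1 : q 1 ∈ Set.Icc 0 B)
    (hrec : ∀ t, 1 ≤ t →
      q (t + 1) = q t + η t * ((if q t < s t then (1 : ℝ) else 0) - α)) :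
    ∀ t, 1 ≤ t → -(η 1 * α) ≤ q t ∧ q t ≤ B + η 1 * (1 - α) := by
  have hη1 := hη_pos 1 le_rfl
  intro t ht
  induction t, ht using Nat.le_induction with
  | base =>
    constructor
    · nlinarith [hq1.1, hα.1]
    · nlinarith [hq1.2, hα.2]
  | succ t ht ih =>
    have hrect := hrec t ht
    have hle : η t ≤ η 1 := eta_mono η hη_dec 1 t le_rfl ht
    have hpos := hη_pos t ht
    by_cases h : q t < s t
    · rw [if_pos h] at hrect
      have hsB := (hs t ht).2
      constructor
      · nlinarith [ih.1, hα.2]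
      · nlinarith [hα.2]
    · rw [if_neg h] at hrect
      push_neg at h
      have hs0 := (hs t ht).1
      constructor
      · nlinarith [hα.1, hα.2]
      · nlinarith [ih.2, hα.1]

/-- **Online conformal prediction with nonincreasing step sizes: long-run coverage.**
Fix `α ∈ (0,1)` and `B > 0`. Scores `s t ∈ [0,B]`, positive nonincreasing step sizes `η t`,
initial threshold `q 1 ∈ [0,B]`, and the online conformal update
`q (t+1) = q t + η t * (err t - α)` where `err t = 1` if `s t > q t` and `0` otherwise.
Then for every `T ≥ 1`,
`|(1/T) ∑_{t=1}^T 1{s t ≤ q t} - (1 - α)| ≤ (B + η 1) / (η T * T)`. -/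
theorem long_run_coverage_nonincreasing_step
    (α B : ℝ) (hα : α ∈ Set.Ioo (0 : ℝ) 1) (hB : 0 < B)
    (s η q : ℕ → ℝ)
    (hs : ∀ t, 1 ≤ t → s t ∈ Set.Icc 0 B)
    (hη_pos : ∀ t, 1 ≤ t → 0 < η t)
    (hη_dec : ∀ t, 1 ≤ t → η (t + 1) ≤ η t)
    (hq1 : q 1 ∈ Set.Icc 0 B)
    (hrec : ∀ t, 1 ≤ t →
      q (t + 1) = q t + η t * ((if q t < s t then (1 : ℝ) else 0) - α))
    (T : ℕ) (hT : 1 ≤ T) :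
    |(1 / (T : ℝ)) * ∑ t ∈ Finset.Icc 1 T, (if s t ≤ q t then (1 : ℝ) else 0) - (1 - α)|
      ≤ (B + η 1) / (η T * T) := by
  have hη1 := hη_pos 1 le_rfl
  have hqb := q_bound α B hα s η q hs hη_pos hη_dec hq1 hrec
  -- step identity: err t - α = (q (t+1) - q t) / η t
  have hstep : ∀ t, 1 ≤ t →
      (if q t < s t then (1 : ℝ) else 0) - α = (q (t + 1) - q t) / η t := by
    intro t ht
    have hpos := hη_pos t ht
    field_simp [hrec t ht]
    rw [hrec t ht]; ring
  -- upper bound on S_T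
  have hupper : ∀ T, 1 ≤ T →
      ∑ t ∈ Icc 1 T, ((if q t < s t then (1 : ℝ) else 0) - α)
        ≤ (q (T + 1) + η 1 * α) / η T - (q 1 + η 1 * α) / η 1 := by
    intro T hT
    induction T, hT using Nat.le_induction with
    | base =>
      rw [show Icc 1 1 = {1} from rfl, sum_singleton, hstep 1 le_rfl]
      rw [div_sub_div_same, div_le_div_iff₀ hη1 hη1]
      ring_nf
      exact le_rfl
    | succ T hT ih =>
      rw [Finset.sum_Icc_succ_top (by omega)]
      have hmono : η (T + 1) ≤ η T := hη_dec T hT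
      have hTpos := hη_pos T hT
      have hT1pos := hη_pos (T + 1) (by omega)
      have hnum : 0 ≤ q (T + 1) + η 1 * α := by
        nlinarith [(hqb (T + 1) (by omega)).1]
      have hdivle : (q (T + 1) + η 1 * α) / η T ≤ (q (T + 1) + η 1 * α) / η (T + 1) := by
        gcongr
      have := hstep (T + 1) (by omega)
      rw [this]
      have : (q (T + 1) + η 1 * α) / η (T + 1) + (q (T + 1 + 1) - q (T + 1)) / η (T + 1)
          = (q (T + 1 + 1) + η 1 * α) / η (T + 1) := by
        rw [← add_div]; ring_nf
      linarith [ih, hdivle]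
  -- lower bound on S_T
  have hlower : ∀ T, 1 ≤ T →
      (q (T + 1) - (B + η 1 * (1 - α))) / η T + ((B + η 1 * (1 - α)) - q 1) / η 1
        ≤ ∑ t ∈ Icc 1 T, ((if q t < s t then (1 : ℝ) else 0) - α) := by
    intro T hT
    induction T, hT using Nat.le_induction with
    | base =>
      rw [show Icc 1 1 = {1} from rfl, sum_singleton, hstep 1 le_rfl]
      rw [← add_div, div_le_div_iff₀ hη1 hη1]
      ring_nf
      exact le_rfl
    | succ T hT ih =>
      rw [Finset.sum_Icc_succ_top (by omega)]
      have hmono : η (T + 1) ≤ η T := hη_dec T hT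
      have hTpos := hη_pos T hT
      have hT1pos := hη_pos (T + 1) (by omega)
      have hnum : q (T + 1) - (B + η 1 * (1 - α)) ≤ 0 := by
        nlinarith [(hqb (T + 1) (by omega)).2]
      have hdivle : (q (T + 1) - (B + η 1 * (1 - α))) / η (T + 1)
          ≤ (q (T + 1) - (B + η 1 * (1 - α))) / η T := by
        rw [div_le_div_iff₀ hT1pos hTpos]
        nlinarith
      have := hstep (T + 1) (by omega)
      rw [this]
      have : (q (T + 1) - (B + η 1 * (1 - α))) / η (T + 1)
            + (q (T + 1 + 1) - q (T + 1)) / η (T + 1)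
          = (q (T + 1 + 1) - (B + η 1 * (1 - α))) / η (T + 1) := by
        rw [← add_div]; ring_nf
      linarith [ih, hdivle]
  -- combine: |S_T| <= (B + eta 1) / eta T
  set S := ∑ t ∈ Icc 1 T, ((if q t < s t then (1 : ℝ) else 0) - α) with hS
  have hηT := hη_pos T hT
  have hqT1 := hqb (T + 1) (by omega)
  have hK : 0 ≤ (q 1 + η 1 * α) / η 1 :=
    div_nonneg (by nlinarith [hq1.1, hα.1]) hη1.le
  have hSup : S ≤ (B + η 1) / η T := by
    have h2 : (q (T + 1) + η 1 * α) / η T ≤ (B + η 1) / η T :=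
      (div_le_div_iff_of_pos_right hηT).mpr (by nlinarith [hqT1.2])
    linarith [hupper T hT]
  have hK' : 0 ≤ ((B + η 1 * (1 - α)) - q 1) / η 1 :=
    div_nonneg (by nlinarith [hq1.2, hα.2]) hη1.le
  have hSlow : -((B + η 1) / η T) ≤ S := by
    have h2 : (-(B + η 1)) / η T ≤ (q (T + 1) - (B + η 1 * (1 - α))) / η T :=
      (div_le_div_iff_of_pos_right hηT).mpr (by nlinarith [hqT1.1])
    have h3 : (-(B + η 1)) / η T = -((B + η 1) / η T) := by rw [neg_div]
    linarith [hlower T hT]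
  have habs : |S| ≤ (B + η 1) / η T := abs_le.mpr ⟨hSlow, hSup⟩
  have hTpos : (0 : ℝ) < (T : ℝ) := by exact_mod_cast Nat.lt_of_lt_of_le Nat.zero_lt_one hT
  have hcov : ∑ t ∈ Icc 1 T, (if s t ≤ q t then (1 : ℝ) else 0)
      = (T : ℝ) - (S + (T : ℝ) * α) := by
    have hpt : ∀ t ∈ Icc 1 T, (if s t ≤ q t then (1 : ℝ) else 0)
        = (1 - α) - ((if q t < s t then (1 : ℝ) else 0) - α) := by
      intro t _
      by_cases h : s t ≤ q t
      · rw [if_pos h, if_neg (not_lt.mpr h)]; ring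
      · rw [if_neg h, if_pos (not_le.mp h)]; ring
    rw [Finset.sum_congr rfl hpt, Finset.sum_sub_distrib, Finset.sum_const, Nat.card_Icc]
    simp only [Nat.add_sub_cancel, nsmul_eq_mul, ← hS]
    ring
  have hmain : (1 / (T : ℝ)) * ((T : ℝ) - (S + (T : ℝ) * α)) - (1 - α) = -(S / (T : ℝ)) := by
    field_simp
    ring
  rw [hcov, hmain, abs_neg, abs_div, abs_of_pos hTpos, ← div_div]
  exact (div_le_div_iff_of_pos_right hTpos).mpr habs
end

section
/- Suppose the step sizes η_t are positive (otherwise arbitrary) and the initial threshold satisfies q_1 ∈ [0,B]. Define Δ_1 = 1/η_1 and Δ_t = 1/η_t − 1/η_{t−1} for t ≥ 2. Then for every T ≥ 1, | (1/T)·Σ_{t=1}^T 1{s_t ≤ q_t} − (1−α) | ≤ ((B + max_{1≤t≤T} η_t)/T) · Σ_{t=1}^T |Δ_t|. -/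
/-!
Since `err t - α = (q (t+1) - q t) / η t` and `1 / η t = ∑_{u ≤ t} Δ u`, summation by parts
gives `∑_{t ≤ T} (err t - α) = ∑_{u ≤ T} Δ u * (q (T+1) - q u)`. The thresholds never
leave `[-M α, B + M (1 - α)]`, where `M` bounds the step sizes: a step up happens only below
a score, hence below `B`, and a step down only above a score, hence above `0`. So each
difference `q (T+1) - q u` is at most `B + M` in absolute value.
-/

open Finset

theorem sum_Icc_one_eq_of_sub {f Δ : ℕ → ℝ} (h1 : Δ 1 = f 1)
    (hsucc : ∀ t, 2 ≤ t → Δ t = f t - f (t - 1)) {t : ℕ} (ht : 1 ≤ t) :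
    ∑ u ∈ Icc 1 t, Δ u = f t := by
  induction t, ht using Nat.le_induction with
  | base => simp [h1]
  | succ n hn ih =>
    rw [sum_Icc_succ_top (by omega), ih, hsucc (n + 1) (by omega), Nat.add_sub_cancel]
    ring

theorem sum_Icc_partialSum_mul_sub (Δ q : ℕ → ℝ) (T : ℕ) :
    ∑ t ∈ Icc 1 T, (∑ u ∈ Icc 1 t, Δ u) * (q (t + 1) - q t)
      = ∑ u ∈ Icc 1 T, Δ u * (q (T + 1) - q u) := by
  induction T with
  | zero => simp
  | succ n ih =>
    simp only [sum_Icc_succ_top (show 1 ≤ n + 1 by omega)]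
    rw [ih]
    have hsplit : ∑ u ∈ Icc 1 n, Δ u * (q (n + 1 + 1) - q u)
        = ∑ u ∈ Icc 1 n, Δ u * (q (n + 1) - q u)
          + (∑ u ∈ Icc 1 n, Δ u) * (q (n + 1 + 1) - q (n + 1)) := by
      rw [sum_mul, ← sum_add_distrib]
      exact sum_congr rfl fun u _ => by ring
    rw [hsplit]
    ring

theorem abs_sum_mul_le_of_abs_le {ι : Type*} (S : Finset ι) (f g : ι → ℝ) {C : ℝ}
    (hg : ∀ i ∈ S, |g i| ≤ C) :
    |∑ i ∈ S, f i * g i| ≤ C * ∑ i ∈ S, |f i| :=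
  calc |∑ i ∈ S, f i * g i|
      ≤ ∑ i ∈ S, |f i| * |g i| := by
        simpa only [abs_mul] using abs_sum_le_sum_abs (fun i => f i * g i) S
    _ ≤ ∑ i ∈ S, |f i| * C := sum_le_sum fun i hi => by gcongr; exact hg i hi
    _ = C * ∑ i ∈ S, |f i| := by rw [← sum_mul, mul_comm]

theorem one_div_mul_sum_coverage_sub (α : ℝ) (s q : ℕ → ℝ) {T : ℕ} (hT : T ≠ 0) :
    (1 / (T : ℝ)) * ∑ t ∈ Icc 1 T, (if s t ≤ q t then (1 : ℝ) else 0) - (1 - α)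
      = -((1 / (T : ℝ)) * ∑ t ∈ Icc 1 T, ((if q t < s t then (1 : ℝ) else 0) - α)) := by
  have hcover : ∀ t, (if s t ≤ q t then (1 : ℝ) else 0) = 1 - (if q t < s t then 1 else 0) :=
    fun t => by split_ifs <;> linarith
  simp only [hcover, sum_sub_distrib, sum_const, Nat.card_Icc, Nat.add_sub_cancel, nsmul_eq_mul,
    mul_one]
  field_simp
  ring

theorem conformal_step_mem_Icc {α B M η q s : ℝ} (hα0 : 0 ≤ α) (hα1 : α ≤ 1)
    (hη : 0 ≤ η) (hηM : η ≤ M) (hs : s ∈ Set.Icc 0 B)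
    (hq : q ∈ Set.Icc (-(M * α)) (B + M * (1 - α))) :
    q + η * ((if q < s then (1 : ℝ) else 0) - α) ∈
      Set.Icc (-(M * α)) (B + M * (1 - α)) := by
  obtain ⟨hs0, hsB⟩ := hs
  obtain ⟨hql, hqu⟩ := hq
  split_ifs <;> constructor <;> nlinarith

theorem conformal_threshold_mem_Icc {α B M : ℝ} {s η q : ℕ → ℝ} {T : ℕ}
    (hα0 : 0 ≤ α) (hα1 : α ≤ 1) (hM : 0 ≤ M)
    (hs : ∀ t, 1 ≤ t → s t ∈ Set.Icc 0 B)
    (hη : ∀ t ∈ Icc 1 T, 0 ≤ η t ∧ η t ≤ M) (hq1 : q 1 ∈ Set.Icc 0 B)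
    (hrec : ∀ t, 1 ≤ t →
      q (t + 1) = q t + η t * ((if q t < s t then (1 : ℝ) else 0) - α)) :
    ∀ t ∈ Icc 1 (T + 1), q t ∈ Set.Icc (-(M * α)) (B + M * (1 - α)) := by
  intro t ht
  obtain ⟨ht1, htT⟩ := mem_Icc.mp ht
  induction t, ht1 using Nat.le_induction with
  | base =>
    obtain ⟨h0, h1⟩ := hq1
    constructor <;> nlinarith
  | succ n hn ih =>
    obtain ⟨hη0, hηM⟩ := hη n (mem_Icc.mpr ⟨hn, by omega⟩)
    rw [hrec n hn]
    exact conformal_step_mem_Icc hα0 hα1 hη0 hηM (hs n hn) (ih (mem_Icc.mpr ⟨hn, by omega⟩)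
      (by omega))

theorem long_run_coverage_arbitrary_step_general
    (α B : ℝ) (hα : α ∈ Set.Ioo (0 : ℝ) 1)
    (s η q Δ : ℕ → ℝ)
    (hs : ∀ t, 1 ≤ t → s t ∈ Set.Icc 0 B)
    (hη_pos : ∀ t, 1 ≤ t → 0 < η t)
    (hq1 : q 1 ∈ Set.Icc 0 B)
    (hrec : ∀ t, 1 ≤ t →
      q (t + 1) = q t + η t * ((if q t < s t then (1 : ℝ) else 0) - α))
    (hΔ1 : Δ 1 = 1 / η 1)
    (hΔ : ∀ t, 2 ≤ t → Δ t = 1 / η t - 1 / η (t - 1))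
    (T : ℕ) (hT : 1 ≤ T) :
    |(1 / (T : ℝ)) * ∑ t ∈ Finset.Icc 1 T, (if s t ≤ q t then (1 : ℝ) else 0) - (1 - α)|
      ≤ ((B + (Finset.Icc 1 T).sup' (Finset.nonempty_Icc.mpr hT) η) / T)
          * ∑ t ∈ Finset.Icc 1 T, |Δ t| := by
  obtain ⟨hα0, hα1⟩ := hα
  set M := (Icc 1 T).sup' (nonempty_Icc.mpr hT) η
  have hηM : ∀ t ∈ Icc 1 T, 0 ≤ η t ∧ η t ≤ M := fun t ht =>
    ⟨(hη_pos t (mem_Icc.mp ht).1).le, le_sup' η ht⟩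
  have hM : 0 ≤ M :=
    have h1 : 1 ∈ Icc 1 T := mem_Icc.mpr ⟨le_rfl, hT⟩
    (hηM 1 h1).1.trans (hηM 1 h1).2
  have hthr := conformal_threshold_mem_Icc hα0.le hα1.le hM hs hηM hq1 hrec
  have hgap : ∀ u ∈ Icc 1 T, |q (T + 1) - q u| ≤ B + M := fun u hu => by
    obtain ⟨hu1, huT⟩ := mem_Icc.mp hu
    obtain ⟨hl, hr⟩ := hthr (T + 1) (mem_Icc.mpr ⟨by omega, le_rfl⟩)
    obtain ⟨hl', hr'⟩ := hthr u (mem_Icc.mpr ⟨hu1, by omega⟩)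
    rw [abs_le]
    constructor <;> linarith
  have hmiss : ∑ t ∈ Icc 1 T, ((if q t < s t then (1 : ℝ) else 0) - α)
      = ∑ u ∈ Icc 1 T, Δ u * (q (T + 1) - q u) := by
    rw [← sum_Icc_partialSum_mul_sub]
    refine sum_congr rfl fun t ht => ?_
    have ht1 := (mem_Icc.mp ht).1
    rw [sum_Icc_one_eq_of_sub (f := fun t => 1 / η t) hΔ1 hΔ ht1, hrec t ht1]
    field_simp [(hη_pos t ht1).ne']
    ring
  rw [one_div_mul_sum_coverage_sub α s q (by omega), abs_neg, abs_mul,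
    abs_of_pos (by positivity), hmiss]
  calc 1 / (T : ℝ) * |∑ u ∈ Icc 1 T, Δ u * (q (T + 1) - q u)|
      ≤ 1 / (T : ℝ) * ((B + M) * ∑ u ∈ Icc 1 T, |Δ u|) := by
        gcongr
        exact abs_sum_mul_le_of_abs_le _ _ _ hgap
    _ = (B + M) / T * ∑ u ∈ Icc 1 T, |Δ u| := by ring

/-- **Online conformal prediction with arbitrary positive step sizes: long-run coverage.**
Fix `α ∈ (0,1)` and `B > 0`. Scores `s t ∈ [0,B]`, arbitrary positive step sizes `η t`,
initial threshold `q 1 ∈ [0,B]`, and the online conformal update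
`q (t+1) = q t + η t * (err t - α)` where `err t = 1` if `s t > q t` and `0` otherwise.
With `Δ 1 = 1/η 1` and `Δ t = 1/η t - 1/η (t-1)` for `t ≥ 2`, for every `T ≥ 1`,
`|(1/T) ∑_{t=1}^T 1{s t ≤ q t} - (1-α)| ≤ ((B + max_{1≤t≤T} η t)/T) * ∑_{t=1}^T |Δ t|`. -/
theorem long_run_coverage_arbitrary_step
    (α B : ℝ) (hα : α ∈ Set.Ioo (0 : ℝ) 1) (hB : 0 < B)
    (s η q Δ : ℕ → ℝ)
    (hs : ∀ t, 1 ≤ t → s t ∈ Set.Icc 0 B)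
    (hη_pos : ∀ t, 1 ≤ t → 0 < η t)
    (hq1 : q 1 ∈ Set.Icc 0 B)
    (hrec : ∀ t, 1 ≤ t →
      q (t + 1) = q t + η t * ((if q t < s t then (1 : ℝ) else 0) - α))
    (hΔ1 : Δ 1 = 1 / η 1)
    (hΔ : ∀ t, 2 ≤ t → Δ t = 1 / η t - 1 / η (t - 1))
    (T : ℕ) (hT : 1 ≤ T) :
    |(1 / (T : ℝ)) * ∑ t ∈ Finset.Icc 1 T, (if s t ≤ q t then (1 : ℝ) else 0) - (1 - α)|
      ≤ ((B + (Finset.Icc 1 T).sup' (Finset.nonempty_Icc.mpr hT) η) / T)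
          * ∑ t ∈ Finset.Icc 1 T, |Δ t| :=
  long_run_coverage_arbitrary_step_general α B hα s η q Δ hs hη_pos hq1 hrec hΔ1 hΔ T hT
end

section
/- Suppose the step sizes η_t are nonnegative (otherwise arbitrary) and the initial threshold satisfies q_1 ∈ [0,B]. Define M_0 = 0 and M_t = max_{1≤r≤t} η_r for t ≥ 1. Then for every t ≥ 1, −α·M_{t−1} ≤ q_t ≤ B + (1−α)·M_{t−1}. -/
/-- **Boundedness of the online conformal thresholds.**
Fix `α ∈ (0,1)` and `B > 0`. Scores `s t ∈ [0,B]`, arbitrary nonnegative step sizes `η t`,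
initial threshold `q 1 ∈ [0,B]`, and the online conformal update
`q (t+1) = q t + η t * (err t - α)` where `err t = 1` if `s t > q t` and `0` otherwise.
With `M 0 = 0` and `M t = max_{1 ≤ r ≤ t} η r` for `t ≥ 1`, for every `t ≥ 1` we have
`-α * M (t-1) ≤ q t ≤ B + (1-α) * M (t-1)`. -/
theorem threshold_bounds
    (α B : ℝ) (hα : α ∈ Set.Ioo (0 : ℝ) 1) (hB : 0 < B)
    (s η q M : ℕ → ℝ)
    (hs : ∀ t, 1 ≤ t → s t ∈ Set.Icc 0 B)
    (hη_nonneg : ∀ t, 1 ≤ t → 0 ≤ η t)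
    (hq1 : q 1 ∈ Set.Icc 0 B)
    (hrec : ∀ t, 1 ≤ t →
      q (t + 1) = q t + η t * ((if q t < s t then (1 : ℝ) else 0) - α))
    (hM0 : M 0 = 0)
    (hM : ∀ t, ∀ ht : 1 ≤ t, M t = (Finset.Icc 1 t).sup' (Finset.nonempty_Icc.mpr ht) η) :
    ∀ t, 1 ≤ t → -α * M (t - 1) ≤ q t ∧ q t ≤ B + (1 - α) * M (t - 1) := by
  obtain ⟨hα0, hα1⟩ := hα
  have hηM : ∀ t, 1 ≤ t → η t ≤ M t := by
    intro t ht
    rw [hM t ht]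
    exact Finset.le_sup' η (by simp [ht])
  have hMnn : ∀ t, 0 ≤ M t := by
    intro t
    rcases Nat.eq_zero_or_pos t with h | h
    · simp [h, hM0]
    · exact le_trans (hη_nonneg t h) (hηM t h)
  have hMmono : ∀ t, 1 ≤ t → M (t - 1) ≤ M t := by
    intro t ht
    rcases eq_or_lt_of_le ht with h | h
    · simp [← h, hM0, hMnn]
    · have ht1 : 1 ≤ t - 1 := by omega
      rw [hM (t - 1) ht1, hM t ht]
      apply Finset.sup'_le
      intro b hb
      simp only [Finset.mem_Icc] at hb
      exact Finset.le_sup' η (by simp only [Finset.mem_Icc]; omega)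
  intro t ht
  induction t, ht using Nat.le_induction with
  | base => simpa [hM0] using hq1
  | succ n hn ih =>
    obtain ⟨ih1, ih2⟩ := ih
    have hrn := hrec n hn
    have hMn1 := hMmono n hn
    have hηn := hη_nonneg n hn
    have hηMn := hηM n hn
    simp only [Nat.add_sub_cancel]
    by_cases h : q n < s n
    · rw [hrn, if_pos h]
      constructor
      · have : -α * M n ≤ -α * M (n - 1) := by nlinarith [hMnn n]
        nlinarith
      · have hsB := (hs n hn).2
        nlinarith
    · rw [hrn, if_neg h]
      push_neg at h
      have hs0 := (hs n hn).1
      constructor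
      · nlinarith
      · have : (1 - α) * M (n - 1) ≤ (1 - α) * M n := by nlinarith
        nlinarith
end

section
/- Suppose the step sizes η_t are positive (otherwise arbitrary). Define Δ_1 = 1/η_1 and Δ_t = 1/η_t − 1/η_{t−1} for t ≥ 2. Then for every T ≥ 1, Σ_{t=1}^T (err_t − α) = Σ_{r=1}^T Δ_r·(q_{T+1} − q_r). -/
/-- **Summation-by-parts identity for online conformal prediction.**
Fix `α ∈ (0,1)` and `B > 0`. Scores `s t ∈ [0,B]`, arbitrary positive step sizes `η t`,
and the online conformal update `q (t+1) = q t + η t * (err t - α)` where `err t = 1` if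
`s t > q t` and `0` otherwise. With `Δ 1 = 1/η 1` and `Δ t = 1/η t - 1/η (t-1)` for `t ≥ 2`,
for every `T ≥ 1`, `∑_{t=1}^T (err t - α) = ∑_{r=1}^T Δ r * (q (T+1) - q r)`. -/
theorem err_sum_eq_delta_weighted_sum
    (α B : ℝ) (hα : α ∈ Set.Ioo (0 : ℝ) 1) (hB : 0 < B)
    (s η q Δ : ℕ → ℝ)
    (hs : ∀ t, 1 ≤ t → s t ∈ Set.Icc 0 B)
    (hη_pos : ∀ t, 1 ≤ t → 0 < η t)
    (hrec : ∀ t, 1 ≤ t →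
      q (t + 1) = q t + η t * ((if q t < s t then (1 : ℝ) else 0) - α))
    (hΔ1 : Δ 1 = 1 / η 1)
    (hΔ : ∀ t, 2 ≤ t → Δ t = 1 / η t - 1 / η (t - 1))
    (T : ℕ) (hT : 1 ≤ T) :
    ∑ t ∈ Finset.Icc 1 T, ((if q t < s t then (1 : ℝ) else 0) - α)
      = ∑ r ∈ Finset.Icc 1 T, Δ r * (q (T + 1) - q r) := by
  -- key: err t - α = (q(t+1) - q t)/η t
  have hstep : ∀ t, 1 ≤ t →
      ((if q t < s t then (1 : ℝ) else 0) - α) = (q (t + 1) - q t) / η t := by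
    intro t ht
    have h := hrec t ht
    have hne := (hη_pos t ht).ne'
    rw [h]
    field_simp
    ring
  -- telescoping sum of Δ
  have hΔsum : ∀ T, 1 ≤ T → ∑ r ∈ Finset.Icc 1 T, Δ r = 1 / η T := by
    intro T hT
    induction T with
    | zero => omega
    | succ n ih =>
      rcases Nat.eq_or_lt_of_le hT with h1 | h1
      · simp [← h1, hΔ1]
      · have hn : 1 ≤ n := by omega
        rw [Finset.sum_Icc_succ_top (by omega : 1 ≤ n + 1), ih hn,
          hΔ (n + 1) (by omega)]
        simp
  induction T with
  | zero => omega
  | succ n ih =>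
    rcases Nat.eq_or_lt_of_le hT with h1 | h1
    · simp only [← h1]
      simp only [Finset.Icc_self, Finset.sum_singleton]
      rw [hstep 1 le_rfl, hΔ1]
      have hne := (hη_pos 1 le_rfl).ne'
      field_simp
    · have hn : 1 ≤ n := by omega
      rw [Finset.sum_Icc_succ_top (by omega : 1 ≤ n + 1),
        Finset.sum_Icc_succ_top (by omega : 1 ≤ n + 1), ih hn, hstep (n + 1) (by omega)]
      have hsplit : ∀ r, Δ r * (q (n + 1 + 1) - q r)
          = Δ r * (q (n + 1) - q r) + Δ r * (q (n + 2) - q (n + 1)) := by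
        intro r; ring
      rw [Finset.sum_congr rfl (fun r _ => hsplit r), Finset.sum_add_distrib,
        ← Finset.sum_mul, hΔsum n hn]
      have hne := (hη_pos (n + 1) (by omega)).ne'
      have hΔn1 := hΔ (n + 1) (by omega)
      simp only [Nat.add_sub_cancel] at hΔn1
      have hne2 := (hη_pos n hn).ne'
      rw [hΔn1]
      field_simp
      ring
end

section
/- Suppose the step sizes are constant, η_t ≡ η for some η > 0, and that α is a rational number. Then, almost surely, F(q_t) = 0 for infinitely many t and F(q_t) = 1 for infinitely many t. -/
open MeasureTheory ProbabilityTheory Filter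

lemma aux_blocks {Ω : Type*} [MeasurableSpace Ω] (μ : Measure Ω) [IsProbabilityMeasure μ]
    (f : ℕ → Ω → ℝ) (hmeas : ∀ i, Measurable (f i))
    (hindep : iIndepFun f μ)
    (G : Set ℝ) (hG : MeasurableSet G) (N : ℕ)
    (hp : ∀ i, μ (f i ⁻¹' G) = μ (f 0 ⁻¹' G)) (hp0 : μ (f 0 ⁻¹' G) ≠ 0) :
    ∀ᵐ ω ∂μ, ∃ᶠ k in Filter.atTop, ∀ j < N, f (k * N + j) ω ∈ G := by
  classical
  set A : ℕ → Set Ω := fun k => ⋂ i ∈ Finset.Ico (k * N) (k * N + N), f i ⁻¹' G with hA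
  have hAmeas : ∀ k, MeasurableSet (A k) := by
    intro k
    exact Finset.measurableSet_biInter _ (fun i _ => (hmeas i) hG)
  have hcomap : ∀ i : ℕ, MeasurableSet[MeasurableSpace.comap (f i) inferInstance] (f i ⁻¹' G) :=
    fun i => ⟨G, hG, rfl⟩
  have hμA : ∀ k, μ (A k) = μ (f 0 ⁻¹' G) ^ N := by
    intro k
    rw [hA, hindep.meas_biInter (fun i _ => hcomap i)]
    rw [Finset.prod_congr rfl (fun i _ => hp i), Finset.prod_const, Nat.card_Ico]
    congr 1
    omega
  have hdisj : ∀ k l : ℕ, k ≠ l →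
      Disjoint (Finset.Ico (k * N) (k * N + N)) (Finset.Ico (l * N) (l * N + N)) := by
    intro k l hkl
    rw [Finset.disjoint_left]
    intro i hi1 hi2
    simp only [Finset.mem_Ico] at hi1 hi2
    rcases lt_or_gt_of_ne hkl with h | h
    · have : k * N + N ≤ l * N := by
        calc k * N + N = (k + 1) * N := by ring
        _ ≤ l * N := Nat.mul_le_mul_right N h
      omega
    · have : l * N + N ≤ k * N := by
        calc l * N + N = (l + 1) * N := by ring
        _ ≤ k * N := Nat.mul_le_mul_right N h
      omega
  have hAindep : iIndepSet A μ := by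
    rw [iIndepSet_iff_meas_biInter hAmeas]
    intro s
    have hre : (⋂ k ∈ s, A k) =
        ⋂ i ∈ s.biUnion (fun k => Finset.Ico (k * N) (k * N + N)), f i ⁻¹' G := by
      rw [Finset.set_biInter_biUnion]
    rw [hre, hindep.meas_biInter (fun i _ => hcomap i),
      Finset.prod_biUnion (fun k _ l _ hkl => hdisj k l hkl)]
    exact Finset.prod_congr rfl (fun k _ =>
      (hindep.meas_biInter (fun i _ => hcomap i)).symm)
  have htsum : (∑' k, μ (A k)) = ⊤ := by
    rw [tsum_congr hμA]
    exact ENNReal.tsum_const_eq_top_of_ne_zero (pow_ne_zero N hp0)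
  have hlim : μ (limsup A atTop) = 1 := measure_limsup_eq_one hAmeas hAindep htsum
  have hmsl : MeasurableSet (limsup A atTop) := by
    exact MeasurableSet.measurableSet_limsup hAmeas
  have hae : ∀ᵐ ω ∂μ, ω ∈ limsup A atTop := by
    rw [ae_iff]
    have : {ω | ¬ ω ∈ limsup A atTop} = (limsup A atTop)ᶜ := rfl
    rw [this, measure_compl hmsl (measure_ne_top μ _), measure_univ, hlim, tsub_self]
  filter_upwards [hae] with ω hω
  have hfreq : ∃ᶠ k in atTop, ω ∈ A k := mem_limsup_iff_frequently_mem.1 hω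
  refine hfreq.mono ?_
  intro k hk j hj
  have : k * N + j ∈ Finset.Ico (k * N) (k * N + N) := by
    simp only [Finset.mem_Ico]; omega
  exact Set.mem_iInter₂.1 hk _ this

/-- **Constant step size: coverage oscillates between 0 and 1 (i.i.d. scores).**
Fix `α ∈ (0,1)` rational and `B > 0`. Let `(S t)_{t ≥ 1}` be i.i.d. random variables with
values in `[0,B]` and CDF `F r = P(S 1 ≤ r)`. With constant step size `η > 0`,
deterministic initial threshold `q 1 = q1 ∈ [0,B]`, and update
`q (t+1) = q t + η * (err t - α)` with `err t = 1{S t > q t}`, almost surely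
`F (q t) = 0` for infinitely many `t ≥ 1` and `F (q t) = 1` for infinitely many `t ≥ 1`. -/
theorem coverage_zero_one_infinitely_often
    {Ω : Type*} [MeasurableSpace Ω] (μ : Measure Ω) [IsProbabilityMeasure μ]
    (α B : ℝ) (hα : α ∈ Set.Ioo (0 : ℝ) 1) (hαrat : ∃ a : ℚ, (a : ℝ) = α) (hB : 0 < B)
    (S : ℕ → Ω → ℝ)
    (hSmeas : ∀ t, Measurable (S t))
    (hSrange : ∀ t, 1 ≤ t → ∀ ω, S t ω ∈ Set.Icc 0 B)
    (hindep : iIndepFun (fun t => S (t + 1)) μ)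
    (hident : ∀ t, IdentDistrib (S (t + 1)) (S 1) μ μ)
    (F : ℝ → ℝ) (hF : ∀ r, F r = (μ {ω | S 1 ω ≤ r}).toReal)
    (η : ℝ) (hη : 0 < η)
    (q1 : ℝ) (hq1 : q1 ∈ Set.Icc 0 B)
    (q : ℕ → Ω → ℝ) (hq_init : ∀ ω, q 1 ω = q1)
    (hrec : ∀ t, 1 ≤ t → ∀ ω,
      q (t + 1) ω = q t ω + η * ((if q t ω < S t ω then (1 : ℝ) else 0) - α)) :
    ∀ᵐ ω ∂μ, {t : ℕ | 1 ≤ t ∧ F (q t ω) = 0}.Infinite ∧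
      {t : ℕ | 1 ≤ t ∧ F (q t ω) = 1}.Infinite := by
  classical
  obtain ⟨hα0, hα1⟩ := hα
  obtain ⟨r, hr⟩ := hαrat
  have hr0 : 0 < r := by
    have : (0 : ℝ) < (r : ℝ) := by rw [hr]; exact hα0
    exact_mod_cast this
  have hr1 : r < 1 := by
    have : (r : ℝ) < 1 := by rw [hr]; exact hα1
    exact_mod_cast this
  set b : ℕ := r.den with hbdef
  set a : ℕ := r.num.toNat with hadef
  have hbpos : 0 < b := r.pos
  have hnum : (0 : ℤ) < r.num := Rat.num_pos.2 hr0
  have hanum : (a : ℤ) = r.num := Int.toNat_of_nonneg hnum.le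
  have hab : (a : ℝ) / (b : ℝ) = α := by
    rw [← hr, Rat.cast_def]
    congr 1
    exact_mod_cast hanum
  have ha1 : 1 ≤ a := by omega
  have hablt : a < b := by
    have h := Rat.lt_one_iff_num_lt_denom.2 hr1
    omega
  set δ : ℝ := η / b with hδdef
  have hbR : (0 : ℝ) < (b : ℝ) := by exact_mod_cast hbpos
  have hδ : 0 < δ := div_pos hη hbR
  have hEα : η * α = (a : ℝ) * δ := by
    rw [← hab, hδdef]; field_simp
  have hE1α : η * (1 - α) = ((b - a : ℕ) : ℝ) * δ := by
    have hba : ((b - a : ℕ) : ℝ) = (b : ℝ) - (a : ℝ) := by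
      push_cast [Nat.cast_sub hablt.le]; ring
    rw [hba, ← hab, hδdef]; field_simp
  have haR : (1 : ℝ) ≤ (a : ℝ) := by exact_mod_cast ha1
  have hbaR : (1 : ℝ) ≤ ((b - a : ℕ) : ℝ) := by
    have : 1 ≤ b - a := by omega
    exact_mod_cast this
  have hδa : δ ≤ η * α := by rw [hEα]; nlinarith
  have hδb : δ ≤ η * (1 - α) := by rw [hE1α]; nlinarith
  set lo : ℝ := -(η * α) with hlodef
  set hi : ℝ := max q1 B + η * (1 - α) with hhidef
  have hη1α : 0 < η * (1 - α) := mul_pos hη (by linarith)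
  have hηα : 0 < η * α := mul_pos hη hα0
  have hlo0 : lo < 0 := by rw [hlodef]; linarith
  have hBhi : B ≤ hi := le_trans (le_max_right q1 B) (by rw [hhidef]; linarith)
  have hlohi : lo < hi := by linarith
  -- boundedness of q
  have hbound : ∀ t, 1 ≤ t → ∀ ω, lo ≤ q t ω ∧ q t ω ≤ hi := by
    intro t ht
    induction t, ht using Nat.le_induction with
    | base =>
      intro ω
      rw [hq_init ω]
      refine ⟨by linarith [hq1.1], ?_⟩
      have := le_max_left q1 B
      rw [hhidef]; linarith
    | succ t ht ih =>
      intro ω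
      obtain ⟨hS0, hSB⟩ := hSrange t ht ω
      obtain ⟨hb1, hb2⟩ := ih ω
      rw [hrec t ht ω]
      by_cases hc : q t ω < S t ω
      · rw [if_pos hc]
        have hq' : q t ω ≤ max q1 B := le_trans (le_of_lt (lt_of_lt_of_le hc hSB)) (le_max_right _ _)
        have he : q t ω + η * ((1 : ℝ) - α) = q t ω + η * (1 - α) := by ring
        rw [he]
        exact ⟨by linarith, by rw [hhidef]; linarith⟩
      · rw [if_neg hc]
        push_neg at hc
        have h0q : 0 ≤ q t ω := le_trans hS0 hc
        have he : q t ω + η * ((0 : ℝ) - α) = q t ω - η * α := by ring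
        rw [he]
        exact ⟨by rw [hlodef]; linarith, by linarith⟩
  -- lattice structure of q
  have hlat : ∀ t, 1 ≤ t → ∀ ω, ∃ k : ℤ, q t ω = q1 + k * δ := by
    intro t ht
    induction t, ht using Nat.le_induction with
    | base => intro ω; exact ⟨0, by simp [hq_init ω]⟩
    | succ t ht ih =>
      intro ω
      obtain ⟨k, hk⟩ := ih ω
      rw [hrec t ht ω]
      by_cases hc : q t ω < S t ω
      · refine ⟨k + (b - a : ℕ), ?_⟩
        rw [if_pos hc, hk]
        have he : η * ((1 : ℝ) - α) = ((b - a : ℕ) : ℝ) * δ := by rw [← hE1α]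
        rw [he]
        push_cast
        ring
      · refine ⟨k - a, ?_⟩
        rw [if_neg hc, hk]
        have he : η * ((0 : ℝ) - α) = -((a : ℝ) * δ) := by rw [← hEα]; ring
        rw [he]
        push_cast
        ring
  -- finiteness of reachable lattice
  have hTfin : Set.Finite {x : ℝ | (∃ k : ℤ, x = q1 + k * δ) ∧ lo ≤ x ∧ x ≤ hi} := by
    apply Set.Finite.subset (Set.Finite.image (fun k : ℤ => q1 + (k : ℝ) * δ)
      (Set.finite_Icc ⌈(lo - q1) / δ⌉ ⌊(hi - q1) / δ⌋))
    rintro x ⟨⟨k, rfl⟩, h1, h2⟩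
    refine ⟨k, ⟨?_, ?_⟩, rfl⟩
    · rw [Int.ceil_le, div_le_iff₀ hδ]; linarith
    · rw [Int.le_floor, le_div_iff₀ hδ]; linarith
  -- lattice point in any interval of length δ
  have hpoint : ∀ y : ℝ, ∃ k : ℤ, y ≤ q1 + k * δ ∧ q1 + k * δ < y + δ := by
    intro y
    refine ⟨⌈(y - q1) / δ⌉, ?_, ?_⟩
    · have h := Int.le_ceil ((y - q1) / δ)
      rw [div_le_iff₀ hδ] at h
      linarith
    · have h := Int.ceil_lt_add_one ((y - q1) / δ)
      have h2 := mul_lt_mul_of_pos_right h hδ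
      rw [add_mul, div_mul_cancel₀ _ (ne_of_gt hδ), one_mul] at h2
      linarith
  -- basic facts about F
  have hF0le : ∀ x, 0 ≤ F x := fun x => by rw [hF]; exact ENNReal.toReal_nonneg
  have hFle1 : ∀ x, F x ≤ 1 := by
    intro x; rw [hF]
    have h : μ {ω | S 1 ω ≤ x} ≤ 1 := prob_le_one
    simpa using ENNReal.toReal_mono ENNReal.one_ne_top h
  have hFneg : ∀ x, x < 0 → F x = 0 := by
    intro x hx; rw [hF]
    have he : {ω | S 1 ω ≤ x} = ∅ := by
      ext ω
      simp only [Set.mem_setOf_eq, Set.mem_empty_iff_false, iff_false, not_le]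
      exact lt_of_lt_of_le hx (hSrange 1 le_rfl ω).1
    rw [he, measure_empty]; simp
  have hFB : ∀ x, B ≤ x → F x = 1 := by
    intro x hx; rw [hF]
    have he : {ω | S 1 ω ≤ x} = Set.univ := by
      ext ω
      simp only [Set.mem_setOf_eq, Set.mem_univ, iff_true]
      exact le_trans (hSrange 1 le_rfl ω).2 hx
    rw [he, measure_univ]; simp
  -- the maximal reachable point with F < 1
  have hcpex : ∃ c : ℝ, ((∃ k : ℤ, c = q1 + k * δ) ∧ lo ≤ c ∧ c ≤ hi ∧ F c < 1) ∧
      ∀ x : ℝ, ((∃ k : ℤ, x = q1 + k * δ) ∧ lo ≤ x ∧ x ≤ hi ∧ F x < 1) → x ≤ c := by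
    have hfin : Set.Finite {x : ℝ | (∃ k : ℤ, x = q1 + k * δ) ∧ lo ≤ x ∧ x ≤ hi ∧ F x < 1} :=
      hTfin.subset (by rintro x ⟨h1, h2, h3, _⟩; exact ⟨h1, h2, h3⟩)
    obtain ⟨k0, hk01, hk02⟩ := hpoint lo
    have hx0neg : q1 + k0 * δ < 0 := by rw [hlodef] at hk02; linarith
    have hx0mem : (∃ k : ℤ, q1 + (k0 : ℝ) * δ = q1 + k * δ) ∧ lo ≤ q1 + (k0 : ℝ) * δ ∧
        q1 + (k0 : ℝ) * δ ≤ hi ∧ F (q1 + (k0 : ℝ) * δ) < 1 := by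
      refine ⟨⟨k0, rfl⟩, hk01, by linarith, ?_⟩
      rw [hFneg _ hx0neg]; linarith
    obtain ⟨c, hcmem, hcmax⟩ := Set.exists_max_image _ (fun x : ℝ => x) hfin ⟨_, hx0mem⟩
    exact ⟨c, hcmem, fun x hx => hcmax x hx⟩
  obtain ⟨cp, hcp_mem, hcp_max⟩ := hcpex
  -- the minimal reachable point with F > 0
  have hcmex : ∃ c : ℝ, ((∃ k : ℤ, c = q1 + k * δ) ∧ lo ≤ c ∧ c ≤ hi ∧ 0 < F c) ∧
      ∀ x : ℝ, ((∃ k : ℤ, x = q1 + k * δ) ∧ lo ≤ x ∧ x ≤ hi ∧ 0 < F x) → c ≤ x := by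
    have hfin : Set.Finite {x : ℝ | (∃ k : ℤ, x = q1 + k * δ) ∧ lo ≤ x ∧ x ≤ hi ∧ 0 < F x} :=
      hTfin.subset (by rintro x ⟨h1, h2, h3, _⟩; exact ⟨h1, h2, h3⟩)
    obtain ⟨k1, hk11, hk12⟩ := hpoint B
    have hx1mem : (∃ k : ℤ, q1 + (k1 : ℝ) * δ = q1 + k * δ) ∧ lo ≤ q1 + (k1 : ℝ) * δ ∧
        q1 + (k1 : ℝ) * δ ≤ hi ∧ 0 < F (q1 + (k1 : ℝ) * δ) := by
      refine ⟨⟨k1, rfl⟩, by linarith, ?_, ?_⟩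
      · have hm : B ≤ max q1 B := le_max_right q1 B
        rw [hhidef]; linarith
      · rw [hFB _ hk11]; linarith
    obtain ⟨c, hcmem, hcmin⟩ := Set.exists_min_image _ (fun x : ℝ => x) hfin ⟨_, hx1mem⟩
    exact ⟨c, hcmem, fun x hx => hcmin x hx⟩
  obtain ⟨cm, hcm_mem, hcm_min⟩ := hcmex
  -- the two positive-probability events
  have hp_plus : μ (S 1 ⁻¹' Set.Ioi cp) ≠ 0 := by
    have hlt : F cp < 1 := hcp_mem.2.2.2
    rw [hF] at hlt
    have hlt1 : μ (S 1 ⁻¹' Set.Iic cp) < 1 := by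
      rw [← ENNReal.ofReal_toReal (measure_ne_top μ _)]
      exact ENNReal.ofReal_lt_one.2 hlt
    have hcompl : S 1 ⁻¹' Set.Ioi cp = (S 1 ⁻¹' Set.Iic cp)ᶜ := by
      ext ω; simp [not_le]
    rw [hcompl, measure_compl ((hSmeas 1) measurableSet_Iic) (measure_ne_top μ _), measure_univ]
    exact (tsub_pos_of_lt hlt1).ne'
  have hp_minus : μ (S 1 ⁻¹' Set.Iic cm) ≠ 0 := by
    intro h
    have h2 : F cm = 0 := by
      rw [hF]
      have he : {ω | S 1 ω ≤ cm} = S 1 ⁻¹' Set.Iic cm := rfl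
      rw [he, h]; simp
    have := hcm_mem.2.2.2
    linarith
  -- choice of N
  obtain ⟨N, hNgt⟩ := exists_nat_gt ((hi - lo) / δ)
  have hNδ : hi - lo < (N : ℝ) * δ := by
    rw [div_lt_iff₀ hδ] at hNgt; linarith
  have hN1 : 1 ≤ N := by
    by_contra h
    push_neg at h
    have hN0 : N = 0 := by omega
    rw [hN0] at hNδ
    simp at hNδ
    linarith
  -- forcing lemma: a block of N large scores forces F (q t) = 1
  have hforce1 : ∀ ω (m : ℕ), 1 ≤ m → (∀ j < N, cp < S (m + j) ω) →
      ∃ t, 1 ≤ t ∧ m ≤ t ∧ F (q t ω) = 1 := by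
    intro ω m hm hS
    by_contra hcon
    push_neg at hcon
    have key : ∀ j, j ≤ N → q (m + j) ω = q m ω + (j : ℝ) * (η * (1 - α)) := by
      intro j hj
      induction j with
      | zero => simp
      | succ j ih =>
        have hj' : j ≤ N := Nat.le_of_succ_le hj
        have ht1 : 1 ≤ m + j := by omega
        have hne := hcon (m + j) ht1 (by omega)
        have hlt : F (q (m + j) ω) < 1 := lt_of_le_of_ne (hFle1 _) hne
        have hmem : (∃ k : ℤ, q (m + j) ω = q1 + k * δ) ∧ lo ≤ q (m + j) ω ∧
            q (m + j) ω ≤ hi ∧ F (q (m + j) ω) < 1 :=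
          ⟨hlat (m + j) ht1 ω, (hbound (m + j) ht1 ω).1, (hbound (m + j) ht1 ω).2, hlt⟩
        have hle := hcp_max _ hmem
        have herr : q (m + j) ω < S (m + j) ω := lt_of_le_of_lt hle (hS j (by omega))
        have hstep := hrec (m + j) ht1 ω
        rw [if_pos herr] at hstep
        have hidx : m + (j + 1) = (m + j) + 1 := by omega
        rw [hidx, hstep, ih hj']
        push_cast
        ring
    have h1 := key N le_rfl
    have hb1 := (hbound m hm ω).1
    have hb2 := (hbound (m + N) (by omega) ω).2
    have hNδ' : (N : ℝ) * δ ≤ (N : ℝ) * (η * (1 - α)) :=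
      mul_le_mul_of_nonneg_left hδb (Nat.cast_nonneg N)
    linarith
  -- forcing lemma: a block of N small scores forces F (q t) = 0
  have hforce0 : ∀ ω (m : ℕ), 1 ≤ m → (∀ j < N, S (m + j) ω ≤ cm) →
      ∃ t, 1 ≤ t ∧ m ≤ t ∧ F (q t ω) = 0 := by
    intro ω m hm hS
    by_contra hcon
    push_neg at hcon
    have key : ∀ j, j ≤ N → q (m + j) ω = q m ω - (j : ℝ) * (η * α) := by
      intro j hj
      induction j with
      | zero => simp
      | succ j ih =>
        have hj' : j ≤ N := Nat.le_of_succ_le hj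
        have ht1 : 1 ≤ m + j := by omega
        have hne := hcon (m + j) ht1 (by omega)
        have hlt : 0 < F (q (m + j) ω) := lt_of_le_of_ne (hF0le _) (Ne.symm hne)
        have hmem : (∃ k : ℤ, q (m + j) ω = q1 + k * δ) ∧ lo ≤ q (m + j) ω ∧
            q (m + j) ω ≤ hi ∧ 0 < F (q (m + j) ω) :=
          ⟨hlat (m + j) ht1 ω, (hbound (m + j) ht1 ω).1, (hbound (m + j) ht1 ω).2, hlt⟩
        have hle := hcm_min _ hmem
        have herr : ¬ (q (m + j) ω < S (m + j) ω) :=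
          not_lt.2 (le_trans (hS j (by omega)) hle)
        have hstep := hrec (m + j) ht1 ω
        rw [if_neg herr] at hstep
        have hidx : m + (j + 1) = (m + j) + 1 := by omega
        rw [hidx, hstep, ih hj']
        push_cast
        ring
    have h1 := key N le_rfl
    have hb1 := (hbound (m + N) (by omega) ω).1
    have hb2 := (hbound m hm ω).2
    have hNδ' : (N : ℝ) * δ ≤ (N : ℝ) * (η * α) :=
      mul_le_mul_of_nonneg_left hδa (Nat.cast_nonneg N)
    linarith
  -- apply the block Borel-Cantelli lemma
  have haux1 := aux_blocks μ (fun i => S (i + 1)) (fun i => hSmeas (i + 1)) hindep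
    (Set.Ioi cp) measurableSet_Ioi N
    (fun i => (hident i).measure_mem_eq measurableSet_Ioi) hp_plus
  have haux0 := aux_blocks μ (fun i => S (i + 1)) (fun i => hSmeas (i + 1)) hindep
    (Set.Iic cm) measurableSet_Iic N
    (fun i => (hident i).measure_mem_eq measurableSet_Iic) hp_minus
  filter_upwards [haux1, haux0] with ω h1 h0
  have hkN : ∀ k : ℕ, k ≤ k * N := by
    intro k
    calc k = k * 1 := (mul_one k).symm
    _ ≤ k * N := Nat.mul_le_mul_left k hN1
  constructor
  · -- F (q t ω) = 0 infinitely often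
    by_contra hfin
    rw [Set.not_infinite] at hfin
    obtain ⟨M, hM⟩ := hfin.bddAbove
    obtain ⟨k, hkM, hk⟩ := Filter.frequently_atTop.1 h0 (M + 1)
    have hblock : ∀ j < N, S (k * N + 1 + j) ω ≤ cm := by
      intro j hj
      have hmem : S (k * N + j + 1) ω ≤ cm := hk j hj
      have he : k * N + 1 + j = k * N + j + 1 := by omega
      rw [he]
      exact hmem
    obtain ⟨t, ht1, htm, htF⟩ := hforce0 ω (k * N + 1) (by omega) hblock
    have htM : t ≤ M := hM ⟨ht1, htF⟩
    have := hkN k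
    omega
  · -- F (q t ω) = 1 infinitely often
    by_contra hfin
    rw [Set.not_infinite] at hfin
    obtain ⟨M, hM⟩ := hfin.bddAbove
    obtain ⟨k, hkM, hk⟩ := Filter.frequently_atTop.1 h1 (M + 1)
    have hblock : ∀ j < N, cp < S (k * N + 1 + j) ω := by
      intro j hj
      have hmem : cp < S (k * N + j + 1) ω := hk j hj
      have he : k * N + 1 + j = k * N + j + 1 := by omega
      rw [he]
      exact hmem
    obtain ⟨t, ht1, htm, htF⟩ := hforce1 ω (k * N + 1) (by omega) hblock
    have htM : t ≤ M := hM ⟨ht1, htF⟩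
    have := hkN k
    omega
end

section
/- Suppose the step sizes η_t are deterministic and nonnegative with Σ_{t=1}^∞ η_t = ∞ and Σ_{t=1}^∞ η_t² < ∞, and suppose q* ∈ [0,B] is the unique (1−α)-quantile of F, i.e., F(q) < 1−α for all q < q* and F(q) > 1−α for all q > q*. Then q_t → q* almost surely as t → ∞. -/
open MeasureTheory ProbabilityTheory Filter Finset
open scoped ENNReal NNReal

lemma det_upper (qstar : ℝ) (qs e x : ℕ → ℝ) (H : ℝ → ℝ)
    (hrec : ∀ n, qs (n+1) = qs n + e n * (H (qs n) + x n))
    (he0 : ∀ n, 0 ≤ e n) (hediv : ¬ Summable e)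
    (hetz : Filter.Tendsto e atTop (nhds 0))
    (hc : CauchySeq (fun n => ∑ i ∈ Finset.range n, e i * x i))
    (hinc : ∀ n, |H (qs n) + x n| ≤ 1)
    (hup : ∀ δ : ℝ, 0 < δ → ∃ κ : ℝ, 0 < κ ∧ ∀ r, qstar + δ ≤ r → H r ≤ -κ) :
    ∀ ε : ℝ, 0 < ε → ∀ᶠ n in atTop, qs n < qstar + ε := by
  intro ε hε
  set ε' := ε / 5 with hε'def
  have hε' : 0 < ε' := by positivity
  obtain ⟨κ, hκ, hHκ⟩ := hup ε' hε'
  set c : ℕ → ℝ := fun n => ∑ i ∈ Finset.range n, e i * x i with hc_def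
  set P : ℕ → ℝ := fun n => ∑ i ∈ Finset.range n, e i with hP_def
  have hPtop : Tendsto P atTop atTop :=
    (not_summable_iff_tendsto_nat_atTop_of_nonneg he0).1 hediv
  obtain ⟨L, hL⟩ := cauchySeq_tendsto_of_complete hc
  -- telescoping
  have key : ∀ N n, N ≤ n → qs n = qs N + ∑ i ∈ Finset.Ico N n, e i * (H (qs i) + x i) := by
    intro N n hNn
    induction n, hNn using Nat.le_induction with
    | base => simp
    | succ n hNn ih =>
      rw [Finset.sum_Ico_succ_top hNn, hrec n, ih]; ring
  -- step 1: qs drops below qstar + ε' infinitely often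
  have step1 : ∀ N, ∃ n, N ≤ n ∧ qs n < qstar + ε' := by
    intro N
    by_contra hcon
    push_neg at hcon
    have hge : ∀ n, N ≤ n → qstar + ε' ≤ qs n := fun n hn => hcon n hn
    have hbd : ∀ n, N ≤ n → qs n ≤ qs N - κ * (P n - P N) + (c n - c N) := by
      intro n hn
      have h1 : ∑ i ∈ Finset.Ico N n, e i * (H (qs i) + x i)
          ≤ ∑ i ∈ Finset.Ico N n, (-(κ * e i) + e i * x i) := by
        refine Finset.sum_le_sum fun i hi => ?_
        have hiN : N ≤ i := (Finset.mem_Ico.1 hi).1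
        have hH : H (qs i) ≤ -κ := hHκ _ (hge i hiN)
        have := mul_le_mul_of_nonneg_left (add_le_add_right hH (x i)) (he0 i)
        calc e i * (H (qs i) + x i) ≤ e i * (-κ + x i) := by linarith [this]
          _ = -(κ * e i) + e i * x i := by ring
      have hP' : ∑ i ∈ Finset.Ico N n, e i = P n - P N := Finset.sum_Ico_eq_sub _ hn
      have hc' : ∑ i ∈ Finset.Ico N n, e i * x i = c n - c N := Finset.sum_Ico_eq_sub _ hn
      have h2 : ∑ i ∈ Finset.Ico N n, (-(κ * e i) + e i * x i)
          = -(κ * (P n - P N)) + (c n - c N) := by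
        rw [Finset.sum_add_distrib, hc', Finset.sum_neg_distrib, ← Finset.mul_sum, hP']
      have h3 := key N n hn
      nlinarith [h1, h2, h3]
    have htb : Tendsto (fun n => qs N - κ * (P n - P N) + (c n - c N)) atTop atBot := by
      have h1 : Tendsto (fun n => qs N + κ * P N - c N + c n) atTop
          (nhds (qs N + κ * P N - c N + L)) := tendsto_const_nhds.add hL
      have h2 : Tendsto (fun n => -(κ * P n)) atTop atBot := by
        rw [tendsto_neg_atBot_iff]
        exact hPtop.const_mul_atTop hκ
      have h3 := h1.add_atBot h2
      exact h3.congr fun n => by ring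
    obtain ⟨n, hn⟩ := ((htb.eventually (eventually_lt_atBot (qstar + ε'))).and
      (eventually_ge_atTop N)).exists
    exact absurd ((hge n hn.2).trans (hbd n hn.2)) (not_le.2 hn.1)
  -- step 3: eventually below qstar + ε
  obtain ⟨N₀, hN₀⟩ := Metric.cauchySeq_iff'.1 hc ε' hε'
  obtain ⟨N₁, hN₁⟩ := (Metric.tendsto_atTop.1 hetz ε' hε')
  obtain ⟨n₀, hn₀N, hn₀⟩ := step1 (max N₀ N₁)
  have hN₀n₀ : N₀ ≤ n₀ := le_trans (le_max_left _ _) hn₀N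
  have hN₁n₀ : N₁ ≤ n₀ := le_trans (le_max_right _ _) hn₀N
  have hcdiff : ∀ m n, N₀ ≤ m → N₀ ≤ n → c m - c n ≤ 2 * ε' := by
    intro m n hm hn
    have h1 := hN₀ m hm
    have h2 := hN₀ n hn
    rw [Real.dist_eq] at h1 h2
    have := abs_sub_abs_le_abs_sub (c m - c N₀) (c n - c N₀)
    cases abs_cases (c m - c N₀) with
    | inl h => cases abs_cases (c n - c N₀) with
      | inl h' => nlinarith
      | inr h' => nlinarith
    | inr h => cases abs_cases (c n - c N₀) with
      | inl h' => nlinarith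
      | inr h' => nlinarith
  refine eventually_atTop.2 ⟨n₀, fun m hm => ?_⟩
  -- last crossing argument
  classical
  set T := (Finset.Icc n₀ m).filter (fun k => qs k < qstar + ε') with hT
  have hTne : T.Nonempty := ⟨n₀, by simp [hT, hn₀, hm]⟩
  set k := T.max' hTne with hk
  have hkT : k ∈ T := T.max'_mem hTne
  have hkm : k ≤ m := (Finset.mem_Icc.1 (Finset.mem_filter.1 hkT).1).2
  have hkn₀ : n₀ ≤ k := (Finset.mem_Icc.1 (Finset.mem_filter.1 hkT).1).1
  have hqk : qs k < qstar + ε' := (Finset.mem_filter.1 hkT).2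
  have hafter : ∀ i, k < i → i ≤ m → qstar + ε' ≤ qs i := by
    intro i hki him
    by_contra hcon
    push_neg at hcon
    have : i ∈ T := Finset.mem_filter.2 ⟨Finset.mem_Icc.2 ⟨le_trans hkn₀ hki.le, him⟩, hcon⟩
    exact absurd (T.le_max' i this) (not_le.2 hki)
  rcases eq_or_lt_of_le hkm with heq | hlt
  · rw [← heq]; linarith
  -- k < m
  have hk1m : k + 1 ≤ m := hlt
  have aux : ∀ j, k + 1 + j ≤ m → qs (k+1+j) ≤ qs (k+1) + (c (k+1+j) - c (k+1)) := by
    intro j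
    induction j with
    | zero => simp
    | succ j ih =>
      intro hjm
      have hj : k + 1 + j ≤ m := by omega
      have hge : qstar + ε' ≤ qs (k+1+j) := hafter _ (by omega) hj
      have hH : H (qs (k+1+j)) ≤ -κ := hHκ _ hge
      have he := he0 (k+1+j)
      have hrec' := hrec (k+1+j)
      have hcs : c (k+1+j+1) = c (k+1+j) + e (k+1+j) * x (k+1+j) := by
        simp [hc_def, Finset.sum_range_succ]
      have h4 : e (k+1+j) * (H (qs (k+1+j)) + x (k+1+j))
          ≤ e (k+1+j) * x (k+1+j) := by nlinarith
      have hsucc : k + 1 + (j+1) = k + 1 + j + 1 := by omega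
      rw [hsucc, hrec', hcs]
      have := ih hj
      linarith
  have hqsm := aux (m - (k+1)) (by omega)
  have hmeq : k + 1 + (m - (k+1)) = m := by omega
  rw [hmeq] at hqsm
  have hqk1 : qs (k+1) ≤ qstar + 2 * ε' := by
    have hrec' := hrec k
    have he := he0 k
    have hek : e k < ε' := by
      have := hN₁ k (le_trans hN₁n₀ hkn₀)
      rw [Real.dist_eq, sub_zero] at this
      exact lt_of_abs_lt this
    have hb := hinc k
    have : e k * (H (qs k) + x k) ≤ e k * 1 :=
      mul_le_mul_of_nonneg_left (le_trans (le_abs_self _) hb) he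
    rw [hrec']
    nlinarith
  have hcd : c m - c (k+1) ≤ 2 * ε' := hcdiff m (k+1) (le_trans hN₀n₀ hm) (by omega)
  calc qs m ≤ qs (k+1) + (c m - c (k+1)) := hqsm
    _ ≤ qstar + 2*ε' + 2*ε' := by linarith
    _ < qstar + ε := by rw [hε'def]; linarith

lemma det_conv (qstar : ℝ) (qs e x : ℕ → ℝ) (H : ℝ → ℝ)
    (hrec : ∀ n, qs (n+1) = qs n + e n * (H (qs n) + x n))
    (he0 : ∀ n, 0 ≤ e n) (hediv : ¬ Summable e)
    (hetz : Filter.Tendsto e atTop (nhds 0))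
    (hc : CauchySeq (fun n => ∑ i ∈ Finset.range n, e i * x i))
    (hinc : ∀ n, |H (qs n) + x n| ≤ 1)
    (hup : ∀ δ : ℝ, 0 < δ → ∃ κ : ℝ, 0 < κ ∧ ∀ r, qstar + δ ≤ r → H r ≤ -κ)
    (hdown : ∀ δ : ℝ, 0 < δ → ∃ κ : ℝ, 0 < κ ∧ ∀ r, r ≤ qstar - δ → κ ≤ H r) :
    Filter.Tendsto qs atTop (nhds qstar) := by
  have hlow : ∀ ε : ℝ, 0 < ε → ∀ᶠ n in atTop, qstar - ε < qs n := by
    intro ε hε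
    have hneg := det_upper (-qstar) (fun n => -qs n) e (fun n => -x n)
        (fun r => -H (-r))
        (fun n => by rw [hrec n]; ring)
        he0 hediv hetz
        (by
          have : (fun n => ∑ i ∈ Finset.range n, e i * (-x i))
              = fun n => -∑ i ∈ Finset.range n, e i * x i := by
            funext n; rw [← Finset.sum_neg_distrib]; congr 1; funext i; ring
          rw [this]
          exact hc.neg)
        (fun n => by
          show |-H (-(-qs n)) + -x n| ≤ 1
          rw [neg_neg, show -H (qs n) + -x n = -(H (qs n) + x n) by ring, abs_neg]
          exact hinc n)
        (fun δ hδ => by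
          obtain ⟨κ, hκ, hκ'⟩ := hdown δ hδ
          refine ⟨κ, hκ, fun r hr => ?_⟩
          show -H (-r) ≤ -κ
          have h5 : -r ≤ qstar - δ := by linarith
          have := hκ' (-r) h5
          linarith)
        ε hε
    filter_upwards [hneg] with n hn
    linarith
  rw [Metric.tendsto_atTop]
  intro ε hε
  have h1 := det_upper qstar qs e x H hrec he0 hediv hetz hc hinc hup (ε/2) (by positivity)
  have h2 := hlow (ε/2) (by positivity)
  obtain ⟨N, hN⟩ := eventually_atTop.1 (h1.and h2)
  refine ⟨N, fun n hn => ?_⟩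
  obtain ⟨ha, hb⟩ := hN n hn
  rw [Real.dist_eq, abs_sub_lt_iff]
  constructor <;> linarith

/-- **Convergence of the threshold with decaying step sizes (i.i.d. scores).**
Fix `α ∈ (0,1)` and `B > 0`. Let `(S t)_{t ≥ 1}` be i.i.d. with values in `[0,B]` and CDF
`F r = P(S 1 ≤ r)`. Suppose the deterministic nonnegative step sizes satisfy
`∑_{t≥1} η t = ∞` and `∑_{t≥1} (η t)² < ∞`, and `q* ∈ [0,B]` is the unique `(1-α)`-quantile
of `F` (`F q < 1-α` for `q < q*`, `F q > 1-α` for `q > q*`). Then for the online conformal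
update `q (t+1) = q t + η t * (1{S t > q t} - α)` with deterministic `q 1 = q1 ∈ [0,B]`,
almost surely `q t → q*`. -/
theorem threshold_converges_to_quantile
    {Ω : Type*} [MeasurableSpace Ω] (μ : Measure Ω) [IsProbabilityMeasure μ]
    (α B : ℝ) (hα : α ∈ Set.Ioo (0 : ℝ) 1) (hB : 0 < B)
    (S : ℕ → Ω → ℝ)
    (hSmeas : ∀ t, Measurable (S t))
    (hSrange : ∀ t, 1 ≤ t → ∀ ω, S t ω ∈ Set.Icc 0 B)
    (hindep : iIndepFun (fun t => S (t + 1)) μ)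
    (hident : ∀ t, IdentDistrib (S (t + 1)) (S 1) μ μ)
    (F : ℝ → ℝ) (hF : ∀ r, F r = (μ {ω | S 1 ω ≤ r}).toReal)
    (η : ℕ → ℝ)
    (hη_nonneg : ∀ t, 1 ≤ t → 0 ≤ η t)
    (hη_div : ¬ Summable (fun t => η (t + 1)))
    (hη_sq : Summable (fun t => (η (t + 1)) ^ 2))
    (qstar : ℝ) (hqstar : qstar ∈ Set.Icc 0 B)
    (hlt : ∀ r, r < qstar → F r < 1 - α)
    (hgt : ∀ r, qstar < r → 1 - α < F r)
    (q1 : ℝ) (hq1 : q1 ∈ Set.Icc 0 B)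
    (q : ℕ → Ω → ℝ) (hq_init : ∀ ω, q 1 ω = q1)
    (hrec : ∀ t, 1 ≤ t → ∀ ω,
      q (t + 1) ω = q t ω + η t * ((if q t ω < S t ω then (1 : ℝ) else 0) - α)) :
    ∀ᵐ ω ∂μ, Tendsto (fun t => q t ω) atTop (nhds qstar) := by
  classical
  obtain ⟨hα0, hα1⟩ := hα
  set X : ℕ → Ω → ℝ := fun i => S (i+1) with hX_def
  have hXm : ∀ i, Measurable (X i) := fun i => hSmeas _
  have hXsm : ∀ i, StronglyMeasurable (X i) := fun i => (hXm i).stronglyMeasurable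
  set ℱ : Filtration ℕ _ := MeasureTheory.Filtration.natural X hXsm with hFil
  have hXF : ∀ n, Measurable[ℱ n] (X n) :=
    fun n => ((Filtration.stronglyAdapted_natural hXsm) n).measurable
  set e : ℕ → ℝ := fun n => η (n+1) with he_def
  have he0 : ∀ n, 0 ≤ e n := fun n => hη_nonneg (n+1) (by omega)
  set Q : ℕ → Ω → ℝ := fun n ω => q (n+1) ω with hQ_def
  have hQrec : ∀ n ω, Q (n+1) ω = Q n ω + e n * ((if Q n ω < X n ω then (1:ℝ) else 0) - α) :=
    fun n ω => hrec (n+1) (by omega) ω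
  have hQ0 : ∀ ω, Q 0 ω = q1 := hq_init
  -- F basics
  have hF0 : ∀ r, 0 ≤ F r := fun r => by rw [hF]; exact ENNReal.toReal_nonneg
  have hF1 : ∀ r, F r ≤ 1 := by
    intro r
    rw [hF]
    calc (μ {ω | S 1 ω ≤ r}).toReal ≤ (1 : ℝ≥0∞).toReal :=
          ENNReal.toReal_mono ENNReal.one_ne_top prob_le_one
      _ = 1 := by simp
  have hFmono : Monotone F := by
    intro a b hab
    rw [hF, hF]
    exact ENNReal.toReal_mono (measure_ne_top _ _)
      (measure_mono (fun ω h => le_trans h hab))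
  set H : ℝ → ℝ := fun r => (1 - F r) - α with hH_def
  set ξ : ℕ → Ω → ℝ := fun n ω => (if Q n ω < X n ω then (1:ℝ) else 0) - (1 - F (Q n ω))
    with hξ_def
  have hHξ : ∀ n ω, H (Q n ω) + ξ n ω = (if Q n ω < X n ω then (1:ℝ) else 0) - α := by
    intro n ω; simp only [hH_def, hξ_def]; ring
  have hup : ∀ δ : ℝ, 0 < δ → ∃ κ : ℝ, 0 < κ ∧ ∀ r, qstar + δ ≤ r → H r ≤ -κ := by
    intro δ hδ
    refine ⟨F (qstar + δ) - (1 - α), by linarith [hgt (qstar + δ) (by linarith)], fun r hr => ?_⟩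
    have := hFmono hr
    simp only [hH_def]
    linarith
  have hdown : ∀ δ : ℝ, 0 < δ → ∃ κ : ℝ, 0 < κ ∧ ∀ r, r ≤ qstar - δ → κ ≤ H r := by
    intro δ hδ
    refine ⟨(1 - α) - F (qstar - δ), by linarith [hlt (qstar - δ) (by linarith)], fun r hr => ?_⟩
    have := hFmono hr
    simp only [hH_def]
    linarith
  have hξb : ∀ n ω, |ξ n ω| ≤ 1 := by
    intro n ω
    simp only [hξ_def]
    have h1 := hF0 (Q n ω); have h2 := hF1 (Q n ω)
    by_cases h : Q n ω < X n ω <;> simp [h, abs_le] <;> constructor <;> linarith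
  -- measurability
  have hQm : ∀ n, Measurable (Q n) := by
    intro n
    induction n with
    | zero =>
      have : Q 0 = fun _ => q1 := funext hQ0
      rw [this]; exact measurable_const
    | succ n ih =>
      have : Q (n+1) = fun ω => Q n ω + e n * ((if Q n ω < X n ω then (1:ℝ) else 0) - α) :=
        funext (hQrec n)
      rw [this]
      exact ih.add (measurable_const.mul
        ((Measurable.ite (measurableSet_lt ih (hXm n)) measurable_const measurable_const).sub
          measurable_const))
  have hQFm : ∀ n, Measurable[ℱ n] (Q (n+1)) := by
    intro n
    induction n with
    | zero =>
      have h0 : Q 1 = fun ω => q1 + e 0 * ((if q1 < X 0 ω then (1:ℝ) else 0) - α) := by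
        funext ω; rw [hQrec 0 ω, hQ0 ω]
      rw [h0]
      exact measurable_const.add (measurable_const.mul
        ((Measurable.ite (measurableSet_lt measurable_const (hXF 0)) measurable_const
          measurable_const).sub measurable_const))
    | succ n ih =>
      have hQ' : Measurable[ℱ (n+1)] (Q (n+1)) := ih.mono (ℱ.mono (Nat.le_succ n)) le_rfl
      have h0 : Q (n+2) = fun ω =>
          Q (n+1) ω + e (n+1) * ((if Q (n+1) ω < X (n+1) ω then (1:ℝ) else 0) - α) :=
        funext (hQrec (n+1))
      rw [h0]
      exact hQ'.add (measurable_const.mul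
        ((Measurable.ite (measurableSet_lt hQ' (hXF (n+1))) measurable_const
          measurable_const).sub measurable_const))
  have hξFm : ∀ j, Measurable[ℱ (j+1)] (ξ (j+1)) := by
    intro j
    have hQ' : Measurable[ℱ (j+1)] (Q (j+1)) := (hQFm j).mono (ℱ.mono (Nat.le_succ j)) le_rfl
    exact (Measurable.ite (measurableSet_lt hQ' (hXF (j+1))) measurable_const
      measurable_const).sub (measurable_const.sub (hFmono.measurable.comp hQ'))
  have hξm : ∀ n, Measurable (ξ n) := by
    intro n
    exact (Measurable.ite (measurableSet_lt (hQm n) (hXm n)) measurable_const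
      measurable_const).sub (measurable_const.sub (hFmono.measurable.comp (hQm n)))
  -- finite range of Q n
  have hQfin : ∀ n, ∃ V : Finset ℝ, ∀ ω, Q n ω ∈ V := by
    intro n
    induction n with
    | zero => exact ⟨{q1}, fun ω => by rw [hQ0 ω]; simp⟩
    | succ n ih =>
      obtain ⟨V, hV⟩ := ih
      refine ⟨V.image (fun v => v + e n * (1 - α)) ∪ V.image (fun v => v + e n * (0 - α)),
        fun ω => ?_⟩
      rw [hQrec n ω]
      by_cases h : Q n ω < X n ω
      · simp only [h, if_true]
        exact Finset.mem_union_left _ (Finset.mem_image.2 ⟨Q n ω, hV ω, rfl⟩)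
      · simp only [h, if_false]
        exact Finset.mem_union_right _ (Finset.mem_image.2 ⟨Q n ω, hV ω, rfl⟩)
  -- integrability helper
  have hbint : ∀ (f : Ω → ℝ) (C : ℝ), Measurable f → (∀ ω, |f ω| ≤ C) → Integrable f μ :=
    fun f C hm hb => ⟨hm.aestronglyMeasurable,
      HasFiniteIntegral.of_bounded (C := C) (ae_of_all _ (by simpa [Real.norm_eq_abs] using hb))⟩
  have hξint : ∀ n, Integrable (ξ n) μ := fun n => hbint _ 1 (hξm n) (hξb n)
  -- key conditional expectation
  have hcond : ∀ n, μ[ξ (n+1)|ℱ n] =ᵐ[μ] 0 := by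
    intro n
    obtain ⟨V, hV⟩ := hQfin (n+1)
    set g : ℝ → Ω → ℝ := fun v ω => (if v < X (n+1) ω then (1:ℝ) else 0) - (1 - F v) with hg_def
    have hgm : ∀ v, Measurable (g v) := by
      intro v
      exact (Measurable.ite (measurableSet_lt measurable_const (hXm (n+1))) measurable_const
        measurable_const).sub measurable_const
    have hgb : ∀ v ω, |g v ω| ≤ 2 := by
      intro v ω
      simp only [hg_def]
      have h1 := hF0 v; have h2 := hF1 v
      by_cases h : v < X (n+1) ω <;> simp [h, abs_le] <;> constructor <;> linarith
    have hgint : ∀ v, Integrable (g v) μ := fun v => hbint _ 2 (hgm v) (hgb v)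
    have hgE : ∀ v, ∫ ω, g v ω ∂μ = 0 := by
      intro v
      have hind : (fun ω => if v < X (n+1) ω then (1:ℝ) else 0)
          = (X (n+1) ⁻¹' Set.Ioi v).indicator (fun _ => (1:ℝ)) := by
        funext ω
        by_cases h : v < X (n+1) ω <;>
          simp [Set.indicator_apply, Set.mem_preimage, Set.mem_Ioi, h]
      have h1 : ∫ ω, g v ω ∂μ = (μ (X (n+1) ⁻¹' Set.Ioi v)).toReal - (1 - F v) := by
        rw [hg_def]
        simp only
        rw [integral_sub _ (integrable_const _), integral_const]
        · rw [hind, integral_indicator_const _ ((hXm (n+1)) measurableSet_Ioi)]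
          simp [measure_univ]
          rfl
        · rw [hind]
          exact (integrable_const (1:ℝ)).indicator ((hXm (n+1)) measurableSet_Ioi)
      have h2 : μ (X (n+1) ⁻¹' Set.Ioi v) = μ (S 1 ⁻¹' Set.Ioi v) :=
        (hident (n+1)).measure_mem_eq measurableSet_Ioi
      have h3 : S 1 ⁻¹' Set.Ioi v = (S 1 ⁻¹' Set.Iic v)ᶜ := by
        ext ω; simp [Set.mem_preimage, not_le]
      have hsetEq : S 1 ⁻¹' Set.Iic v = {ω | S 1 ω ≤ v} := rfl
      have h4 : μ (S 1 ⁻¹' Set.Ioi v) = 1 - μ {ω | S 1 ω ≤ v} := by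
        rw [h3, measure_compl (hSmeas 1 measurableSet_Iic) (measure_ne_top _ _), measure_univ,
          hsetEq]
      have h5 : (μ (S 1 ⁻¹' Set.Ioi v)).toReal = 1 - F v := by
        rw [h4, hF, ENNReal.toReal_sub_of_le prob_le_one ENNReal.one_ne_top]
        simp
      rw [h1, h2, h5]; ring
    set A : ℝ → Set Ω := fun v => Q (n+1) ⁻¹' {v} with hA_def
    have hAm : ∀ v, MeasurableSet[ℱ n] (A v) := fun v => hQFm n (measurableSet_singleton v)
    have hdecomp : ξ (n+1) = ∑ v ∈ V, (A v).indicator (g v) := by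
      funext ω
      rw [Finset.sum_apply]
      rw [Finset.sum_eq_single_of_mem (Q (n+1) ω) (hV ω)]
      · rw [Set.indicator_of_mem (by exact rfl : ω ∈ A (Q (n+1) ω))]
      · intro b _ hne
        rw [Set.indicator_of_notMem]
        intro h
        exact hne ((Set.mem_singleton_iff.1 h).symm)
    have h1 : μ[ξ (n+1)|ℱ n] =ᵐ[μ] ∑ v ∈ V, μ[(A v).indicator (g v)|ℱ n] := by
      rw [hdecomp]
      exact condExp_finsetSum (fun v _ => (hgint v).indicator ((ℱ.le n) _ (hAm v))) _
    have h2 : ∀ v, μ[g v|ℱ n] =ᵐ[μ] fun _ => (0:ℝ) := by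
      intro v
      have hind := hindep.indep_comap_natural_of_lt hXsm (Nat.lt_succ_self n)
      have hsm : StronglyMeasurable[MeasurableSpace.comap (X (n+1)) inferInstance] (g v) := by
        have hgm' : Measurable (fun x : ℝ => (if v < x then (1:ℝ) else 0) - (1 - F v)) :=
          (Measurable.ite measurableSet_Ioi measurable_const measurable_const).sub
            measurable_const
        exact (hgm'.comp (comap_measurable (X (n+1)))).stronglyMeasurable
      have := condExp_indep_eq (μ := μ) ((hXm (n+1)).comap_le) (ℱ.le n) hsm hind
      rw [hgE v] at this
      exact this
    have h3 : ∀ v, μ[(A v).indicator (g v)|ℱ n] =ᵐ[μ] fun _ => (0:ℝ) := by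
      intro v
      refine (condExp_indicator (hgint v) (hAm v)).trans ?_
      filter_upwards [h2 v] with ω hω
      by_cases h : ω ∈ A v
      · rw [Set.indicator_of_mem h, hω]
      · rw [Set.indicator_of_notMem h]
    have h4 : ∀ᵐ ω ∂μ, ∀ v ∈ V, (μ[(A v).indicator (g v)|ℱ n]) ω = 0 :=
      (Filter.eventually_all_finset V).2 (fun v _ => h3 v)
    filter_upwards [h1, h4] with ω hω1 hω4
    rw [Pi.zero_apply, hω1, Finset.sum_apply]
    exact Finset.sum_eq_zero hω4
  -- the martingale of partial sums
  set M : ℕ → Ω → ℝ := fun n ω => ∑ j ∈ Finset.range n, e (j+1) * ξ (j+1) ω with hM_def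
  have hMadp : StronglyAdapted ℱ M := by
    intro n
    have : Measurable[ℱ n] (M n) := by
      apply Finset.measurable_sum
      intro j hj
      have hjn : j + 1 ≤ n := Finset.mem_range.1 hj
      exact ((hξFm j).mono (ℱ.mono hjn) le_rfl).const_mul (e (j+1))
    exact this.stronglyMeasurable
  have hMm : ∀ n, Measurable (M n) := fun n => ((hMadp n).measurable).mono (ℱ.le n) le_rfl
  have hMb : ∀ n ω, |M n ω| ≤ ∑ j ∈ Finset.range n, |e (j+1)| := by
    intro n ω
    calc |M n ω| ≤ ∑ j ∈ Finset.range n, |e (j+1) * ξ (j+1) ω| := Finset.abs_sum_le_sum_abs _ _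
      _ ≤ ∑ j ∈ Finset.range n, |e (j+1)| := by
          refine Finset.sum_le_sum fun j _ => ?_
          rw [abs_mul]
          calc |e (j+1)| * |ξ (j+1) ω| ≤ |e (j+1)| * 1 :=
                mul_le_mul_of_nonneg_left (hξb _ ω) (abs_nonneg _)
            _ = |e (j+1)| := mul_one _
  have hMint : ∀ n, Integrable (M n) μ := fun n => hbint _ _ (hMm n) (hMb n)
  have hMart : Martingale M ℱ μ := by
    apply martingale_of_condExp_sub_eq_zero_nat hMadp hMint
    intro n
    have hdiff : M (n+1) - M n = e (n+1) • ξ (n+1) := by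
      funext ω
      simp only [Pi.sub_apply, hM_def, Finset.sum_range_succ, Pi.smul_apply, smul_eq_mul]
      ring
    rw [hdiff]
    refine (condExp_smul (e (n+1)) (ξ (n+1)) _).trans ?_
    filter_upwards [hcond n] with ω hω
    simp only [Pi.smul_apply, hω, Pi.zero_apply, smul_eq_mul, mul_zero]
  -- orthogonality and second moments
  have hcross_int : ∀ n, Integrable (fun ω => M n ω * ξ (n+1) ω) μ := by
    intro n
    refine hbint _ (∑ j ∈ Finset.range n, |e (j+1)|) ((hMm n).mul (hξm (n+1))) ?_
    intro ω
    rw [abs_mul]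
    calc |M n ω| * |ξ (n+1) ω| ≤ |M n ω| * 1 :=
          mul_le_mul_of_nonneg_left (hξb _ ω) (abs_nonneg _)
      _ = |M n ω| := mul_one _
      _ ≤ _ := hMb n ω
  have horth : ∀ n, ∫ ω, M n ω * ξ (n+1) ω ∂μ = 0 := by
    intro n
    have hint1 : Integrable (M n * ξ (n+1)) μ := hcross_int n
    have hpull := condExp_mul_of_stronglyMeasurable_left (hMadp n) hint1 (hξint (n+1))
    calc ∫ ω, M n ω * ξ (n+1) ω ∂μ = ∫ ω, (μ[M n * ξ (n+1)|ℱ n]) ω ∂μ :=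
          (integral_condExp (ℱ.le n)).symm
      _ = ∫ ω, (M n * μ[ξ (n+1)|ℱ n]) ω ∂μ := integral_congr_ae hpull
      _ = ∫ ω, (0 : Ω → ℝ) ω ∂μ := by
          refine integral_congr_ae ?_
          filter_upwards [hcond n] with ω hω
          simp [hω]
      _ = 0 := by simp
  have hMsqint : ∀ n, Integrable (fun ω => (M n ω)^2) μ := by
    intro n
    refine hbint _ ((∑ j ∈ Finset.range n, |e (j+1)|)^2) ((hMm n).pow_const 2) ?_
    intro ω
    rw [abs_of_nonneg (sq_nonneg _)]
    nlinarith [sq_abs (M n ω), hMb n ω, abs_nonneg (M n ω)]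
  have hξsqint : ∀ n, Integrable (fun ω => (ξ n ω)^2) μ := by
    intro n
    refine hbint _ 1 ((hξm n).pow_const 2) ?_
    intro ω
    rw [abs_of_nonneg (sq_nonneg _)]
    nlinarith [sq_abs (ξ n ω), hξb n ω, abs_nonneg (ξ n ω)]
  have hsq : ∀ n, ∫ ω, (M n ω)^2 ∂μ ≤ ∑ j ∈ Finset.range n, (e (j+1))^2 := by
    intro n
    induction n with
    | zero => simp [hM_def]
    | succ n ih =>
      set f1 : Ω → ℝ := fun ω => (M n ω)^2 with hf1
      set f2 : Ω → ℝ := fun ω => (2 * e (n+1)) * (M n ω * ξ (n+1) ω) with hf2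
      set f3 : Ω → ℝ := fun ω => (e (n+1))^2 * (ξ (n+1) ω)^2 with hf3
      have hif2 : Integrable f2 μ := (hcross_int n).const_mul _
      have hif3 : Integrable f3 μ := (hξsqint (n+1)).const_mul _
      have hexp : (fun ω => (M (n+1) ω)^2) = fun ω => (f1 ω + f2 ω) + f3 ω := by
        funext ω
        simp only [hf1, hf2, hf3, hM_def, Finset.sum_range_succ]
        ring
      have hA : ∫ ω, f1 ω + f2 ω ∂μ = ∫ ω, f1 ω ∂μ + ∫ ω, f2 ω ∂μ :=
        integral_add (hMsqint n) hif2
      have hB : ∫ ω, (f1 ω + f2 ω) + f3 ω ∂μ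
          = (∫ ω, f1 ω + f2 ω ∂μ) + ∫ ω, f3 ω ∂μ :=
        integral_add ((hMsqint n).add hif2) hif3
      have h1 : ∫ ω, (M (n+1) ω)^2 ∂μ = ∫ ω, f1 ω ∂μ + ∫ ω, f2 ω ∂μ + ∫ ω, f3 ω ∂μ := by
        rw [hexp, hB, hA]
      have h2 : ∫ ω, f2 ω ∂μ = 0 := by
        rw [hf2, integral_const_mul, horth n, mul_zero]
      have h3 : ∫ ω, f3 ω ∂μ ≤ (e (n+1))^2 := by
        rw [hf3, integral_const_mul]
        have h4 : ∫ ω, (ξ (n+1) ω)^2 ∂μ ≤ 1 := by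
          calc ∫ ω, (ξ (n+1) ω)^2 ∂μ ≤ ∫ _, (1:ℝ) ∂μ := by
                refine integral_mono (hξsqint (n+1)) (integrable_const 1) fun ω => ?_
                nlinarith [sq_abs (ξ (n+1) ω), hξb (n+1) ω, abs_nonneg (ξ (n+1) ω)]
            _ = 1 := by simp [measure_univ]
        nlinarith [sq_nonneg (e (n+1)), integral_nonneg (f := fun ω => (ξ (n+1) ω)^2) (fun ω => sq_nonneg (ξ (n+1) ω)) (μ := μ)]
      rw [Finset.sum_range_succ]
      have := h1
      rw [h2] at this
      linarith [h3, ih, this.le, this.ge]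
  -- L¹ boundedness
  set C : ℝ := ∑' t, η (t+1)^2 with hC_def
  have hsum_le : ∀ n, ∑ j ∈ Finset.range n, (e (j+1))^2 ≤ C := by
    intro n
    have h1 : ∑ j ∈ Finset.range n, (e (j+1))^2 = ∑ t ∈ Finset.Ico 1 (n+1), η (t+1)^2 := by
      rw [Finset.sum_Ico_eq_sum_range]
      simp only [Nat.add_sub_cancel]
      refine Finset.sum_congr rfl fun i _ => ?_
      have : 1 + i + 1 = (i + 1) + 1 := by omega
      rw [this]
    have h2 : ∑ t ∈ Finset.Ico 1 (n+1), η (t+1)^2 ≤ ∑ t ∈ Finset.range (n+1), η (t+1)^2 := by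
      refine Finset.sum_le_sum_of_subset_of_nonneg ?_ fun t _ _ => sq_nonneg _
      intro t ht
      rw [Finset.mem_range]
      exact (Finset.mem_Ico.1 ht).2
    have h3 : ∑ t ∈ Finset.range (n+1), η (t+1)^2 ≤ C :=
      hη_sq.sum_le_tsum (Finset.range (n+1)) (fun t _ => sq_nonneg _)
    linarith
  have hC0 : 0 ≤ C := tsum_nonneg fun t => sq_nonneg _
  have hL1b : ∀ n, eLpNorm (M n) 1 μ ≤ ENNReal.ofReal ((1 + C)/2) := by
    intro n
    rw [eLpNorm_one_eq_lintegral_enorm, ← ofReal_integral_norm_eq_lintegral_enorm (hMint n)]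
    apply ENNReal.ofReal_le_ofReal
    have h1 : ∫ ω, ‖M n ω‖ ∂μ ≤ ∫ ω, (1 + (M n ω)^2)/2 ∂μ := by
      refine integral_mono (hMint n).norm
        ((Integrable.add (integrable_const 1) (hMsqint n)).div_const 2) fun ω => ?_
      rw [Real.norm_eq_abs]
      nlinarith [sq_abs (M n ω), sq_nonneg (|M n ω| - 1)]
    have h2 : ∫ ω, (1 + (M n ω)^2)/2 ∂μ = (1 + ∫ ω, (M n ω)^2 ∂μ)/2 := by
      rw [integral_div, integral_add (integrable_const 1) (hMsqint n), integral_const]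
      simp [measure_univ]
    have h3 := hsq n
    have h4 := hsum_le n
    linarith
  have hconv : ∀ᵐ ω ∂μ, ∃ c, Tendsto (fun n => M n ω) atTop (nhds c) :=
    hMart.submartingale.exists_ae_tendsto_of_bdd (R := ((1 + C)/2).toNNReal)
      (fun n => hL1b n)
  -- step sizes tend to zero
  have hetz : Tendsto e atTop (nhds 0) := by
    have hsq0 : Tendsto (fun t => η (t+1)^2) atTop (nhds 0) := hη_sq.tendsto_atTop_zero
    have h1 : Tendsto (fun t => Real.sqrt (η (t+1)^2)) atTop (nhds (Real.sqrt 0)) :=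
      (Real.continuous_sqrt.continuousAt).tendsto.comp hsq0
    rw [Real.sqrt_zero] at h1
    refine h1.congr fun t => ?_
    rw [Real.sqrt_sq_eq_abs]
    exact abs_of_nonneg (he0 t)
  -- conclude pathwise
  filter_upwards [hconv] with ω hω
  obtain ⟨L, hL⟩ := hω
  have hcs : ∀ n, (∑ i ∈ Finset.range (n+1), e i * ξ i ω) = M n ω + e 0 * ξ 0 ω := by
    intro n
    rw [Finset.sum_range_succ']
  have hLc : Tendsto (fun n => ∑ i ∈ Finset.range n, e i * ξ i ω) atTop
      (nhds (L + e 0 * ξ 0 ω)) := by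
    have h1 : Tendsto (fun n => M n ω + e 0 * ξ 0 ω) atTop (nhds (L + e 0 * ξ 0 ω)) :=
      hL.add_const _
    have h2 : Tendsto (fun n => ∑ i ∈ Finset.range (n+1), e i * ξ i ω) atTop
        (nhds (L + e 0 * ξ 0 ω)) := h1.congr fun n => (hcs n).symm
    exact (tendsto_add_atTop_iff_nat 1).1 h2
  have hdet := det_conv qstar (fun n => Q n ω) e (fun n => ξ n ω) H
    (fun n => by
      show Q (n+1) ω = Q n ω + e n * (H (Q n ω) + ξ n ω)
      rw [hQrec n ω, ← hHξ n ω])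
    he0 hη_div hetz hLc.cauchySeq
    (fun n => by
      show |H (Q n ω) + ξ n ω| ≤ 1
      rw [hHξ n ω]
      by_cases h : Q n ω < X n ω <;> simp [h, abs_le] <;> constructor <;> linarith)
    hup hdown
  exact (tendsto_add_atTop_iff_nat 1).1 hdet
end

section
/- Suppose the step sizes η_t are deterministic and nonnegative with Σ_{t=1}^∞ η_t = ∞ and Σ_{t=1}^∞ η_t² < ∞, suppose q* ∈ [0,B] is the unique (1−α)-quantile of F, i.e., F(q) < 1−α for all q < q* and F(q) > 1−α for all q > q*, and additionally suppose that F is continuous on ℝ (i.e., S_1 has a continuous distribution). Then F(q_t) → 1−α almost surely as t → ∞. -/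
open MeasureTheory ProbabilityTheory Filter Finset
open scoped ENNReal NNReal

lemma det_telescope (x a d g : ℕ → ℝ)
    (hx : ∀ n, x (n+1) = x n + a n * g n + d n) :
    ∀ k n, k ≤ n → x n = x k + (∑ t ∈ Finset.Ico k n, a t * g t) + (∑ t ∈ Finset.Ico k n, d t) := by
  intro k n hkn
  induction n with
  | zero => simp [Nat.le_zero.mp hkn]
  | succ n ih =>
    rcases Nat.lt_or_ge k (n+1) with h | h
    · have hk : k ≤ n := Nat.lt_succ_iff.mp h
      rw [hx n, ih hk, Finset.sum_Ico_succ_top hk, Finset.sum_Ico_succ_top hk]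
      ring
    · have : k = n + 1 := le_antisymm hkn h
      subst this
      simp

lemma det_upper_s7 (x a d g : ℕ → ℝ) (qs ε δ C : ℝ)
    (hε : 0 < ε) (hδ : 0 < δ) (hC : 0 ≤ C)
    (ha : ∀ n, 0 ≤ a n) (ha0 : Tendsto a atTop (nhds 0))
    (hadiv : Tendsto (fun n => ∑ t ∈ Finset.range n, a t) atTop atTop)
    (hd : CauchySeq (fun n => ∑ t ∈ Finset.range n, d t))
    (hgC : ∀ n, |g n| ≤ C)
    (hg : ∀ n, qs + ε ≤ x n → g n ≤ -δ)
    (hx : ∀ n, x (n+1) = x n + a n * g n + d n) :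
    ∀ᶠ n in atTop, x n ≤ qs + 4*ε := by
  classical
  set s : ℕ → ℝ := fun n => ∑ t ∈ Finset.range n, d t with hs
  -- Cauchy control
  obtain ⟨N₁, hN₁⟩ : ∃ N, ∀ m ≥ N, ∀ n ≥ N, |s n - s m| < ε := by
    obtain ⟨N, hN⟩ := Metric.cauchySeq_iff'.mp hd (ε/2) (by linarith)
    refine ⟨N, fun m hm n hn => ?_⟩
    have h1 := hN m hm
    have h2 := hN n hn
    rw [Real.dist_eq] at h1 h2
    have : s n - s m = (s n - s N) - (s m - s N) := by ring
    rw [this]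
    calc |(s n - s N) - (s m - s N)| ≤ |s n - s N| + |s m - s N| := abs_sub _ _
      _ < ε := by linarith
  -- small steps
  obtain ⟨N₂, hN₂⟩ : ∃ N, ∀ n ≥ N, a n * C ≤ ε := by
    have := (Metric.tendsto_atTop.mp ha0) (ε / (C+1)) (by positivity)
    obtain ⟨N, hN⟩ := this
    refine ⟨N, fun n hn => ?_⟩
    have h := hN n hn
    rw [Real.dist_eq, sub_zero, abs_of_nonneg (ha n)] at h
    have : a n * C ≤ (ε / (C+1)) * C := by nlinarith [ha n]
    calc a n * C ≤ (ε / (C+1)) * C := this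
      _ ≤ ε := by
        rw [div_mul_eq_mul_div, div_le_iff₀ (by linarith)]
        nlinarith
  set N := max N₁ N₂ with hN
  -- sum identity in terms of s
  have tele : ∀ k n, k ≤ n → x n = x k + (∑ t ∈ Finset.Ico k n, a t * g t) + (s n - s k) := by
    intro k n hkn
    rw [det_telescope x a d g hx k n hkn]
    congr 1
    rw [hs]
    rw [Finset.sum_Ico_eq_sub _ hkn]
  -- step (a): hit the region
  obtain ⟨n₀, hn₀N, hn₀⟩ : ∃ n₀, N ≤ n₀ ∧ x n₀ ≤ qs + ε := by
    by_contra hcon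
    push_neg at hcon
    have hbig : ∀ n, N ≤ n → qs + ε < x n := fun n hn => hcon n hn
    have hsum : ∀ n, N ≤ n →
        (∑ t ∈ Finset.Ico N n, a t * g t) ≤ -δ * ∑ t ∈ Finset.Ico N n, a t := by
      intro n hn
      rw [Finset.mul_sum]
      apply Finset.sum_le_sum
      intro t ht
      have htN : N ≤ t := (Finset.mem_Ico.mp ht).1
      have := hg t (le_of_lt (hbig t htN))
      nlinarith [ha t]
    obtain ⟨n, hn1, hn2⟩ := ((hadiv.eventually_gt_atTop
      ((∑ t ∈ Finset.range N, a t) + (x N - qs) / δ)).and (eventually_ge_atTop N)).exists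
    have hxn := tele N n hn2
    have hA : ∑ t ∈ Finset.Ico N n, a t
        = (∑ t ∈ Finset.range n, a t) - ∑ t ∈ Finset.range N, a t :=
      Finset.sum_Ico_eq_sub _ hn2
    have hsN : |s n - s N| < ε := hN₁ N (le_max_left _ _) n (le_trans (le_max_left _ _) hn2)
    have h1 : qs + ε < x n := hbig n hn2
    have h2 := hsum n hn2
    have h3 : (x N - qs) / δ < ∑ t ∈ Finset.Ico N n, a t := by
      rw [hA]; linarith
    have h4 : x N - qs < δ * ∑ t ∈ Finset.Ico N n, a t :=
      (div_lt_iff₀' hδ).mp h3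
    have habs := abs_lt.mp hsN
    nlinarith
  -- step (b): stay in the region
  rw [eventually_atTop]
  refine ⟨n₀, fun m hm => ?_⟩
  by_cases hxm : x m ≤ qs + ε
  · linarith
  push_neg at hxm
  set P : ℕ → Prop := fun k => n₀ ≤ k ∧ x k ≤ qs + ε with hP
  have hPn₀ : P n₀ := ⟨le_refl _, hn₀⟩
  set k := Nat.findGreatest P m with hk
  have hkn₀ : n₀ ≤ k := Nat.le_findGreatest hm hPn₀
  have hkm : k ≤ m := Nat.findGreatest_le m
  have hPk : P k := Nat.findGreatest_spec hm hPn₀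
  have hkN₁ : N₁ ≤ k := le_trans (le_trans (le_max_left _ _) hn₀N) hkn₀
  have hkN₂ : N₂ ≤ k := le_trans (le_trans (le_max_right _ _) hn₀N) hkn₀
  have hklt : k < m := by
    rcases lt_or_eq_of_le hkm with h | h
    · exact h
    · exfalso; rw [h] at hPk; exact absurd hPk.2 (not_le.mpr hxm)
  have hmid : ∀ t, k < t → t < m → g t ≤ -δ := by
    intro t ht1 ht2
    have hnot : ¬ P t := Nat.findGreatest_is_greatest ht1 (le_of_lt ht2)
    have htn₀ : n₀ ≤ t := le_trans hkn₀ (le_of_lt ht1)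
    have : ¬ (x t ≤ qs + ε) := fun hxt => hnot ⟨htn₀, hxt⟩
    exact hg t (le_of_lt (not_le.mp this))
  have htel := tele (k+1) m (Nat.succ_le_of_lt hklt)
  have hsum : (∑ t ∈ Finset.Ico (k+1) m, a t * g t) ≤ 0 := by
    apply Finset.sum_nonpos
    intro t ht
    obtain ⟨ht1, ht2⟩ := Finset.mem_Ico.mp ht
    have := hmid t (Nat.lt_of_succ_le ht1) ht2
    nlinarith [ha t]
  have hs1 : |s m - s (k+1)| < ε := hN₁ (k+1) (by omega) m (by omega)
  have hxk1 : x (k+1) = x k + a k * g k + d k := hx k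
  have hdk : d k = s (k+1) - s k := by
    rw [hs]; simp [Finset.sum_range_succ]
  have hs2 : |s (k+1) - s k| < ε := hN₁ k (by omega) (k+1) (by omega)
  have hag : a k * g k ≤ ε := by
    have h1 : a k * g k ≤ a k * C := by nlinarith [ha k, (abs_le.mp (hgC k)).2]
    linarith [hN₂ k hkN₂]
  have habs1 := abs_lt.mp hs1
  have habs2 := abs_lt.mp hs2
  have hxkle : x k ≤ qs + ε := hPk.2
  nlinarith

lemma det_conv_s7 (x a d : ℕ → ℝ) (h : ℝ → ℝ) (qs C : ℝ) (hC : 0 ≤ C)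
    (hhC : ∀ y, |h y| ≤ C)
    (ha : ∀ n, 0 ≤ a n) (ha0 : Tendsto a atTop (nhds 0))
    (hadiv : Tendsto (fun n => ∑ t ∈ Finset.range n, a t) atTop atTop)
    (hd : CauchySeq (fun n => ∑ t ∈ Finset.range n, d t))
    (hsign : ∀ ε, 0 < ε → ∃ δ, 0 < δ ∧ (∀ y, y ≤ qs - ε → δ ≤ h y) ∧ (∀ y, qs + ε ≤ y → h y ≤ -δ))
    (hx : ∀ n, x (n+1) = x n + a n * h (x n) + d n) :
    Tendsto x atTop (nhds qs) := by
  rw [Metric.tendsto_atTop]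
  intro ε hε
  have hε5 : 0 < ε/5 := by linarith
  obtain ⟨δ, hδ, hδlo, hδhi⟩ := hsign (ε/5) hε5
  have hup : ∀ᶠ n in atTop, x n ≤ qs + 4*(ε/5) :=
    det_upper_s7 x a d (fun n => h (x n)) qs (ε/5) δ C hε5 hδ hC ha ha0 hadiv hd
      (fun n => hhC _) (fun n hn => hδhi _ hn) hx
  have hlo : ∀ᶠ n in atTop, (fun n => -x n) n ≤ (-qs) + 4*(ε/5) := by
    apply det_upper_s7 (fun n => -x n) a (fun n => -d n) (fun n => -h (x n)) (-qs) (ε/5) δ C hε5 hδ hC ha ha0 hadiv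
    · have : (fun n => ∑ t ∈ Finset.range n, -d t) = fun n => -(∑ t ∈ Finset.range n, d t) := by
        funext n; simp
      rw [this]
      exact hd.neg
    · intro n; rw [abs_neg]; exact hhC _
    · intro n hn
      have : x n ≤ qs - ε/5 := by linarith
      have := hδlo _ this
      linarith
    · intro n; rw [hx n]; ring
  rw [eventually_atTop] at hup hlo
  obtain ⟨N1, h1⟩ := hup
  obtain ⟨N2, h2⟩ := hlo
  refine ⟨max N1 N2, fun n hn => ?_⟩
  have hu := h1 n (le_trans (le_max_left _ _) hn)
  have hl := h2 n (le_trans (le_max_right _ _) hn)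
  simp only at hl
  rw [Real.dist_eq, abs_lt]
  constructor <;> linarith

lemma bdd_integrable {Ω : Type*} [MeasurableSpace Ω] {μ : Measure Ω} [IsProbabilityMeasure μ]
    {f : Ω → ℝ} (hf : AEStronglyMeasurable f μ) {c : ℝ} (hc : ∀ᵐ ω ∂μ, |f ω| ≤ c) :
    Integrable f μ :=
  (integrable_const c).mono' hf (by filter_upwards [hc] with ω h using by simpa using h)

lemma key_zero {Ω : Type*} [MeasurableSpace Ω] (μ : Measure Ω) [IsProbabilityMeasure μ]
    (X Y W : Ω → ℝ) (hX : Measurable X) (hY : Measurable Y) (hW : Measurable W)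
    (C : ℝ) (hWbd : ∀ ω, |W ω| ≤ C)
    (hind : IndepFun X (fun ω => (Y ω, W ω)) μ)
    (F : ℝ → ℝ) (hFm : Measurable F)
    (hFX : ∀ r, F r = (μ {ω | X ω ≤ r}).toReal) :
    ∫ ω, W ω * ((if Y ω < X ω then (1:ℝ) else 0) - (1 - F (Y ω))) ∂μ = 0 := by
  have hF0 : ∀ r, 0 ≤ F r := fun r => by rw [hFX r]; exact ENNReal.toReal_nonneg
  have hF1 : ∀ r, F r ≤ 1 := fun r => by
    rw [hFX r]
    have := prob_le_one (μ := μ) (s := {ω | X ω ≤ r})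
    calc (μ {ω | X ω ≤ r}).toReal ≤ (1 : ℝ≥0∞).toReal :=
      ENNReal.toReal_mono (by simp) this
    _ = 1 := by simp
  set Z : Ω → ℝ × ℝ := fun ω => (Y ω, W ω) with hZdef
  have hZ : Measurable Z := hY.prodMk hW
  have hmap : μ.map (fun ω => (X ω, Z ω)) = (μ.map X).prod (μ.map Z) :=
    (indepFun_iff_map_prod_eq_prod_map_map hX.aemeasurable hZ.aemeasurable).mp hind
  set φ : ℝ × (ℝ × ℝ) → ℝ := fun p => p.2.2 * ((if p.2.1 < p.1 then (1:ℝ) else 0) - (1 - F p.2.1)) with hφdef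
  have hφm : Measurable φ := by
    apply Measurable.mul
    · exact measurable_snd.snd
    · apply Measurable.sub
      · have : Measurable fun p : ℝ × (ℝ × ℝ) => p.2.1 := measurable_snd.fst
        exact Measurable.ite (measurableSet_lt this measurable_fst) measurable_const measurable_const
      · exact (measurable_const.sub (hFm.comp measurable_snd.fst))
  haveI : IsProbabilityMeasure (μ.map X) := Measure.isProbabilityMeasure_map hX.aemeasurable
  haveI : IsProbabilityMeasure (μ.map Z) := Measure.isProbabilityMeasure_map hZ.aemeasurable
  have hbd : ∀ᵐ p ∂((μ.map X).prod (μ.map Z)), |φ p| ≤ |C| * 2 := by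
    rw [← hmap]
    rw [ae_map_iff (hX.prodMk hZ).aemeasurable]
    · apply ae_of_all
      intro ω
      simp only [hφdef]
      have h1 : |W ω| ≤ |C| := le_trans (hWbd ω) (le_abs_self C)
      have h2 : |((if Y ω < X ω then (1:ℝ) else 0) - (1 - F (Y ω)))| ≤ 2 := by
        have := hF0 (Y ω); have := hF1 (Y ω)
        split_ifs <;> rw [abs_le] <;> constructor <;> linarith
      calc |W ω * _| = |W ω| * _ := abs_mul _ _
        _ ≤ |C| * 2 := mul_le_mul h1 h2 (abs_nonneg _) (abs_nonneg _)
    · exact measurableSet_le (hφm.comp measurable_id |>.abs) measurable_const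
  have hint : Integrable φ ((μ.map X).prod (μ.map Z)) :=
    bdd_integrable hφm.aestronglyMeasurable hbd
  have hstep1 : ∫ ω, W ω * ((if Y ω < X ω then (1:ℝ) else 0) - (1 - F (Y ω))) ∂μ
      = ∫ p, φ p ∂(μ.map (fun ω => (X ω, Z ω))) := by
    rw [integral_map (hX.prodMk hZ).aemeasurable hφm.aestronglyMeasurable]
  have hinner : ∀ z : ℝ × ℝ, ∫ x, φ (x, z) ∂(μ.map X) = 0 := by
    intro z
    obtain ⟨y, w⟩ := z
    simp only [hφdef]
    have hset : MeasurableSet {x : ℝ | y < x} := measurableSet_lt measurable_const measurable_id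
    have hind1 : Integrable (fun x : ℝ => (if y < x then (1:ℝ) else 0)) (μ.map X) := by
      apply bdd_integrable (c := 1)
      · exact (Measurable.ite hset measurable_const measurable_const).aestronglyMeasurable
      · apply ae_of_all; intro x; split_ifs <;> norm_num
    have heq : (fun x : ℝ => (if y < x then (1:ℝ) else 0)) = Set.indicator {x : ℝ | y < x} (fun _ => 1) := by
      funext x
      rw [Set.indicator_apply]
      simp [Set.mem_setOf_eq]
    have hI : ∫ x, (if y < x then (1:ℝ) else 0) ∂(μ.map X) = ((μ.map X) {x | y < x}).toReal := by
      rw [heq]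
      exact integral_indicator_one hset
    have hcompl : ((μ.map X) {x | y < x}).toReal = 1 - F y := by
      have hIic : {x : ℝ | y < x} = (Set.Iic y)ᶜ := by
        ext x; simp [not_le]
      rw [hIic, measure_compl measurableSet_Iic (measure_ne_top _ _)]
      have hle : (μ.map X) (Set.Iic y) = μ {ω | X ω ≤ y} := by
        rw [Measure.map_apply hX measurableSet_Iic]
        rfl
      rw [measure_univ, hle, ENNReal.toReal_sub_of_le (prob_le_one) (by simp)]
      simp [hFX y]
    rw [integral_const_mul, integral_sub hind1 (integrable_const _), hI, hcompl, integral_const]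
    simp
  rw [hstep1, hmap, integral_prod_symm φ hint]
  simp only [hinner]
  simp

lemma indep_mono {Ω : Type*} {m0 : MeasurableSpace Ω} {μ : Measure Ω}
    {m₁ m₂ m₁' m₂' : MeasurableSpace Ω}
    (h : Indep m₁ m₂ μ) (h1 : m₁' ≤ m₁) (h2 : m₂' ≤ m₂) : Indep m₁' m₂' μ := by
  rw [Indep_iff] at h ⊢
  exact fun t1 t2 ht1 ht2 => h t1 t2 (h1 _ ht1) (h2 _ ht2)

/-- **Convergence of instantaneous coverage with decaying step sizes (i.i.d. scores).**
Fix `α ∈ (0,1)` and `B > 0`. Let `(S t)_{t ≥ 1}` be i.i.d. with values in `[0,B]` and CDF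
`F r = P(S 1 ≤ r)`, assumed continuous on `ℝ`. Suppose the deterministic nonnegative step
sizes satisfy `∑_{t≥1} η t = ∞` and `∑_{t≥1} (η t)² < ∞`, and `q* ∈ [0,B]` is the unique
`(1-α)`-quantile of `F`. Then for the online conformal update
`q (t+1) = q t + η t * (1{S t > q t} - α)` with deterministic `q 1 = q1 ∈ [0,B]`,
almost surely `F (q t) → 1 - α`. -/
theorem coverage_converges_iid
    {Ω : Type*} [MeasurableSpace Ω] (μ : Measure Ω) [IsProbabilityMeasure μ]
    (α B : ℝ) (hα : α ∈ Set.Ioo (0 : ℝ) 1) (hB : 0 < B)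
    (S : ℕ → Ω → ℝ)
    (hSmeas : ∀ t, Measurable (S t))
    (hSrange : ∀ t, 1 ≤ t → ∀ ω, S t ω ∈ Set.Icc 0 B)
    (hindep : iIndepFun (fun t => S (t + 1)) μ)
    (hident : ∀ t, IdentDistrib (S (t + 1)) (S 1) μ μ)
    (F : ℝ → ℝ) (hF : ∀ r, F r = (μ {ω | S 1 ω ≤ r}).toReal)
    (hFcont : Continuous F)
    (η : ℕ → ℝ)
    (hη_nonneg : ∀ t, 1 ≤ t → 0 ≤ η t)
    (hη_div : ¬ Summable (fun t => η (t + 1)))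
    (hη_sq : Summable (fun t => (η (t + 1)) ^ 2))
    (qstar : ℝ) (hqstar : qstar ∈ Set.Icc 0 B)
    (hlt : ∀ r, r < qstar → F r < 1 - α)
    (hgt : ∀ r, qstar < r → 1 - α < F r)
    (q1 : ℝ) (hq1 : q1 ∈ Set.Icc 0 B)
    (q : ℕ → Ω → ℝ) (hq_init : ∀ ω, q 1 ω = q1)
    (hrec : ∀ t, 1 ≤ t → ∀ ω,
      q (t + 1) ω = q t ω + η t * ((if q t ω < S t ω then (1 : ℝ) else 0) - α)) :
    ∀ᵐ ω ∂μ, Tendsto (fun t => F (q t ω)) atTop (nhds (1 - α)) := by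
  classical
  obtain ⟨hα0, hα1⟩ := hα
  have hFm : Measurable F := hFcont.measurable
  have hF0 : ∀ r, 0 ≤ F r := fun r => by rw [hF r]; exact ENNReal.toReal_nonneg
  have hF1 : ∀ r, F r ≤ 1 := fun r => by
    rw [hF r]
    calc (μ {ω | S 1 ω ≤ r}).toReal ≤ (1 : ℝ≥0∞).toReal :=
      ENNReal.toReal_mono (by simp) prob_le_one
    _ = 1 := by simp
  have hFmono : Monotone F := by
    intro a b hab
    rw [hF a, hF b]
    exact ENNReal.toReal_mono (measure_ne_top _ _)
      (measure_mono (fun ω (h : S 1 ω ≤ a) => le_trans h hab))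
  -- filtration
  let Gm : ℕ → MeasurableSpace Ω := fun n =>
    ⨆ i ∈ {i : ℕ | i < n}, MeasurableSpace.comap (S (i+1)) inferInstance
  have hGle : ∀ n, Gm n ≤ ‹MeasurableSpace Ω› := fun n =>
    iSup₂_le fun i _ => measurable_iff_comap_le.mp (hSmeas (i+1))
  have hGmono : Monotone Gm := fun n m hnm =>
    biSup_mono fun i hi => lt_of_lt_of_le hi hnm
  let G : Filtration ℕ ‹MeasurableSpace Ω› := ⟨Gm, hGmono, hGle⟩
  have hSmeasG : ∀ i n, i < n → Measurable[Gm n] (S (i+1)) := by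
    intro i n hi
    apply measurable_iff_comap_le.mpr
    exact le_biSup (fun i => MeasurableSpace.comap (S (i+1)) inferInstance)
      (show i ∈ {i : ℕ | i < n} from hi)
  -- measurability of q
  have hqG : ∀ n, Measurable[Gm n] (q (n+1)) := by
    intro n
    induction n with
    | zero =>
      have hq1' : q 1 = fun _ => q1 := funext hq_init
      rw [hq1']; exact measurable_const
    | succ n ih =>
      have hrw : q (n+2) = fun ω =>
          q (n+1) ω + η (n+1) * ((if q (n+1) ω < S (n+1) ω then (1:ℝ) else 0) - α) :=
        funext fun ω => hrec (n+1) (by omega) ω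
      rw [hrw]
      have hq' : Measurable[Gm (n+1)] (q (n+1)) := ih.mono (hGmono (by omega)) le_rfl
      have hS' : Measurable[Gm (n+1)] (S (n+1)) := hSmeasG n (n+1) (by omega)
      have hite : Measurable[Gm (n+1)]
          (fun ω => (if q (n+1) ω < S (n+1) ω then (1:ℝ) else 0)) :=
        Measurable.ite (measurableSet_lt hq' hS') measurable_const measurable_const
      exact hq'.add (((hite.sub measurable_const)).const_mul (η (n+1)))
  -- the processes
  set ξ : ℕ → Ω → ℝ := fun n ω =>
    (if q (n+1) ω < S (n+1) ω then (1:ℝ) else 0) - (1 - F (q (n+1) ω)) with hξdef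
  set c : ℕ → Ω → ℝ := fun n ω => η (n+1) * ξ n ω with hcdef
  set M : ℕ → Ω → ℝ := fun n ω => ∑ t ∈ Finset.range n, c t ω with hMdef
  have hξG : ∀ n, Measurable[Gm (n+1)] (ξ n) := by
    intro n
    have hq' : Measurable[Gm (n+1)] (q (n+1)) := (hqG n).mono (hGmono (by omega)) le_rfl
    have hS' : Measurable[Gm (n+1)] (S (n+1)) := hSmeasG n (n+1) (by omega)
    exact (Measurable.ite (measurableSet_lt hq' hS') measurable_const measurable_const).sub
      (measurable_const.sub (hFm.comp hq'))
  have hcG : ∀ n, Measurable[Gm (n+1)] (c n) := fun n => (hξG n).const_mul _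
  have hMG : ∀ n, Measurable[Gm n] (M n) := by
    intro n
    apply Finset.measurable_sum
    intro t ht
    exact (hcG t).mono (hGmono (Finset.mem_range.mp ht)) le_rfl
  have hξmeas : ∀ n, Measurable (ξ n) := fun n => ((hξG n).mono (hGle _) le_rfl)
  have hcmeas : ∀ n, Measurable (c n) := fun n => ((hcG n).mono (hGle _) le_rfl)
  have hMmeas : ∀ n, Measurable (M n) := fun n => ((hMG n).mono (hGle _) le_rfl)
  -- bounds
  have hξbd : ∀ n ω, |ξ n ω| ≤ 1 := by
    intro n ω
    have := hF0 (q (n+1) ω); have := hF1 (q (n+1) ω)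
    simp only [hξdef]
    split_ifs <;> rw [abs_le] <;> constructor <;> linarith
  have hcbd : ∀ n ω, |c n ω| ≤ η (n+1) := by
    intro n ω
    have hn := hη_nonneg (n+1) (by omega)
    simp only [hcdef]
    rw [abs_mul, abs_of_nonneg hn]
    nlinarith [hξbd n ω, abs_nonneg (ξ n ω)]
  have hMbd : ∀ n ω, |M n ω| ≤ ∑ t ∈ Finset.range n, η (t+1) := by
    intro n ω
    simp only [hMdef]
    calc |∑ t ∈ Finset.range n, c t ω| ≤ ∑ t ∈ Finset.range n, |c t ω| :=
      Finset.abs_sum_le_sum_abs _ _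
    _ ≤ ∑ t ∈ Finset.range n, η (t+1) := Finset.sum_le_sum fun t _ => hcbd t ω
  -- integrability
  have hcint : ∀ n, Integrable (c n) μ := fun n =>
    bdd_integrable (hcmeas n).aestronglyMeasurable (ae_of_all _ (hcbd n))
  have hMint : ∀ n, Integrable (M n) μ := fun n =>
    bdd_integrable (hMmeas n).aestronglyMeasurable (ae_of_all _ (hMbd n))
  -- independence
  have hindep2 : ∀ n, Indep (MeasurableSpace.comap (S (n+1)) inferInstance) (Gm n) μ := by
    intro n
    have hdisj : Disjoint ({n} : Set ℕ) {i : ℕ | i < n} := by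
      rw [Set.disjoint_left]
      intro i hi hj
      simp only [Set.mem_singleton_iff] at hi
      simp only [Set.mem_setOf_eq] at hj
      omega
    have h := indep_iSup_of_disjoint
      (m := fun i => MeasurableSpace.comap (S (i+1)) inferInstance)
      (fun i => measurable_iff_comap_le.mp (hSmeas (i+1))) hindep.iIndep hdisj
    simpa [_root_.iSup_singleton, Gm] using h
  -- key zero-integral property
  have hkey : ∀ n (W : Ω → ℝ), Measurable[Gm n] W → ∀ Cw : ℝ, (∀ ω, |W ω| ≤ Cw) →
      ∫ ω, W ω * ξ n ω ∂μ = 0 := by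
    intro n W hWG Cw hWbd
    have hZG : Measurable[Gm n] (fun ω => (q (n+1) ω, W ω)) := (hqG n).prodMk hWG
    have hindZ : IndepFun (S (n+1)) (fun ω => (q (n+1) ω, W ω)) μ := by
      rw [IndepFun_iff_Indep]
      exact indep_mono (hindep2 n) le_rfl (measurable_iff_comap_le.mp hZG)
    have hFX : ∀ r, F r = (μ {ω | S (n+1) ω ≤ r}).toReal := by
      intro r
      rw [hF r]
      congr 1
      exact ((hident n).measure_mem_eq measurableSet_Iic).symm
    exact key_zero μ (S (n+1)) (q (n+1)) W (hSmeas (n+1))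
      ((hqG n).mono (hGle n) le_rfl) (hWG.mono (hGle n) le_rfl) Cw hWbd hindZ F hFm hFX
  -- martingale property
  have hcondzero : ∀ n, (0 : Ω → ℝ) =ᵐ[μ] μ[c n | G n] := by
    intro n
    apply ae_eq_condExp_of_forall_setIntegral_eq (hGle n) (hcint n)
    · intro s _ _; exact integrableOn_zero
    · intro s hs _
      have hsm0 : MeasurableSet s := hGle n s hs
      have hindic : ∫ x in s, c n x ∂μ = ∫ x, s.indicator (fun _ => (1:ℝ)) x * c n x ∂μ := by
        rw [← integral_indicator hsm0]
        congr 1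
        funext x
        rw [Set.indicator_apply, Set.indicator_apply]
        split_ifs <;> simp
      have hmul : (fun x => s.indicator (fun _ => (1:ℝ)) x * c n x)
          = fun x => η (n+1) * (s.indicator (fun _ => (1:ℝ)) x * ξ n x) := by
        funext x; simp only [hcdef]; ring
      have hWG : Measurable[Gm n] (s.indicator (fun _ => (1:ℝ))) :=
        measurable_const.indicator hs
      have hWbd : ∀ ω, |s.indicator (fun _ => (1:ℝ)) ω| ≤ 1 := by
        intro ω; rw [Set.indicator_apply]; split_ifs <;> norm_num
      have hzero : ∫ x in s, c n x ∂μ = 0 := by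
        rw [hindic, hmul, integral_const_mul, hkey n _ hWG 1 hWbd, mul_zero]
      simpa using hzero.symm
    · exact StronglyMeasurable.aestronglyMeasurable stronglyMeasurable_zero
  have hmart : Martingale M G μ := by
    apply martingale_nat
    · intro n; exact ((hMG n).stronglyMeasurable)
    · exact hMint
    · intro n
      have hMsucc : M (n+1) = M n + c n := by
        funext ω; simp only [hMdef, Finset.sum_range_succ, Pi.add_apply]
      rw [hMsucc]
      have h1 : μ[M n + c n | G n] =ᵐ[μ] μ[M n | G n] + μ[c n | G n] :=
        condExp_add (hMint n) (hcint n) _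
      have h2 : μ[M n | G n] = M n :=
        condExp_of_stronglyMeasurable (hGle n) ((hMG n).stronglyMeasurable) (hMint n)
      filter_upwards [h1, (hcondzero n).symm] with ω hω1 hω2
      rw [hω1, Pi.add_apply, h2, hω2]
      simp
  -- second moment bound
  have horth : ∀ n, ∫ ω, M n ω * c n ω ∂μ = 0 := by
    intro n
    have hmul : (fun ω => M n ω * c n ω) = fun ω => η (n+1) * (M n ω * ξ n ω) := by
      funext ω; simp only [hcdef]; ring
    rw [hmul, integral_const_mul, hkey n (M n) (hMG n) _ (hMbd n), mul_zero]
  have hbd_int : ∀ (f : Ω → ℝ), Measurable f → ∀ C : ℝ, (∀ ω, |f ω| ≤ C) → Integrable f μ :=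
    fun f hf C hC => bdd_integrable hf.aestronglyMeasurable (ae_of_all _ hC)
  have hM2 : ∀ n, ∫ ω, (M n ω)^2 ∂μ ≤ ∑ t ∈ Finset.range n, η (t+1)^2 := by
    intro n
    induction n with
    | zero => simp [hMdef]
    | succ n ih =>
      have hintM2 : Integrable (fun ω => (M n ω)^2) μ := by
        refine hbd_int _ ((hMmeas n).pow_const 2) ((∑ t ∈ Finset.range n, η (t+1))^2) ?_
        intro ω
        rw [abs_of_nonneg (sq_nonneg _)]
        have := hMbd n ω
        nlinarith [abs_nonneg (M n ω), sq_abs (M n ω)]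
      have hintMc : Integrable (fun ω => 2*(M n ω * c n ω)) μ := by
        refine hbd_int _ (((hMmeas n).mul (hcmeas n)).const_mul 2)
          (2 * ((∑ t ∈ Finset.range n, η (t+1)) * η (n+1))) ?_
        intro ω
        rw [abs_mul, abs_mul]
        have h1 := hMbd n ω; have h2 := hcbd n ω
        have : |(2:ℝ)| = 2 := by norm_num
        rw [this]
        have := abs_nonneg (M n ω); have := abs_nonneg (c n ω)
        nlinarith
      have hintc2 : Integrable (fun ω => (c n ω)^2) μ := by
        refine hbd_int _ ((hcmeas n).pow_const 2) ((η (n+1))^2) ?_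
        intro ω
        rw [abs_of_nonneg (sq_nonneg _)]
        have := hcbd n ω
        nlinarith [abs_nonneg (c n ω), sq_abs (c n ω)]
      have hexp : (fun ω => (M (n+1) ω)^2)
          = fun ω => (((M n ω)^2) + (2*(M n ω * c n ω))) + ((c n ω)^2) := by
        funext ω; simp only [hMdef, Finset.sum_range_succ]; ring
      have hcross : ∫ ω, 2*(M n ω * c n ω) ∂μ = 0 := by
        rw [integral_const_mul, horth n, mul_zero]
      have hc2 : ∫ ω, (c n ω)^2 ∂μ ≤ (η (n+1))^2 := by
        calc ∫ ω, (c n ω)^2 ∂μ ≤ ∫ _ω, (η (n+1))^2 ∂μ := by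
              apply integral_mono hintc2 (integrable_const _)
              intro ω
              show c n ω ^ 2 ≤ η (n+1)^2
              have := hcbd n ω
              nlinarith [abs_nonneg (c n ω), sq_abs (c n ω)]
          _ = (η (n+1))^2 := by simp
      calc ∫ ω, (M (n+1) ω)^2 ∂μ
          = (∫ ω, (M n ω)^2 ∂μ) + (∫ ω, 2*(M n ω * c n ω) ∂μ) + ∫ ω, (c n ω)^2 ∂μ := by
            rw [hexp]
            have e1 : ∫ ω, (((M n ω)^2) + (2*(M n ω * c n ω))) + ((c n ω)^2) ∂μ
                = (∫ ω, ((M n ω)^2) + (2*(M n ω * c n ω)) ∂μ) + ∫ ω, (c n ω)^2 ∂μ :=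
              integral_add (hintM2.add hintMc) hintc2
            have e2 : ∫ ω, ((M n ω)^2) + (2*(M n ω * c n ω)) ∂μ
                = (∫ ω, (M n ω)^2 ∂μ) + ∫ ω, 2*(M n ω * c n ω) ∂μ :=
              integral_add hintM2 hintMc
            rw [e1, e2]
        _ ≤ (∑ t ∈ Finset.range n, η (t+1)^2) + 0 + (η (n+1))^2 := by
            rw [hcross]; exact add_le_add (add_le_add ih (le_refl 0)) hc2
        _ = ∑ t ∈ Finset.range (n+1), η (t+1)^2 := by rw [Finset.sum_range_succ]; ring
  -- square integrability (all n)
  have hintM2all : ∀ n, Integrable (fun ω => (M n ω)^2) μ := by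
    intro n
    refine hbd_int _ ((hMmeas n).pow_const 2) ((∑ t ∈ Finset.range n, η (t+1))^2) ?_
    intro ω
    rw [abs_of_nonneg (sq_nonneg _)]
    have := hMbd n ω
    nlinarith [abs_nonneg (M n ω), sq_abs (M n ω)]
  -- L¹ boundedness
  set K : ℝ := ∑' t, η (t+1)^2 with hKdef
  have hKn : ∀ n, ∑ t ∈ Finset.range n, η (t+1)^2 ≤ K := fun n =>
    Summable.sum_le_tsum _ (fun t _ => sq_nonneg _) hη_sq
  have hK0 : 0 ≤ K := tsum_nonneg fun t => sq_nonneg _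
  set R : ℝ≥0 := ⟨Real.sqrt K, Real.sqrt_nonneg K⟩ with hRdef
  have hbdd : ∀ n, eLpNorm (M n) 1 μ ≤ (R : ℝ≥0∞) := by
    intro n
    have h12 : eLpNorm (M n) 1 μ ≤ eLpNorm (M n) 2 μ :=
      eLpNorm_le_eLpNorm_of_exponent_le (by norm_num) (hMmeas n).aestronglyMeasurable
    refine le_trans h12 ?_
    have hpt : ∀ ω, ((‖M n ω‖₊ : ℝ≥0∞)) ^ (2:ℝ) = ENNReal.ofReal ((M n ω)^2) := by
      intro ω
      rw [← enorm_eq_nnnorm, Real.enorm_eq_ofReal_abs, ENNReal.ofReal_rpow_of_nonneg (abs_nonneg _) (by norm_num)]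
      congr 1
      have h2 : |M n ω| ^ (2:ℝ) = |M n ω| ^ (2:ℕ) := by
        rw [← Real.rpow_natCast]; norm_num
      rw [h2, sq_abs]
    have hle : ∫⁻ ω, (‖M n ω‖₊:ℝ≥0∞) ^ (2:ℝ) ∂μ ≤ ENNReal.ofReal K := by
      calc ∫⁻ ω, (‖M n ω‖₊:ℝ≥0∞) ^ (2:ℝ) ∂μ
          = ∫⁻ ω, ENNReal.ofReal ((M n ω)^2) ∂μ := by simp_rw [hpt]
        _ = ENNReal.ofReal (∫ ω, (M n ω)^2 ∂μ) :=
            (ofReal_integral_eq_lintegral_ofReal (hintM2all n)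
              (ae_of_all _ fun ω => sq_nonneg _)).symm
        _ ≤ ENNReal.ofReal K := ENNReal.ofReal_le_ofReal (le_trans (hM2 n) (hKn n))
    rw [eLpNorm_eq_lintegral_rpow_enorm_toReal (by norm_num) (by norm_num)]
    have htR : (2:ℝ≥0∞).toReal = (2:ℝ) := by norm_num
    rw [htR]
    calc (∫⁻ ω, (‖M n ω‖₊:ℝ≥0∞) ^ (2:ℝ) ∂μ) ^ (1/(2:ℝ))
        ≤ (ENNReal.ofReal K) ^ (1/(2:ℝ)) := ENNReal.rpow_le_rpow hle (by norm_num)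
      _ = (R : ℝ≥0∞) := by
          rw [ENNReal.ofReal_rpow_of_nonneg hK0 (by norm_num)]
          rw [← Real.sqrt_eq_rpow]
          exact ENNReal.ofReal_eq_coe_nnreal (Real.sqrt_nonneg K)
  -- martingale convergence
  have hconv := hmart.submartingale.ae_tendsto_limitProcess hbdd
  -- deterministic step sizes facts
  have ha0 : Tendsto (fun n => η (n+1)) atTop (nhds 0) := by
    have hsq0 : Tendsto (fun n => η (n+1)^2) atTop (nhds 0) := hη_sq.tendsto_atTop_zero
    have hcomp : Tendsto (fun n => Real.sqrt (η (n+1)^2)) atTop (nhds (Real.sqrt 0)) :=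
      (Real.continuous_sqrt.tendsto 0).comp hsq0
    rw [Real.sqrt_zero] at hcomp
    convert hcomp using 2 with n
    rw [Real.sqrt_sq (hη_nonneg (n+1) (by omega))]
  have hadiv : Tendsto (fun n => ∑ t ∈ Finset.range n, η (t+1)) atTop atTop :=
    (not_summable_iff_tendsto_nat_atTop_of_nonneg
      (fun t => hη_nonneg (t+1) (by omega))).mp hη_div
  -- quantile fact
  have hFq : F qstar = 1 - α := by
    have hseqlo : Tendsto (fun n : ℕ => qstar - ((n:ℝ)+1)⁻¹) atTop (nhds qstar) := by
      have h0 : Tendsto (fun n : ℕ => ((n:ℝ)+1)⁻¹) atTop (nhds 0) :=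
        tendsto_one_div_add_atTop_nhds_zero_nat.congr (by intro n; rw [one_div])
      have := Tendsto.sub (tendsto_const_nhds :
        Tendsto (fun _ : ℕ => qstar) atTop (nhds qstar)) h0
      simpa using this
    have hseqhi : Tendsto (fun n : ℕ => qstar + ((n:ℝ)+1)⁻¹) atTop (nhds qstar) := by
      have h0 : Tendsto (fun n : ℕ => ((n:ℝ)+1)⁻¹) atTop (nhds 0) :=
        tendsto_one_div_add_atTop_nhds_zero_nat.congr (by intro n; rw [one_div])
      have := Tendsto.add (tendsto_const_nhds :
        Tendsto (fun _ : ℕ => qstar) atTop (nhds qstar)) h0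
      simpa using this
    have h1 : F qstar ≤ 1 - α := by
      apply le_of_tendsto ((hFcont.tendsto qstar).comp hseqlo)
      apply Eventually.of_forall
      intro n
      have hpos : (0:ℝ) < ((n:ℝ)+1)⁻¹ := by positivity
      exact le_of_lt (hlt _ (by linarith))
    have h2 : 1 - α ≤ F qstar := by
      apply ge_of_tendsto ((hFcont.tendsto qstar).comp hseqhi)
      apply Eventually.of_forall
      intro n
      have hpos : (0:ℝ) < ((n:ℝ)+1)⁻¹ := by positivity
      exact le_of_lt (hgt _ (by linarith))
    linarith
  -- conclude almost everywhere
  filter_upwards [hconv] with ω hω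
  have hcauchy : CauchySeq (fun n => ∑ t ∈ Finset.range n, c t ω) := by
    have : (fun n => ∑ t ∈ Finset.range n, c t ω) = fun n => M n ω := by
      funext n; simp [hMdef]
    rw [this]
    exact hω.cauchySeq
  have hqconv : Tendsto (fun n => q (n+1) ω) atTop (nhds qstar) := by
    have hhC : ∀ y : ℝ, |1 - α - F y| ≤ 1 := by
      intro y
      have := hF0 y; have := hF1 y
      rw [abs_le]; constructor <;> linarith
    have hsign : ∀ ε : ℝ, 0 < ε → ∃ δ : ℝ, 0 < δ ∧
        (∀ y : ℝ, y ≤ qstar - ε → δ ≤ 1 - α - F y) ∧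
        (∀ y : ℝ, qstar + ε ≤ y → 1 - α - F y ≤ -δ) := by
      intro ε hε
      refine ⟨min (1 - α - F (qstar - ε)) (F (qstar + ε) - (1 - α)), ?_, ?_, ?_⟩
      · apply lt_min
        · have := hlt (qstar - ε) (by linarith); linarith
        · have := hgt (qstar + ε) (by linarith); linarith
      · intro y hy
        have hm := hFmono (show y ≤ qstar - ε from hy)
        have := min_le_left (1 - α - F (qstar - ε)) (F (qstar + ε) - (1 - α))
        linarith
      · intro y hy
        have hm := hFmono (show qstar + ε ≤ y from hy)
        have := min_le_right (1 - α - F (qstar - ε)) (F (qstar + ε) - (1 - α))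
        linarith
    have hxrec : ∀ n : ℕ, q (n+1+1) ω = q (n+1) ω + η (n+1) * (1 - α - F (q (n+1) ω)) + c n ω := by
      intro n
      have hr := hrec (n+1) (by omega) ω
      simp only [hcdef, hξdef]
      rw [hr]
      ring
    exact det_conv_s7 (fun n => q (n+1) ω) (fun n => η (n+1)) (fun n => c n ω)
      (fun y => 1 - α - F y) qstar 1 (by norm_num) hhC
      (fun n => hη_nonneg (n+1) (by omega)) ha0 hadiv hcauchy hsign hxrec
  have hFconv : Tendsto (fun n => F (q (n+1) ω)) atTop (nhds (1 - α)) := by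
    have := (hFcont.tendsto qstar).comp hqconv
    rw [hFq] at this
    exact this
  have := (tendsto_add_atTop_iff_nat (f := fun t => F (q t ω)) (l := nhds (1 - α)) 1).mp
  apply this
  exact hFconv
end

section
/- Suppose the step sizes are constant, η_t ≡ η for some η > 0. Then, almost surely, liminf_{t→∞} Coverage_t = 0 and limsup_{t→∞} Coverage_t = 1. -/
/-!
The threshold `q t` moves by `+η(1-α)` after a miscoverage and by `-ηα` after a coverage, and stays
in `[-ηα, B + η(1-α)]`; hence neither `K` consecutive coverages nor `K` consecutive miscoverages are
possible for `K` large. If the coverage `Fc t (q t)` stayed above `ε` on a stretch of `K` rounds,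
that stretch would be a run of coverages with conditional probability at least `ε ^ K`, so blocks
of length `K` would produce such a run almost surely. Thus the coverage drops below every `ε > 0`
infinitely often, and symmetrically exceeds every `1 - ε`. Since `q t` is `ℱ (t - 1)`-measurable
with finitely many values, `Fc t · (q t ·)` is a version of `P(S t ≤ q t | ℱ (t - 1))`.
-/

open MeasureTheory Filter Set

section Runs

variable {Ω : Type*} {mΩ : MeasurableSpace Ω} {μ : Measure Ω} {ℱ : Filtration ℕ mΩ}
  {bad X : ℕ → Set Ω} {ε : ℝ}

/-- `ω ∈ runUntil bad X a k`: during the `k` steps from time `a`, `X` occurs at every step until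
`bad` occurs, if it does. -/
def runUntil (bad X : ℕ → Set Ω) : ℕ → ℕ → Set Ω
  | _, 0 => univ
  | a, k + 1 => bad a ∪ (X a ∩ runUntil bad X (a + 1) k)

theorem runUntil_subset :
    ∀ k a, runUntil bad X a k ⊆ {ω | (∃ i < k, ω ∈ bad (a + i)) ∨ ∀ i < k, ω ∈ X (a + i)}
  | 0, _ => fun _ _ => Or.inr fun _ hi => absurd hi (Nat.not_lt_zero _)
  | k + 1, a => by
    rintro ω (hbad | ⟨hX, hrest⟩)
    · exact Or.inl ⟨0, k.succ_pos, hbad⟩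
    · rcases runUntil_subset k (a + 1) hrest with ⟨i, hi, hω⟩ | hall
      · exact Or.inl ⟨i + 1, by omega, by rwa [← add_assoc, add_right_comm]⟩
      · refine Or.inr fun i hi => ?_
        rcases i with _ | i
        · exact hX
        · simpa only [← add_assoc, add_right_comm a 1 i] using hall i (by omega)

theorem measurableSet_runUntil (hbad : ∀ a, MeasurableSet[ℱ a] (bad (a + 1)))
    (hX : ∀ a, MeasurableSet[ℱ (a + 1)] (X (a + 1))) :
    ∀ k a, MeasurableSet[ℱ (a + k)] (runUntil bad X (a + 1) k)
  | 0, _ => MeasurableSet.univ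
  | k + 1, a => by
    have hrest := measurableSet_runUntil hbad hX k (a + 1)
    rw [add_right_comm] at hrest
    exact (ℱ.mono (by omega) _ (hbad a)).union ((ℱ.mono (by omega) _ (hX a)).inter hrest)

theorem pow_mul_measureReal_le_runUntil_inter [IsFiniteMeasure μ]
    (hbad : ∀ a, MeasurableSet[ℱ a] (bad (a + 1)))
    (hX : ∀ a, MeasurableSet[ℱ (a + 1)] (X (a + 1))) (hε0 : 0 ≤ ε) (hε1 : ε ≤ 1)
    (hstep : ∀ a A, MeasurableSet[ℱ a] A → A ⊆ (bad (a + 1))ᶜ →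
      ε * μ.real A ≤ μ.real (X (a + 1) ∩ A)) :
    ∀ k a A, MeasurableSet[ℱ a] A →
      ε ^ k * μ.real A ≤ μ.real (runUntil bad X (a + 1) k ∩ A)
  | 0, _, _, _ => by simp [runUntil]
  | k + 1, a, A, hA => by
    set A' := A \ bad (a + 1)
    have hA' : MeasurableSet[ℱ a] A' := hA.diff (hbad a)
    have hXA' : MeasurableSet[ℱ (a + 1)] (X (a + 1) ∩ A') :=
      (hX a).inter (ℱ.mono a.le_succ _ hA')
    have hrun : ε ^ (k + 1) * μ.real A' ≤ μ.real (runUntil bad X (a + 2) k ∩ (X (a + 1) ∩ A')) :=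
      calc ε ^ (k + 1) * μ.real A' = ε ^ k * (ε * μ.real A') := by ring
        _ ≤ ε ^ k * μ.real (X (a + 1) ∩ A') := by
          gcongr
          exact hstep a A' hA' fun ω hω => hω.2
        _ ≤ _ := pow_mul_measureReal_le_runUntil_inter hbad hX hε0 hε1 hstep k (a + 1) _ hXA'
    have hdisj : Disjoint (A ∩ bad (a + 1)) (runUntil bad X (a + 2) k ∩ (X (a + 1) ∩ A')) :=
      disjoint_left.2 fun _ h h' => h'.2.2.2 h.2
    calc ε ^ (k + 1) * μ.real A
        = ε ^ (k + 1) * μ.real (A ∩ bad (a + 1)) + ε ^ (k + 1) * μ.real A' := by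
          rw [← mul_add, measureReal_inter_add_sdiff (ℱ.le _ _ (hbad a))]
      _ ≤ μ.real (A ∩ bad (a + 1)) + μ.real (runUntil bad X (a + 2) k ∩ (X (a + 1) ∩ A')) :=
          add_le_add (mul_le_of_le_one_left measureReal_nonneg (pow_le_one₀ hε0 hε1)) hrun
      _ = μ.real (A ∩ bad (a + 1) ∪ runUntil bad X (a + 2) k ∩ (X (a + 1) ∩ A')) :=
          (measureReal_union hdisj ((ℱ.le _ _ (measurableSet_runUntil hbad hX k (a + 1))).inter
            (ℱ.le _ _ hXA'))).symm
      _ ≤ μ.real (runUntil bad X (a + 1) (k + 1) ∩ A) := by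
          refine measureReal_mono ?_
          rintro ω (⟨hA, hb⟩ | ⟨hr, hx, hA, -⟩)
          exacts [⟨Or.inl hb, hA⟩, ⟨Or.inr ⟨hx, hr⟩, hA⟩]

/-- None of `G 0, …, G (n - 1)` occurs with probability at most `(1 - δ) ^ n`. -/
theorem ae_exists_mem_of_mul_measureReal_le [IsProbabilityMeasure μ] {τ : ℕ → ℕ}
    (hτ : Monotone τ) {G : ℕ → Set Ω} (hG : ∀ n, MeasurableSet[ℱ (τ (n + 1))] (G n)) {δ : ℝ}
    (hδ : 0 < δ) (h : ∀ n A, MeasurableSet[ℱ (τ n)] A → δ * μ.real A ≤ μ.real (G n ∩ A)) :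
    ∀ᵐ ω ∂μ, ∃ n, ω ∈ G n := by
  set H : ℕ → Set Ω := fun n => ⋂ j ∈ Finset.range n, (G j)ᶜ
  have hH : ∀ n, MeasurableSet[ℱ (τ n)] (H n) := fun n =>
    Finset.measurableSet_biInter _ fun j hj =>
      (ℱ.mono (hτ (Finset.mem_range.1 hj)) _ (hG j)).compl
  have hδ1 : δ ≤ 1 := by
    simpa using (h 0 univ MeasurableSet.univ).trans measureReal_le_one
  have hdecay : ∀ n, μ.real (H n) ≤ (1 - δ) ^ n := by
    intro n
    induction n with
    | zero => simp [H]
    | succ n ih =>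
      have hsplit := measureReal_inter_add_sdiff (μ := μ) (s := H n) (ℱ.le _ _ (hG n))
      have hsucc : H (n + 1) = H n \ G n := by
        simp only [H, Finset.range_add_one, Finset.set_biInter_insert, sdiff_eq, inter_comm]
      have hG_n := h n (H n) (hH n)
      rw [inter_comm] at hG_n
      rw [hsucc, pow_succ]
      nlinarith [measureReal_nonneg (μ := μ) (s := H n)]
  have hnull : μ (⋂ n, (G n)ᶜ) = 0 := by
    refine (measureReal_eq_zero_iff).1 (le_antisymm ?_ measureReal_nonneg)
    refine ge_of_tendsto' (tendsto_pow_atTop_nhds_zero_of_lt_one (by linarith) (by linarith))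
      fun n => (measureReal_mono fun ω hω => ?_).trans (hdecay n)
    exact mem_biInter fun j _ => mem_iInter.1 hω j
  filter_upwards [measure_eq_zero_iff_ae_notMem.1 hnull] with ω hω
  simpa using hω

theorem ae_frequently_mem_or_runUntil [IsProbabilityMeasure μ]
    (hbad : ∀ a, MeasurableSet[ℱ a] (bad (a + 1)))
    (hX : ∀ a, MeasurableSet[ℱ (a + 1)] (X (a + 1))) (hε0 : 0 < ε) (hε1 : ε ≤ 1)
    (hstep : ∀ a A, MeasurableSet[ℱ a] A → A ⊆ (bad (a + 1))ᶜ →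
      ε * μ.real A ≤ μ.real (X (a + 1) ∩ A)) (K : ℕ) :
    ∀ᵐ ω ∂μ, ∃ᶠ t in atTop, ω ∈ bad t ∨ ∀ i < K, ω ∈ X (t + i) := by
  simp_rw [frequently_atTop]
  refine ae_all_iff.2 fun T => ?_
  have hblock := ae_exists_mem_of_mul_measureReal_le (μ := μ) (τ := fun n => T + n * K)
    (G := fun n => runUntil bad X (T + n * K + 1) K) (δ := ε ^ K)
    (fun _ _ hmn => by dsimp only; gcongr)
    (fun n => by
      have hrun := measurableSet_runUntil hbad hX K (T + n * K)
      rwa [add_assoc, ← Nat.succ_mul] at hrun)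
    (pow_pos hε0 K)
    (fun n => pow_mul_measureReal_le_runUntil_inter hbad hX hε0.le hε1 hstep K (T + n * K))
  filter_upwards [hblock] with ω ⟨n, hn⟩
  rcases runUntil_subset K _ hn with ⟨i, -, hi⟩ | hall
  · exact ⟨_, by omega, Or.inl hi⟩
  · exact ⟨_, by omega, Or.inr hall⟩

end Runs

section ConditionalProbability

variable {Ω : Type*} {mΩ : MeasurableSpace Ω} {μ : Measure Ω} {ε : ℝ}

theorem integrable_indicator_one [IsFiniteMeasure μ] {s : Set Ω} (hs : MeasurableSet s) :
    Integrable (s.indicator (1 : Ω → ℝ)) μ :=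
  (integrable_indicator_iff hs).2 (integrable_const 1).integrableOn

theorem measurable_apply_of_countable_range {β γ : Type*} {m : MeasurableSpace Ω}
    [MeasurableSpace β] [MeasurableSingletonClass β] [MeasurableSpace γ] {F : Ω → β → γ}
    (hF : ∀ r, Measurable (F · r)) {Z : Ω → β} (hZ : Measurable Z) (hZc : (range Z).Countable) :
    Measurable fun ω => F ω (Z ω) := by
  have : Countable (range Z) := hZc.to_subtype
  have hF' : Measurable fun x : Ω × range Z => F x.1 x.2 :=
    measurable_from_prod_countable_left fun r => hF r
  exact hF'.comp (measurable_id.prodMk hZ.rangeFactorization)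

theorem ae_eq_condExp_indicator_le_of_finite_range [IsFiniteMeasure μ] {m : MeasurableSpace Ω}
    (hm : m ≤ mΩ) {Y Z : Ω → ℝ} (hY : Measurable[mΩ] Y) (hZ : Measurable[m] Z)
    (hZf : (range Z).Finite) {F : Ω → ℝ → ℝ}
    (hF : ∀ r, (F · r) =ᵐ[μ] μ[{ω | Y ω ≤ r}.indicator 1 | m]) :
    (fun ω => F ω (Z ω)) =ᵐ[μ] μ[{ω | Y ω ≤ Z ω}.indicator 1 | m] := by
  classical
  set V := hZf.toFinset
  have hint : ∀ r, Integrable ({ω | Y ω ≤ r}.indicator (1 : Ω → ℝ)) μ := fun r =>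
    integrable_indicator_one (measurableSet_le hY measurable_const)
  have hlevel : ∀ v, MeasurableSet[m] {ω | Z ω = v} := fun v => hZ (measurableSet_singleton v)
  -- split along the finitely many `m`-measurable level sets of `Z`, on which `Z` is constant
  have hsplit : {ω | Y ω ≤ Z ω}.indicator (1 : Ω → ℝ) =
      ∑ v ∈ V, {ω | Z ω = v}.indicator ({ω | Y ω ≤ v}.indicator 1) := by
    ext ω
    rw [Finset.sum_apply, Finset.sum_eq_single (Z ω)]
    · simp [indicator]
    · intro v _ hv
      simp [indicator, Ne.symm hv]
    · exact fun h => absurd (hZf.mem_toFinset.2 (mem_range_self ω)) h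
  rw [hsplit]
  filter_upwards [condExp_finsetSum (fun v _ => (hint v).indicator (hm _ (hlevel v))) m,
    (Finset.eventually_all V).2 fun v _ => condExp_indicator (hint v) (hlevel v),
    (Finset.eventually_all V).2 fun v _ => hF v] with ω hsum hpiece hFv
  rw [hsum, Finset.sum_apply, Finset.sum_eq_single (Z ω)]
  · simp [indicator, hpiece (Z ω) (hZf.mem_toFinset.2 (mem_range_self ω)),
      hFv (Z ω) (hZf.mem_toFinset.2 (mem_range_self ω))]
  · intro v hv hne
    rw [hpiece v hv]
    simp [indicator, Ne.symm hne]
  · exact fun h => absurd (hZf.mem_toFinset.2 (mem_range_self ω)) h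

theorem condExp_indicator_compl_ae_eq [IsFiniteMeasure μ] {m : MeasurableSpace Ω} (hm : m ≤ mΩ)
    {s : Set Ω} (hs : MeasurableSet[mΩ] s) :
    μ[sᶜ.indicator 1 | m] =ᵐ[μ] (1 : Ω → ℝ) - μ[s.indicator 1 | m] := by
  rw [indicator_compl]
  filter_upwards [condExp_sub (f := (1 : Ω → ℝ)) (integrable_const 1) (integrable_indicator_one hs)
    m] with ω hω
  rw [hω, Pi.sub_apply, Pi.sub_apply, Pi.one_def, condExp_const hm]

theorem mul_measureReal_le_of_ae_eq_condExp_indicator [IsFiniteMeasure μ]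
    {m : MeasurableSpace Ω} (hm : m ≤ mΩ) {E A : Set Ω} (hE : MeasurableSet[mΩ] E)
    (hA : MeasurableSet[m] A) {p : Ω → ℝ} (hpE : p =ᵐ[μ] μ[E.indicator 1 | m])
    (hεp : ∀ ω ∈ A, ε ≤ p ω) :
    ε * μ.real A ≤ μ.real (E ∩ A) :=
  calc ε * μ.real A ≤ ∫ ω in A, p ω ∂μ :=
        setIntegral_ge_of_const_le_real (hm A hA) (measure_ne_top μ A) hεp
          (integrable_condExp.congr hpE.symm).integrableOn
    _ = ∫ ω in A, (μ[E.indicator 1 | m]) ω ∂μ := integral_congr_ae (ae_restrict_of_ae hpE)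
    _ = μ.real (E ∩ A) := by
        rw [setIntegral_condExp hm (integrable_indicator_one hE) hA, integral_indicator_one hE,
          measureReal_restrict_apply hE]

variable {ℱ : Filtration ℕ mΩ}

theorem ae_forall_frequently_lt_of_ae_eq_condExp_indicator [IsProbabilityMeasure μ]
    {E : ℕ → Set Ω} {p : ℕ → Ω → ℝ} (hE : ∀ a, MeasurableSet[ℱ (a + 1)] (E (a + 1)))
    (hp : ∀ a, Measurable[ℱ a] (p (a + 1)))
    (hpE : ∀ a, p (a + 1) =ᵐ[μ] μ[(E (a + 1)).indicator 1 | ℱ a]) {K : ℕ}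
    (hK : ∀ a ω, ¬ ∀ i < K, ω ∈ E (a + 1 + i)) :
    ∀ᵐ ω ∂μ, ∀ ε > 0, ∃ᶠ t in atTop, p t ω < ε := by
  have hfreq : ∀ n : ℕ, ∀ᵐ ω ∂μ, ∃ᶠ t in atTop, p t ω < 1 / (n + 1) := by
    intro n
    have hε : (0 : ℝ) < 1 / (n + 1) := Nat.one_div_pos_of_nat
    have hε1 : 1 / ((n : ℝ) + 1) ≤ 1 := div_le_one_of_le₀ (by simp) (by positivity)
    filter_upwards [ae_frequently_mem_or_runUntil (bad := fun t => {ω | p t ω < 1 / (n + 1)})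
      (fun a => measurableSet_lt (hp a) measurable_const) hE hε hε1
      (fun a A hA hAbad => mul_measureReal_le_of_ae_eq_condExp_indicator (ℱ.le a)
        (ℱ.le _ _ (hE a)) hA (hpE a) fun ω hω => not_lt.1 (hAbad hω)) K] with ω hω
    refine (hω.and_eventually (eventually_ge_atTop 1)).mono ?_
    rintro t ⟨hbad | hrun, ht⟩
    · exact hbad
    · obtain ⟨a, rfl⟩ := Nat.exists_eq_add_of_le' ht
      exact absurd hrun (hK a ω)
  filter_upwards [ae_all_iff.2 hfreq] with ω hω ε hε
  obtain ⟨n, hn⟩ := exists_nat_one_div_lt hε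
  exact (hω n).mono fun t ht => ht.trans hn

theorem ae_forall_frequently_one_sub_lt_of_ae_eq_condExp_indicator [IsProbabilityMeasure μ]
    {E : ℕ → Set Ω} {p : ℕ → Ω → ℝ} (hE : ∀ a, MeasurableSet[ℱ (a + 1)] (E (a + 1)))
    (hp : ∀ a, Measurable[ℱ a] (p (a + 1)))
    (hpE : ∀ a, p (a + 1) =ᵐ[μ] μ[(E (a + 1)).indicator 1 | ℱ a]) {K : ℕ}
    (hK : ∀ a ω, ¬ ∀ i < K, ω ∉ E (a + 1 + i)) :
    ∀ᵐ ω ∂μ, ∀ ε > 0, ∃ᶠ t in atTop, 1 - p t ω < ε :=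
  ae_forall_frequently_lt_of_ae_eq_condExp_indicator (E := fun t => (E t)ᶜ)
    (p := fun t ω => 1 - p t ω) (fun a => (hE a).compl) (fun a => measurable_const.sub (hp a))
    (fun a => ((hpE a).fun_comp (1 - ·)).trans
      (condExp_indicator_compl_ae_eq (ℱ.le a) (ℱ.le _ _ (hE a))).symm) hK

end ConditionalProbability

section LimInf

variable {ι : Type*} {l : Filter ι} [l.NeBot] {u : ι → ℝ}

theorem liminf_eq_zero_of_frequently_lt (hu : ∀ᶠ t in l, u t ∈ Icc 0 1)
    (h : ∀ ε > 0, ∃ᶠ t in l, u t < ε) : liminf u l = 0 := by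
  have hbdd : IsBoundedUnder (· ≥ ·) l u := isBoundedUnder_of_eventually_ge (hu.mono fun _ h => h.1)
  have hcobdd : IsCoboundedUnder (· ≥ ·) l u :=
    (isBoundedUnder_of_eventually_le (hu.mono fun _ h => h.2)).isCoboundedUnder_ge
  refine le_antisymm (le_of_forall_pos_le_add fun ε hε => ?_)
    (le_liminf_of_le hcobdd (hu.mono fun _ h => h.1))
  rw [zero_add]
  exact liminf_le_of_frequently_le ((h ε hε).mono fun _ => le_of_lt) hbdd

theorem limsup_eq_one_of_frequently_lt (hu : ∀ᶠ t in l, u t ∈ Icc 0 1)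
    (h : ∀ ε > 0, ∃ᶠ t in l, 1 - u t < ε) : limsup u l = 1 := by
  have hbdd : IsBoundedUnder (· ≤ ·) l u := isBoundedUnder_of_eventually_le (hu.mono fun _ h => h.2)
  have hcobdd : IsCoboundedUnder (· ≤ ·) l u :=
    (isBoundedUnder_of_eventually_ge (hu.mono fun _ h => h.1)).isCoboundedUnder_le
  refine le_antisymm (limsup_le_of_le hcobdd (hu.mono fun _ h => h.2))
    (le_of_forall_sub_le fun ε hε => ?_)
  exact le_limsup_of_frequently_le ((h ε hε).mono fun _ h => by linarith) hbdd

end LimInf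

section OnlineConformal

variable {Ω : Type*} {S q : ℕ → Ω → ℝ} {α η B : ℝ}

def IsOnlineConformalUpdate (S : ℕ → Ω → ℝ) (α η : ℝ) (q : ℕ → Ω → ℝ) : Prop :=
  ∀ t, 1 ≤ t → ∀ ω, q (t + 1) ω = q t ω + η * ((if q t ω < S t ω then (1 : ℝ) else 0) - α)

namespace IsOnlineConformalUpdate

theorem mem_Icc (hq : IsOnlineConformalUpdate S α η q) (hS : ∀ t, 1 ≤ t → ∀ ω, S t ω ∈ Icc 0 B)
    (h1 : ∀ ω, q 1 ω ∈ Icc 0 B) (hη : 0 ≤ η) (hα : α ∈ Icc 0 1) :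
    ∀ t, 1 ≤ t → ∀ ω, q t ω ∈ Icc (-(η * α)) (B + η * (1 - α)) := by
  have hηα : 0 ≤ η * α := mul_nonneg hη hα.1
  have hηα' : 0 ≤ η * (1 - α) := mul_nonneg hη (sub_nonneg.2 hα.2)
  refine Nat.le_induction (fun ω => ?_) (fun t ht ih ω => ?_)
  · exact ⟨by linarith [(h1 ω).1], by linarith [(h1 ω).2]⟩
  · obtain ⟨hq0, hqB⟩ := ih ω
    obtain ⟨hS0, hSB⟩ := hS t ht ω
    rw [hq t ht ω]
    split_ifs with h <;> constructor <;> nlinarith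

theorem eq_sub_of_forall_le (hq : IsOnlineConformalUpdate S α η q) {t : ℕ} (ht : 1 ≤ t)
    {ω : Ω} : ∀ {k : ℕ}, (∀ i < k, S (t + i) ω ≤ q (t + i) ω) →
      q (t + k) ω = q t ω - k * (η * α)
  | 0, _ => by simp
  | k + 1, hrun => by
    rw [← add_assoc, hq _ (by omega) ω, if_neg (not_lt.2 (hrun k k.lt_succ_self)),
      eq_sub_of_forall_le hq ht fun i hi => hrun i (by omega)]
    push_cast
    ring

theorem eq_add_of_forall_lt (hq : IsOnlineConformalUpdate S α η q) {t : ℕ} (ht : 1 ≤ t)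
    {ω : Ω} : ∀ {k : ℕ}, (∀ i < k, q (t + i) ω < S (t + i) ω) →
      q (t + k) ω = q t ω + k * (η * (1 - α))
  | 0, _ => by simp
  | k + 1, hrun => by
    rw [← add_assoc, hq _ (by omega) ω, if_pos (hrun k k.lt_succ_self),
      eq_add_of_forall_lt hq ht fun i hi => hrun i (by omega)]
    push_cast
    ring

theorem exists_not_forall_le (hq : IsOnlineConformalUpdate S α η q)
    (hbdd : ∀ t, 1 ≤ t → ∀ ω, q t ω ∈ Icc (-(η * α)) (B + η * (1 - α))) (hηα : 0 < η * α) :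
    ∃ K : ℕ, ∀ t, 1 ≤ t → ∀ ω, ¬ ∀ i < K, S (t + i) ω ≤ q (t + i) ω := by
  obtain ⟨K, hK⟩ := exists_nat_gt ((B + η) / (η * α))
  refine ⟨K, fun t ht ω hrun => ?_⟩
  have hdrop := hq.eq_sub_of_forall_le ht hrun
  have hstart := (hbdd t ht ω).2
  have hend := (hbdd (t + K) (by omega) ω).1
  rw [div_lt_iff₀ hηα] at hK
  linarith

theorem exists_not_forall_lt (hq : IsOnlineConformalUpdate S α η q)
    (hbdd : ∀ t, 1 ≤ t → ∀ ω, q t ω ∈ Icc (-(η * α)) (B + η * (1 - α)))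
    (hηα : 0 < η * (1 - α)) :
    ∃ K : ℕ, ∀ t, 1 ≤ t → ∀ ω, ¬ ∀ i < K, q (t + i) ω < S (t + i) ω := by
  obtain ⟨K, hK⟩ := exists_nat_gt ((B + η) / (η * (1 - α)))
  refine ⟨K, fun t ht ω hrun => ?_⟩
  have hrise := hq.eq_add_of_forall_lt ht hrun
  have hstart := (hbdd t ht ω).1
  have hend := (hbdd (t + K) (by omega) ω).2
  rw [div_lt_iff₀ hηα] at hK
  linarith

theorem finite_range (hq : IsOnlineConformalUpdate S α η q) (h1 : (range (q 1)).Finite) :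
    ∀ t, 1 ≤ t → (range (q t)).Finite := by
  refine Nat.le_induction h1 fun t ht ih => ?_
  refine ((ih.image (· + η * (1 - α))).union (ih.image (· - η * α))).subset ?_
  rintro _ ⟨ω, rfl⟩
  rw [hq t ht ω]
  split_ifs
  · exact Or.inl ⟨q t ω, mem_range_self ω, by ring⟩
  · exact Or.inr ⟨q t ω, mem_range_self ω, by ring⟩

theorem measurable {mΩ : MeasurableSpace Ω} (hq : IsOnlineConformalUpdate S α η q)
    {ℱ : Filtration ℕ mΩ} (hS : ∀ t, 1 ≤ t → Measurable[ℱ t] (S t))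
    (h1 : Measurable[ℱ 0] (q 1)) : ∀ a, Measurable[ℱ a] (q (a + 1))
  | 0 => h1
  | a + 1 => by
    have hqa : Measurable[ℱ (a + 1)] (q (a + 1)) :=
      (measurable hq hS h1 a).mono (ℱ.mono a.le_succ) le_rfl
    have hset : MeasurableSet[ℱ (a + 1)] {ω | q (a + 1) ω < S (a + 1) ω} :=
      measurableSet_lt hqa (hS _ le_add_self)
    rw [show q (a + 1 + 1) = _ from funext (hq (a + 1) le_add_self)]
    exact hqa.add (((Measurable.ite hset measurable_const measurable_const).sub
      measurable_const).const_mul η)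

end IsOnlineConformalUpdate

end OnlineConformal

theorem coverage_liminf_zero_limsup_one_general
    {Ω : Type*} {mΩ : MeasurableSpace Ω} (μ : Measure Ω) [IsProbabilityMeasure μ]
    (ℱ : Filtration ℕ mΩ)
    (α B : ℝ) (hα : α ∈ Set.Ioo (0 : ℝ) 1)
    (S : ℕ → Ω → ℝ)
    (hSrange : ∀ t, 1 ≤ t → ∀ ω, S t ω ∈ Set.Icc 0 B)
    (hSmeas : ∀ t, 1 ≤ t → Measurable[ℱ t] (S t))
    (Fc : ℕ → Ω → ℝ → ℝ)
    (hFc01 : ∀ t, 1 ≤ t → ∀ ω r, Fc t ω r ∈ Set.Icc (0 : ℝ) 1)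
    (hFc_meas : ∀ t, 1 ≤ t → ∀ r, Measurable[ℱ (t - 1)] (fun ω => Fc t ω r))
    (hFc_cond : ∀ t, 1 ≤ t → ∀ r : ℝ,
      (fun ω => Fc t ω r) =ᵐ[μ] μ[fun ω => if S t ω ≤ r then (1 : ℝ) else 0|ℱ (t - 1)])
    (η : ℝ) (hη : 0 < η)
    (q1 : ℝ) (hq1 : q1 ∈ Set.Icc 0 B)
    (q : ℕ → Ω → ℝ) (hq_init : ∀ ω, q 1 ω = q1)
    (hrec : ∀ t, 1 ≤ t → ∀ ω,
      q (t + 1) ω = q t ω + η * ((if q t ω < S t ω then (1 : ℝ) else 0) - α)) :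
    ∀ᵐ ω ∂μ, liminf (fun t => Fc t ω (q t ω)) atTop = 0 ∧
      limsup (fun t => Fc t ω (q t ω)) atTop = 1 := by
  have hq : IsOnlineConformalUpdate S α η q := hrec
  have hqm := hq.measurable hSmeas (by rw [funext hq_init]; exact measurable_const)
  have hfin := hq.finite_range ((Set.finite_singleton q1).subset (Set.range_subset_iff.2 hq_init))
  have hbdd := hq.mem_Icc hSrange (fun ω => hq_init ω ▸ hq1) hη.le (Set.Ioo_subset_Icc_self hα)
  obtain ⟨K₁, hK₁⟩ := hq.exists_not_forall_le hbdd (mul_pos hη hα.1)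
  obtain ⟨K₂, hK₂⟩ := hq.exists_not_forall_lt hbdd (mul_pos hη (sub_pos.2 hα.2))
  set E : ℕ → Set Ω := fun t => {ω | S t ω ≤ q t ω}
  have hE : ∀ a, MeasurableSet[ℱ (a + 1)] (E (a + 1)) := fun a =>
    measurableSet_le (hSmeas _ le_add_self) ((hqm a).mono (ℱ.mono a.le_succ) le_rfl)
  have hcm : ∀ a, Measurable[ℱ a] fun ω => Fc (a + 1) ω (q (a + 1) ω) := fun a =>
    measurable_apply_of_countable_range (hFc_meas _ le_add_self) (hqm a)
      (hfin _ le_add_self).countable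
  have hcE : ∀ a, (fun ω => Fc (a + 1) ω (q (a + 1) ω)) =ᵐ[μ] μ[(E (a + 1)).indicator 1 | ℱ a] :=
    fun a => ae_eq_condExp_indicator_le_of_finite_range (ℱ.le a)
      ((hSmeas _ le_add_self).mono (ℱ.le _) le_rfl) (hqm a) (hfin _ le_add_self)
      (hFc_cond (a + 1) le_add_self)
  filter_upwards [ae_forall_frequently_lt_of_ae_eq_condExp_indicator
      (p := fun t ω => Fc t ω (q t ω)) hE hcm hcE fun a ω => hK₁ (a + 1) le_add_self ω,
    ae_forall_frequently_one_sub_lt_of_ae_eq_condExp_indicator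
      (p := fun t ω => Fc t ω (q t ω)) hE hcm hcE
      fun a ω hrun => hK₂ (a + 1) le_add_self ω fun i hi => not_le.1 (hrun i hi)]
    with ω hlow hhigh
  have hc01 : ∀ᶠ t in atTop, Fc t ω (q t ω) ∈ Icc 0 1 :=
    eventually_atTop.2 ⟨1, fun t ht => hFc01 t ht ω _⟩
  exact ⟨liminf_eq_zero_of_frequently_lt hc01 hlow, limsup_eq_one_of_frequently_lt hc01 hhigh⟩

/-- **Constant step size: instantaneous coverage oscillates (online-trained scores).**
Fix `α ∈ (0,1)` and `B > 0`. Let `(ℱ t)` be a filtration, `(S t)_{t ≥ 1}` scores in `[0,B]`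
with `S t` being `ℱ t`-measurable, and `Fc t ω` a regular conditional CDF of `S t` given
`ℱ (t-1)`. With constant step size `η > 0`, deterministic `q 1 = q1 ∈ [0,B]`, and update
`q (t+1) = q t + η * (1{S t > q t} - α)`, almost surely
`liminf_t Coverage_t = 0` and `limsup_t Coverage_t = 1`, where
`Coverage_t ω = Fc t ω (q t ω)`. -/
theorem coverage_liminf_zero_limsup_one
    {Ω : Type*} {mΩ : MeasurableSpace Ω} (μ : Measure Ω) [IsProbabilityMeasure μ]
    (ℱ : Filtration ℕ mΩ)
    (α B : ℝ) (hα : α ∈ Set.Ioo (0 : ℝ) 1) (hB : 0 < B)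
    (S : ℕ → Ω → ℝ)
    (hSrange : ∀ t, 1 ≤ t → ∀ ω, S t ω ∈ Set.Icc 0 B)
    (hSmeas : ∀ t, 1 ≤ t → Measurable[ℱ t] (S t))
    (Fc : ℕ → Ω → ℝ → ℝ)
    (hFc01 : ∀ t, 1 ≤ t → ∀ ω r, Fc t ω r ∈ Set.Icc (0 : ℝ) 1)
    (hFc_meas : ∀ t, 1 ≤ t → ∀ r, Measurable[ℱ (t - 1)] (fun ω => Fc t ω r))
    (hFc_cond : ∀ t, 1 ≤ t → ∀ r : ℝ,
      (fun ω => Fc t ω r) =ᵐ[μ] μ[fun ω => if S t ω ≤ r then (1 : ℝ) else 0|ℱ (t - 1)])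
    (hFc_cdf : ∀ t, 1 ≤ t → ∀ᵐ ω ∂μ,
      Monotone (Fc t ω) ∧ (∀ r, ContinuousWithinAt (Fc t ω) (Set.Ici r) r) ∧
      (∀ r, r < 0 → Fc t ω r = 0) ∧ (∀ r, B ≤ r → Fc t ω r = 1))
    (η : ℝ) (hη : 0 < η)
    (q1 : ℝ) (hq1 : q1 ∈ Set.Icc 0 B)
    (q : ℕ → Ω → ℝ) (hq_init : ∀ ω, q 1 ω = q1)
    (hrec : ∀ t, 1 ≤ t → ∀ ω,
      q (t + 1) ω = q t ω + η * ((if q t ω < S t ω then (1 : ℝ) else 0) - α)) :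
    ∀ᵐ ω ∂μ, liminf (fun t => Fc t ω (q t ω)) atTop = 0 ∧
      limsup (fun t => Fc t ω (q t ω)) atTop = 1 :=
  coverage_liminf_zero_limsup_one_general μ ℱ α B hα S hSrange hSmeas Fc hFc01 hFc_meas hFc_cond η
    hη q1 hq1 q hq_init hrec
end

section
/- Suppose the step sizes η_t are deterministic and nonnegative with Σ_{t=1}^∞ η_t = ∞ and Σ_{t=1}^∞ η_t² < ∞. Let F : ℝ → [0,1] be a fixed nondecreasing right-continuous function with F(q) = 0 for q < 0 and F(q) = 1 for q ≥ B, and suppose q* ∈ [0,B] is the unique (1−α)-quantile of F, i.e., F(q) < 1−α for all q < q* and F(q) > 1−α for all q > q*. Then for P-almost every ω the following implication holds: if F_t(ω, q) → F(q) as t → ∞ for every q ∈ ℝ at which F is continuous, then q_t(ω) → q*. -/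
open MeasureTheory Filter

namespace OnlineConformal

variable {Ω' : Type*}

/-- Dyadic upper approximation of a real-valued function. -/
noncomputable def dyad (X : Ω' → ℝ) (n : ℕ) (ω : Ω') : ℝ := ((⌊X ω * 2 ^ n⌋ : ℝ) + 1) / 2 ^ n

lemma dyad_gt {X : Ω' → ℝ} (n : ℕ) (ω : Ω') : X ω < dyad X n ω := by
  have h2 : (0:ℝ) < 2 ^ n := by positivity
  rw [dyad, lt_div_iff₀ h2]
  exact Int.lt_floor_add_one _

lemma dyad_le {X : Ω' → ℝ} (n : ℕ) (ω : Ω') : dyad X n ω ≤ X ω + (1/2) ^ n := by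
  have h2 : (0:ℝ) < 2 ^ n := by positivity
  rw [dyad, div_le_iff₀ h2]
  have h : (⌊X ω * 2 ^ n⌋ : ℝ) ≤ X ω * 2 ^ n := Int.floor_le _
  have hpow : ((1:ℝ)/2) ^ n * 2 ^ n = 1 := by rw [← mul_pow]; norm_num
  nlinarith [h]

lemma tendsto_dyad (X : Ω' → ℝ) (ω : Ω') :
    Tendsto (fun n => dyad X n ω) atTop (nhds (X ω)) := by
  have h1 : Tendsto (fun n : ℕ => X ω + (1/2:ℝ) ^ n) atTop (nhds (X ω + 0)) :=
    tendsto_const_nhds.add (tendsto_pow_atTop_nhds_zero_of_lt_one (by norm_num) (by norm_num))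
  rw [add_zero] at h1
  exact tendsto_of_tendsto_of_tendsto_of_le_of_le tendsto_const_nhds h1
    (fun n => (dyad_gt n ω).le) (fun n => dyad_le n ω)

lemma tendsto_dyad_within (X : Ω' → ℝ) (ω : Ω') :
    Tendsto (fun n => dyad X n ω) atTop (nhdsWithin (X ω) (Set.Ici (X ω))) :=
  tendsto_nhdsWithin_iff.2 ⟨tendsto_dyad X ω, Eventually.of_forall fun n => (dyad_gt n ω).le⟩

lemma measurable_comp_int {m : MeasurableSpace Ω'} {g : Ω' → ℤ} (hg : Measurable[m] g)
    {F : ℤ → Ω' → ℝ} (hF : ∀ k, Measurable[m] (F k)) :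
    Measurable[m] (fun ω => F (g ω) ω) := by
  have : (fun ω => F (g ω) ω) = (fun p : Ω' × ℤ => F p.2 p.1) ∘ (fun ω => (ω, g ω)) := rfl
  rw [this]
  exact (measurable_from_prod_countable_left (fun k => hF k)).comp (measurable_id.prodMk hg)

lemma measurable_floorX {m : MeasurableSpace Ω'} {X : Ω' → ℝ} (hX : Measurable[m] X) (n : ℕ) :
    Measurable[m] (fun ω => ⌊X ω * 2 ^ n⌋) :=
  (hX.mul_const _).floor

lemma measurable_G_dyad {m : MeasurableSpace Ω'} {G : Ω' → ℝ → ℝ}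
    (hG : ∀ r : ℝ, Measurable[m] (fun ω => G ω r)) {X : Ω' → ℝ} (hX : Measurable[m] X) (n : ℕ) :
    Measurable[m] (fun ω => G ω (dyad X n ω)) :=
  measurable_comp_int (measurable_floorX hX n) (fun k => hG ((k + 1) / 2 ^ n))

/-- measurable version of `ω ↦ G ω (X ω)`. -/
noncomputable def gLim (G : Ω' → ℝ → ℝ) (X : Ω' → ℝ) (ω : Ω') : ℝ :=
  liminf (fun n => G ω (dyad X n ω)) atTop

lemma measurable_gLim {m : MeasurableSpace Ω'} {G : Ω' → ℝ → ℝ}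
    (hG : ∀ r : ℝ, Measurable[m] (fun ω => G ω r)) {X : Ω' → ℝ} (hX : Measurable[m] X) :
    Measurable[m] (gLim G X) :=
  Measurable.liminf (fun n => measurable_G_dyad hG hX n)

lemma gLim_eq {G : Ω' → ℝ → ℝ} {X : Ω' → ℝ} {ω : Ω'}
    (h : ContinuousWithinAt (G ω) (Set.Ici (X ω)) (X ω)) :
    gLim G X ω = G ω (X ω) :=
  Tendsto.liminf_eq (h.tendsto.comp (tendsto_dyad_within X ω))

lemma tendsto_G_dyad {G : Ω' → ℝ → ℝ} {X : Ω' → ℝ} {ω : Ω'}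
    (h : ContinuousWithinAt (G ω) (Set.Ici (X ω)) (X ω)) :
    Tendsto (fun n => G ω (dyad X n ω)) atTop (nhds (gLim G X ω)) := by
  rw [gLim_eq h]
  exact h.tendsto.comp (tendsto_dyad_within X ω)

lemma gLim_mem_Icc {G : Ω' → ℝ → ℝ} (hG01 : ∀ ω r, G ω r ∈ Set.Icc (0:ℝ) 1)
    (X : Ω' → ℝ) (ω : Ω') : gLim G X ω ∈ Set.Icc (0:ℝ) 1 := by
  constructor
  · refine le_liminf_of_le ?_ (Eventually.of_forall fun n : ℕ => (hG01 ω (dyad X n ω)).1)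
    exact isCoboundedUnder_ge_of_le atTop (x := 1) (fun n : ℕ => (hG01 ω (dyad X n ω)).2)
  · refine liminf_le_of_frequently_le (Frequently.of_forall fun n : ℕ => (hG01 ω (dyad X n ω)).2) ?_
    exact isBoundedUnder_of ⟨0, fun n : ℕ => (hG01 ω (dyad X n ω)).1⟩

lemma tendsto_ind_dyad {S X : Ω' → ℝ} (ω : Ω') :
    Tendsto (fun n => if S ω ≤ dyad X n ω then (1:ℝ) else 0) atTop
      (nhds (if S ω ≤ X ω then (1:ℝ) else 0)) := by
  by_cases h : S ω ≤ X ω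
  · simp only [if_pos h]
    have : ∀ n, (if S ω ≤ dyad X n ω then (1:ℝ) else 0) = 1 := fun n =>
      if_pos (h.trans (dyad_gt n ω).le)
    simp only [this]; exact tendsto_const_nhds
  · simp only [if_neg h]
    push_neg at h
    have hev : ∀ᶠ n in atTop, (if S ω ≤ dyad X n ω then (1:ℝ) else 0) = 0 := by
      filter_upwards [(tendsto_dyad X ω).eventually_lt_const h] with n hn
      exact if_neg (not_le.2 hn)
    exact Tendsto.congr' (EventuallyEq.symm hev) tendsto_const_nhds



lemma measurable_dyad {m : MeasurableSpace Ω'} {X : Ω' → ℝ} (hX : Measurable[m] X) (n : ℕ) :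
    Measurable[m] (dyad X n) :=
  measurable_comp_int (measurable_floorX hX n)
    (fun k => (measurable_const : Measurable[m] (fun _ : Ω' => ((k : ℝ) + 1) / 2 ^ n)))

lemma integrable_of_bounded {m0 : MeasurableSpace Ω'} {μ : Measure Ω'} [IsFiniteMeasure μ]
    {f : Ω' → ℝ} (hf : AEStronglyMeasurable f μ)
    {C : ℝ} (h : ∀ ω, |f ω| ≤ C) : Integrable f μ :=
  Integrable.mono' (integrable_const C) hf
    (Eventually.of_forall (by simpa [Real.norm_eq_abs] using h))

lemma condexp_randomPoint {m m0 : MeasurableSpace Ω'} (hm : m ≤ m0) {μ : Measure Ω'}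
    [IsProbabilityMeasure μ]
    {S : Ω' → ℝ} (hS : Measurable[m0] S)
    {G : Ω' → ℝ → ℝ} (hG01 : ∀ ω r, G ω r ∈ Set.Icc (0:ℝ) 1)
    (hGmeas : ∀ r : ℝ, Measurable[m] (fun ω => G ω r))
    (hGcond : ∀ r : ℝ, (fun ω => G ω r) =ᵐ[μ] μ[fun ω => if S ω ≤ r then (1:ℝ) else 0 | m])
    {X : Ω' → ℝ} (hX : Measurable[m] X)
    (hGrc : ∀ᵐ ω ∂μ, ContinuousWithinAt (G ω) (Set.Ici (X ω)) (X ω)) :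
    gLim G X =ᵐ[μ] μ[fun ω => if S ω ≤ X ω then (1:ℝ) else 0 | m] := by
  have hXm0 : Measurable[m0] X := hX.mono hm le_rfl
  have hind_meas : ∀ r : ℝ, Measurable[m0] (fun ω => if S ω ≤ r then (1:ℝ) else 0) :=
    fun r => Measurable.ite (measurableSet_le hS measurable_const) measurable_const
      measurable_const
  have hind_bd : ∀ (g : Ω' → ℝ) (ω : Ω'), |if S ω ≤ g ω then (1:ℝ) else 0| ≤ 1 := by
    intro g ω; split <;> norm_num
  have hind_int : ∀ r : ℝ, Integrable (fun ω => if S ω ≤ r then (1:ℝ) else 0) μ :=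
    fun r => integrable_of_bounded (hind_meas r).aestronglyMeasurable
      (fun ω => hind_bd (fun _ => r) ω)
  have key : ∀ (r : ℝ) (A : Set Ω'), MeasurableSet[m] A →
      ∫ ω in A, G ω r ∂μ = ∫ ω in A, (if S ω ≤ r then (1:ℝ) else 0) ∂μ := by
    intro r A hA
    have h1 : ∫ ω in A, G ω r ∂μ
        = ∫ ω in A, (μ[fun ω => if S ω ≤ r then (1:ℝ) else 0|m]) ω ∂μ :=
      setIntegral_congr_ae (hm _ hA) ((hGcond r).mono fun ω h _ => h)
    rw [h1, setIntegral_condExp hm (hind_int r) hA]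
  have hGdyad_meas : ∀ n, Measurable[m] (fun ω => G ω (dyad X n ω)) :=
    measurable_G_dyad hGmeas hX
  have hGbd : ∀ (g : Ω' → ℝ) (ω : Ω'), |G ω (g ω)| ≤ 1 := fun g ω =>
    abs_le.mpr ⟨by linarith [(hG01 ω (g ω)).1], (hG01 ω (g ω)).2⟩
  have hGdyad_int : ∀ n, Integrable (fun ω => G ω (dyad X n ω)) μ := fun n =>
    integrable_of_bounded ((hGdyad_meas n).mono hm le_rfl).aestronglyMeasurable
      (fun ω => hGbd (dyad X n) ω)
  have hinddyad_meas : ∀ n, Measurable[m0] (fun ω => if S ω ≤ dyad X n ω then (1:ℝ) else 0) :=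
    fun n => Measurable.ite (measurableSet_le hS ((measurable_dyad hX n).mono hm le_rfl))
      measurable_const measurable_const
  have hinddyad_int : ∀ n, Integrable (fun ω => if S ω ≤ dyad X n ω then (1:ℝ) else 0) μ :=
    fun n => integrable_of_bounded (hinddyad_meas n).aestronglyMeasurable
      (fun ω => hind_bd (dyad X n) ω)
  have stepn : ∀ (n : ℕ) (A : Set Ω'), MeasurableSet[m] A →
      ∫ ω in A, G ω (dyad X n ω) ∂μ
        = ∫ ω in A, (if S ω ≤ dyad X n ω then (1:ℝ) else 0) ∂μ := by
    intro n A hA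
    set pc : ℤ → Set Ω' := fun k => A ∩ {ω | ⌊X ω * 2 ^ n⌋ = k} with hpc
    have hpcm : ∀ k, MeasurableSet[m] (pc k) := fun k =>
      hA.inter ((measurable_floorX hX n) (measurableSet_singleton k))
    have hpcm0 : ∀ k, MeasurableSet[m0] (pc k) := fun k => hm _ (hpcm k)
    have hdisj : Pairwise (Function.onFun Disjoint pc) := by
      intro i j hij
      refine Set.disjoint_left.2 ?_
      rintro ω ⟨-, hi⟩ ⟨-, hj⟩
      exact hij (hi.symm.trans hj)
    have hunion : (⋃ k, pc k) = A := by
      ext ω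
      simp only [hpc, Set.mem_iUnion, Set.mem_inter_iff, Set.mem_setOf_eq]
      exact ⟨fun ⟨k, h⟩ => h.1, fun h => ⟨_, h, rfl⟩⟩
    have e1 : ∫ ω in A, G ω (dyad X n ω) ∂μ = ∑' k, ∫ ω in pc k, G ω (dyad X n ω) ∂μ := by
      rw [← hunion]
      exact integral_iUnion hpcm0 hdisj (hGdyad_int n).integrableOn
    have e2 : ∫ ω in A, (if S ω ≤ dyad X n ω then (1:ℝ) else 0) ∂μ
        = ∑' k, ∫ ω in pc k, (if S ω ≤ dyad X n ω then (1:ℝ) else 0) ∂μ := by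
      rw [← hunion]
      exact integral_iUnion hpcm0 hdisj (hinddyad_int n).integrableOn
    rw [e1, e2]
    refine tsum_congr fun k => ?_
    have hdy : ∀ ω ∈ pc k, dyad X n ω = ((k : ℝ) + 1) / 2 ^ n := by
      intro ω hω
      have : ⌊X ω * 2 ^ n⌋ = k := hω.2
      rw [dyad, this]
    calc ∫ ω in pc k, G ω (dyad X n ω) ∂μ
        = ∫ ω in pc k, G ω (((k : ℝ) + 1) / 2 ^ n) ∂μ :=
          setIntegral_congr_fun (hpcm0 k) (fun ω hω => by rw [hdy ω hω])
      _ = ∫ ω in pc k, (if S ω ≤ ((k : ℝ) + 1) / 2 ^ n then (1:ℝ) else 0) ∂μ :=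
          key _ _ (hpcm k)
      _ = ∫ ω in pc k, (if S ω ≤ dyad X n ω then (1:ℝ) else 0) ∂μ :=
          setIntegral_congr_fun (hpcm0 k) (fun ω hω => by rw [hdy ω hω])
  have hgLim_meas : Measurable[m] (gLim G X) := measurable_gLim hGmeas hX
  have hgLim_bd : ∀ ω, |gLim G X ω| ≤ 1 := fun ω =>
    abs_le.mpr ⟨by linarith [(gLim_mem_Icc hG01 X ω).1], (gLim_mem_Icc hG01 X ω).2⟩
  have hgLim_int : Integrable (gLim G X) μ :=
    integrable_of_bounded (hgLim_meas.mono hm le_rfl).aestronglyMeasurable hgLim_bd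
  have hindX_int : Integrable (fun ω => if S ω ≤ X ω then (1:ℝ) else 0) μ :=
    integrable_of_bounded (Measurable.ite (measurableSet_le hS hXm0) measurable_const
      measurable_const).aestronglyMeasurable (fun ω => hind_bd X ω)
  refine ae_eq_condExp_of_forall_setIntegral_eq hm hindX_int
    (fun s _ _ => hgLim_int.integrableOn) ?_
    (hgLim_meas.stronglyMeasurable.aestronglyMeasurable)
  intro A hA _
  have l1 : Tendsto (fun n => ∫ ω in A, G ω (dyad X n ω) ∂μ) atTop
      (nhds (∫ ω in A, gLim G X ω ∂μ)) := by
    refine tendsto_integral_of_dominated_convergence (fun _ => 1)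
      (fun n => ((hGdyad_meas n).mono hm le_rfl).aestronglyMeasurable.restrict)
      (integrable_const 1)
      (fun n => Eventually.of_forall fun ω => by
        simpa [Real.norm_eq_abs] using hGbd (dyad X n) ω) ?_
    exact ae_restrict_of_ae (hGrc.mono fun ω h => tendsto_G_dyad h)
  have l2 : Tendsto (fun n => ∫ ω in A, (if S ω ≤ dyad X n ω then (1:ℝ) else 0) ∂μ) atTop
      (nhds (∫ ω in A, (if S ω ≤ X ω then (1:ℝ) else 0) ∂μ)) := by
    refine tendsto_integral_of_dominated_convergence (fun _ => 1)
      (fun n => (hinddyad_meas n).aestronglyMeasurable.restrict)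
      (integrable_const 1)
      (fun n => Eventually.of_forall fun ω => by
        simpa [Real.norm_eq_abs] using hind_bd (dyad X n) ω) ?_
    exact Eventually.of_forall fun ω => tendsto_ind_dyad ω
  exact tendsto_nhds_unique l1 (l2.congr (fun n => (stepn n A hA).symm))



noncomputable def epsAux (Fc : ℕ → Ω' → ℝ → ℝ) (S q : ℕ → Ω' → ℝ) (t : ℕ) (ω : Ω') : ℝ :=
  gLim (Fc t) (q t) ω - (if S t ω ≤ q t ω then (1:ℝ) else 0)

lemma epsAux_bd {Fc : ℕ → Ω' → ℝ → ℝ} {S q : ℕ → Ω' → ℝ} {t : ℕ}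
    (hFc01 : ∀ ω r, Fc t ω r ∈ Set.Icc (0:ℝ) 1) (ω : Ω') :
    |epsAux Fc S q t ω| ≤ 1 := by
  have h1 := gLim_mem_Icc hFc01 (q t) ω
  have h2 : (if S t ω ≤ q t ω then (1:ℝ) else 0) ∈ Set.Icc (0:ℝ) 1 := by
    split <;> norm_num
  rw [epsAux, abs_le]
  exact ⟨by linarith [h1.1, h2.2], by linarith [h1.2, h2.1]⟩

lemma martingale_part {mΩ : MeasurableSpace Ω'} (μ : Measure Ω') [IsProbabilityMeasure μ]
    (ℱ : Filtration ℕ mΩ)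
    (S q : ℕ → Ω' → ℝ) (Fc : ℕ → Ω' → ℝ → ℝ) (η : ℕ → ℝ)
    (hSmeas : ∀ t, 1 ≤ t → Measurable[ℱ t] (S t))
    (hq_meas : ∀ t, 1 ≤ t → Measurable[ℱ (t - 1)] (q t))
    (hFc01 : ∀ t, 1 ≤ t → ∀ ω r, Fc t ω r ∈ Set.Icc (0 : ℝ) 1)
    (hFc_meas : ∀ t, 1 ≤ t → ∀ r : ℝ, Measurable[ℱ (t - 1)] (fun ω => Fc t ω r))
    (hFc_cond : ∀ t, 1 ≤ t → ∀ r : ℝ,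
      (fun ω => Fc t ω r) =ᵐ[μ] μ[fun ω => if S t ω ≤ r then (1 : ℝ) else 0|ℱ (t - 1)])
    (hFc_rc : ∀ t, 1 ≤ t → ∀ᵐ ω ∂μ, ∀ r, ContinuousWithinAt (Fc t ω) (Set.Ici r) r)
    (hη_sq : Summable (fun t => (η (t + 1)) ^ 2))
    (hη_nonneg : ∀ t, 1 ≤ t → 0 ≤ η t) :
    ∀ᵐ ω ∂μ, ∃ c, Tendsto (fun n => ∑ t ∈ Finset.Ico 1 n, η t * epsAux Fc S q t ω)
      atTop (nhds c) := by
  classical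
  set eps : ℕ → Ω' → ℝ := epsAux Fc S q with hepsdef
  set M : ℕ → Ω' → ℝ := fun n ω => ∑ t ∈ Finset.range n, η (t + 1) * eps (t + 1) ω with hMdef
  -- basic measurability / integrability
  have hSm0 : ∀ t, 1 ≤ t → Measurable (S t) := fun t ht => (hSmeas t ht).mono (ℱ.le t) le_rfl
  have hFq_meas : ∀ t, 1 ≤ t → Measurable[ℱ (t - 1)] (gLim (Fc t) (q t)) := fun t ht =>
    measurable_gLim (hFc_meas t ht) (hq_meas t ht)
  have hFq_bd : ∀ t, 1 ≤ t → ∀ ω, |gLim (Fc t) (q t) ω| ≤ 1 := by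
    intro t ht ω
    have h := gLim_mem_Icc (hFc01 t ht) (q t) ω
    rw [abs_le]; exact ⟨by linarith [h.1], h.2⟩
  have hFq_int : ∀ t, 1 ≤ t → Integrable (gLim (Fc t) (q t)) μ := fun t ht =>
    integrable_of_bounded (((hFq_meas t ht).mono (ℱ.le _) le_rfl)).aestronglyMeasurable
      (hFq_bd t ht)
  have hind_meas : ∀ t, 1 ≤ t →
      Measurable[ℱ t] (fun ω => if S t ω ≤ q t ω then (1:ℝ) else 0) := fun t ht =>
    Measurable.ite (measurableSet_le (hSmeas t ht)
      ((hq_meas t ht).mono (ℱ.mono (Nat.sub_le t 1)) le_rfl)) measurable_const measurable_const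
  have hind_int : ∀ t, 1 ≤ t →
      Integrable (fun ω => if S t ω ≤ q t ω then (1:ℝ) else 0) μ := fun t ht =>
    integrable_of_bounded (C := 1) ((hind_meas t ht).mono (ℱ.le t) le_rfl).aestronglyMeasurable
      (fun ω => by split <;> norm_num)
  have heps_meas : ∀ t, 1 ≤ t → Measurable[ℱ t] (eps t) := fun t ht =>
    ((hFq_meas t ht).mono (ℱ.mono (Nat.sub_le t 1)) le_rfl).sub (hind_meas t ht)
  have heps_bd : ∀ t, 1 ≤ t → ∀ ω, |eps t ω| ≤ 1 := fun t ht ω => epsAux_bd (hFc01 t ht) ω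
  have heps_int : ∀ t, 1 ≤ t → Integrable (eps t) μ := fun t ht =>
    integrable_of_bounded ((heps_meas t ht).mono (ℱ.le t) le_rfl).aestronglyMeasurable
      (heps_bd t ht)
  -- conditional expectation of eps vanishes
  have hcond : ∀ t, 1 ≤ t →
      gLim (Fc t) (q t) =ᵐ[μ] μ[fun ω => if S t ω ≤ q t ω then (1:ℝ) else 0 | ℱ (t - 1)] :=
    fun t ht => condexp_randomPoint (ℱ.le (t - 1)) (hSm0 t ht) (hFc01 t ht) (hFc_meas t ht)
      (hFc_cond t ht) (hq_meas t ht)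
      ((hFc_rc t ht).mono fun ω h => h (q t ω))
  have heps_condzero : ∀ n : ℕ, μ[eps (n + 1) | ℱ n] =ᵐ[μ] 0 := by
    intro n
    have h1 : 1 ≤ n + 1 := Nat.le_add_left 1 n
    have heq : eps (n + 1)
        = gLim (Fc (n + 1)) (q (n + 1)) - fun ω => (if S (n+1) ω ≤ q (n+1) ω then (1:ℝ) else 0) :=
      rfl
    rw [heq]
    have h2 := condExp_sub (m := ℱ n) (μ := μ) (hFq_int (n + 1) h1) (hind_int (n + 1) h1)
    refine h2.trans ?_
    have h3 : μ[gLim (Fc (n+1)) (q (n+1))|ℱ n] = gLim (Fc (n+1)) (q (n+1)) := by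
      refine condExp_of_stronglyMeasurable (ℱ.le n) ?_ (hFq_int (n + 1) h1)
      have := (hFq_meas (n + 1) h1).stronglyMeasurable
      simpa [Nat.add_sub_cancel] using this
    rw [h3]
    have h4 : μ[fun ω => if S (n+1) ω ≤ q (n+1) ω then (1:ℝ) else 0|ℱ n]
        =ᵐ[μ] gLim (Fc (n+1)) (q (n+1)) := by
      have := (hcond (n + 1) h1).symm
      simpa [Nat.add_sub_cancel] using this
    filter_upwards [h4] with ω hω
    simp [hω]
  -- martingale structure
  have hM_meas : ∀ n, Measurable[ℱ n] (M n) := by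
    intro n
    refine Finset.measurable_sum _ (fun t htmem => ?_)
    have h1 : t + 1 ≤ n := Finset.mem_range.mp htmem
    exact ((heps_meas (t + 1) (Nat.le_add_left 1 t)).mono (ℱ.mono h1) le_rfl).const_mul (η (t + 1))
  have hM_meas0 : ∀ n, Measurable (M n) := fun n => (hM_meas n).mono (ℱ.le n) le_rfl
  have hM_bd : ∀ n ω, |M n ω| ≤ ∑ t ∈ Finset.range n, η (t + 1) := by
    intro n ω
    calc |M n ω| ≤ ∑ t ∈ Finset.range n, |η (t + 1) * eps (t + 1) ω| :=
          Finset.abs_sum_le_sum_abs _ _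
      _ ≤ ∑ t ∈ Finset.range n, η (t + 1) := by
          refine Finset.sum_le_sum fun t _ => ?_
          rw [abs_mul, abs_of_nonneg (hη_nonneg (t + 1) (Nat.le_add_left 1 t))]
          calc η (t + 1) * |eps (t + 1) ω| ≤ η (t + 1) * 1 :=
                mul_le_mul_of_nonneg_left (heps_bd (t + 1) (Nat.le_add_left 1 t) ω)
                  (hη_nonneg (t + 1) (Nat.le_add_left 1 t))
            _ = η (t + 1) := mul_one _
  have hM_int : ∀ n, Integrable (M n) μ := fun n =>
    integrable_of_bounded (hM_meas0 n).aestronglyMeasurable (hM_bd n)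
  have hmart : Martingale M ℱ μ := by
    refine martingale_nat (fun n => (hM_meas n).stronglyMeasurable) hM_int (fun n => ?_)
    have hsucc : M (n + 1) = M n + fun ω => η (n + 1) * eps (n + 1) ω := by
      funext ω
      simp [hMdef, Finset.sum_range_succ]
    rw [hsucc]
    have hint2 : Integrable (fun ω => η (n + 1) * eps (n + 1) ω) μ :=
      (heps_int (n + 1) (Nat.le_add_left 1 n)).const_mul _
    have h1 := condExp_add (m := ℱ n) (μ := μ) (hM_int n) hint2
    have h2 : μ[M n | ℱ n] = M n :=
      condExp_of_stronglyMeasurable (ℱ.le n) (hM_meas n).stronglyMeasurable (hM_int n)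
    have h3 : μ[(fun ω => η (n + 1) * eps (n + 1) ω)|ℱ n]
        =ᵐ[μ] fun ω => η (n + 1) * (μ[eps (n + 1)|ℱ n]) ω := by
      have := condExp_smul (m := ℱ n) (μ := μ) (η (n + 1)) (eps (n + 1))
      exact this
    refine EventuallyEq.symm (h1.trans ?_)
    rw [h2]
    filter_upwards [h3, heps_condzero n] with ω hω3 hω0
    simp only [Pi.add_apply, hω3, hω0, Pi.zero_apply, mul_zero, add_zero]
  -- orthogonality
  have hMe_int : ∀ n, Integrable (fun ω => M n ω * eps (n + 1) ω) μ := by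
    intro n
    refine integrable_of_bounded (C := ∑ t ∈ Finset.range n, η (t + 1))
      ((hM_meas0 n).mul ((heps_meas (n + 1) (Nat.le_add_left 1 n)).mono
        (ℱ.le _) le_rfl)).aestronglyMeasurable (fun ω => ?_)
    rw [abs_mul]
    calc |M n ω| * |eps (n + 1) ω| ≤ (∑ t ∈ Finset.range n, η (t + 1)) * 1 :=
          mul_le_mul (hM_bd n ω) (heps_bd (n + 1) (Nat.le_add_left 1 n) ω)
            (abs_nonneg _) ((abs_nonneg _).trans (hM_bd n ω))
      _ = _ := mul_one _
  have hMe_ortho : ∀ n, ∫ ω, M n ω * eps (n + 1) ω ∂μ = 0 := by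
    intro n
    have h1 : μ[(fun ω => M n ω * eps (n + 1) ω) | ℱ n]
        =ᵐ[μ] (fun ω => M n ω * (μ[eps (n + 1)|ℱ n]) ω) :=
      condExp_mul_of_stronglyMeasurable_left (hM_meas n).stronglyMeasurable
        (hMe_int n) (heps_int (n + 1) (Nat.le_add_left 1 n))
    have h2 : (fun ω => M n ω * (μ[eps (n + 1)|ℱ n]) ω) =ᵐ[μ] 0 := by
      filter_upwards [heps_condzero n] with ω hω
      simp [hω]
    calc ∫ ω, M n ω * eps (n + 1) ω ∂μ
        = ∫ ω, (μ[(fun ω => M n ω * eps (n + 1) ω) | ℱ n]) ω ∂μ :=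
          (integral_condExp (ℱ.le n)).symm
      _ = ∫ ω, (0 : Ω' → ℝ) ω ∂μ := integral_congr_ae (h1.trans h2)
      _ = 0 := by simp
  -- second moments
  have hsq_int : ∀ n, Integrable (fun ω => (M n ω) ^ 2) μ := by
    intro n
    refine integrable_of_bounded (C := (∑ t ∈ Finset.range n, η (t + 1)) ^ 2)
      ((hM_meas0 n).pow_const 2).aestronglyMeasurable (fun ω => ?_)
    rw [abs_pow]
    exact pow_le_pow_left₀ (abs_nonneg _) (hM_bd n ω) 2
  have hepssq_int : ∀ n, Integrable (fun ω => (eps (n + 1) ω) ^ 2) μ := by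
    intro n
    refine integrable_of_bounded (C := 1)
      ((((heps_meas (n + 1) (Nat.le_add_left 1 n)).mono (ℱ.le _)
        le_rfl)).pow_const 2).aestronglyMeasurable (fun ω => ?_)
    rw [abs_pow]
    calc |eps (n+1) ω| ^ 2 ≤ 1 ^ 2 :=
          pow_le_pow_left₀ (abs_nonneg _) (heps_bd (n + 1) (Nat.le_add_left 1 n) ω) 2
      _ = 1 := one_pow 2
  have hepssq_le : ∀ n, ∫ ω, (eps (n + 1) ω) ^ 2 ∂μ ≤ 1 := by
    intro n
    calc ∫ ω, (eps (n + 1) ω) ^ 2 ∂μ ≤ ∫ _ω, (1:ℝ) ∂μ := by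
          refine integral_mono (hepssq_int n) (integrable_const 1) (fun ω => ?_)
          rw [← sq_abs]
          calc |eps (n+1) ω| ^ 2 ≤ 1 ^ 2 :=
                pow_le_pow_left₀ (abs_nonneg _) (heps_bd (n + 1) (Nat.le_add_left 1 n) ω) 2
            _ = 1 := one_pow 2
      _ = 1 := by simp
  have hM2 : ∀ n, ∫ ω, (M n ω) ^ 2 ∂μ ≤ ∑ t ∈ Finset.range n, η (t + 1) ^ 2 := by
    intro n
    induction n with
    | zero => simp [hMdef]
    | succ n ih =>
        have hexp : (fun ω => (M (n + 1) ω) ^ 2)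
            = fun ω => ((M n ω) ^ 2 + η (n + 1) ^ 2 * (eps (n + 1) ω) ^ 2)
              + (2 * η (n + 1)) * (M n ω * eps (n + 1) ω) := by
          funext ω
          simp only [hMdef, Finset.sum_range_succ]
          ring
        have hint1 : Integrable (fun ω => M n ω ^ 2 + η (n + 1) ^ 2 * eps (n + 1) ω ^ 2) μ :=
          (hsq_int n).add ((hepssq_int n).const_mul _)
        have hint2 : Integrable (fun ω => 2 * η (n + 1) * (M n ω * eps (n + 1) ω)) μ :=
          (hMe_int n).const_mul _
        have e1 : ∫ ω, (M (n + 1) ω) ^ 2 ∂μ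
            = (∫ ω, (M n ω ^ 2 + η (n + 1) ^ 2 * eps (n + 1) ω ^ 2) ∂μ)
              + ∫ ω, 2 * η (n + 1) * (M n ω * eps (n + 1) ω) ∂μ := by
          rw [hexp]
          exact integral_add hint1 hint2
        have e3 : ∫ ω, 2 * η (n + 1) * (M n ω * eps (n + 1) ω) ∂μ = 0 := by
          rw [integral_const_mul, hMe_ortho n, mul_zero]
        have e4 : ∫ ω, (M n ω ^ 2 + η (n + 1) ^ 2 * eps (n + 1) ω ^ 2) ∂μ
            = (∫ ω, M n ω ^ 2 ∂μ) + η (n + 1) ^ 2 * ∫ ω, eps (n + 1) ω ^ 2 ∂μ := by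
          rw [integral_add (hsq_int n) ((hepssq_int n).const_mul _), integral_const_mul]
        rw [e1, e3, e4, add_zero, Finset.sum_range_succ]
        have h5 : η (n + 1) ^ 2 * ∫ ω, (eps (n + 1) ω) ^ 2 ∂μ ≤ η (n + 1) ^ 2 * 1 :=
          mul_le_mul_of_nonneg_left (hepssq_le n) (sq_nonneg _)
        linarith
  -- L¹ bound and convergence
  set C : ℝ := ∑' t, η (t + 1) ^ 2 with hCdef
  have hC_le : ∀ n, ∑ t ∈ Finset.range n, η (t + 1) ^ 2 ≤ C :=
    fun n => Summable.sum_le_tsum _ (fun t _ => sq_nonneg _) hη_sq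
  have hL1 : ∀ n, ∫ ω, |M n ω| ∂μ ≤ (C + 1) / 2 := by
    intro n
    have habs_int : Integrable (fun ω => |M n ω|) μ := (hM_int n).abs
    have hg_int : Integrable (fun ω => ((M n ω) ^ 2 + 1) / 2) μ :=
      ((hsq_int n).add (integrable_const 1)).div_const 2
    have h1 : ∫ ω, |M n ω| ∂μ ≤ ∫ ω, ((M n ω) ^ 2 + 1) / 2 ∂μ := by
      refine integral_mono habs_int hg_int (fun ω => ?_)
      nlinarith [sq_nonneg (|M n ω| - 1), sq_abs (M n ω), abs_nonneg (M n ω)]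
    have h2 : ∫ ω, ((M n ω) ^ 2 + 1) / 2 ∂μ = ((∫ ω, (M n ω) ^ 2 ∂μ) + 1) / 2 := by
      rw [integral_div, integral_add (hsq_int n) (integrable_const 1)]
      simp
    rw [h2] at h1
    have := (hM2 n).trans (hC_le n)
    linarith
  have hbdd : ∀ n, eLpNorm (M n) 1 μ ≤ ((C + 1) / 2).toNNReal := by
    intro n
    rw [eLpNorm_one_eq_lintegral_enorm, ← ofReal_integral_norm_eq_lintegral_enorm (hM_int n)]
    exact ENNReal.ofReal_le_ofReal (by simpa [Real.norm_eq_abs] using hL1 n)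
  have hconvM : ∀ᵐ ω ∂μ, ∃ c, Tendsto (fun n => M n ω) atTop (nhds c) :=
    hmart.submartingale.exists_ae_tendsto_of_bdd hbdd
  -- convert to Ico-sum form
  filter_upwards [hconvM] with ω hω
  obtain ⟨c, hc⟩ := hω
  refine ⟨c, ?_⟩
  have hMIco : ∀ n, M n ω = ∑ t ∈ Finset.Ico 1 (n + 1), η t * eps t ω := by
    intro n
    rw [Finset.sum_Ico_eq_sum_range]
    simp [hMdef, add_comm]
  refine (tendsto_add_atTop_iff_nat 1).mp ?_
  exact hc.congr hMIco
end OnlineConformal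

lemma detD (α : ℝ) (hα : α ∈ Set.Ioo (0:ℝ) 1)
    (F : ℝ → ℝ) (hFmono : Monotone F)
    (qstar : ℝ) (hlt : ∀ r, r < qstar → F r < 1 - α) (hgt : ∀ r, qstar < r → 1 - α < F r)
    (η : ℕ → ℝ) (hη_nonneg : ∀ t, 1 ≤ t → 0 ≤ η t)
    (hη_div : ¬ Summable (fun t => η (t + 1)))
    (hη0 : Tendsto η atTop (nhds 0))
    (G : ℕ → ℝ → ℝ) (hGmono : ∀ t, 1 ≤ t → Monotone (G t))
    (hG01 : ∀ t, 1 ≤ t → ∀ r, G t r ∈ Set.Icc (0:ℝ) 1)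
    (hGconv : ∀ r, ContinuousAt F r → Tendsto (fun t => G t r) atTop (nhds (F r)))
    (e : ℕ → ℝ) (he : ∀ t, 1 ≤ t → |e t| ≤ 1)
    (c : ℝ) (hM : Tendsto (fun n => ∑ t ∈ Finset.Ico 1 n, η t * e t) atTop (nhds c))
    (x : ℕ → ℝ)
    (hrec : ∀ t, 1 ≤ t → x (t + 1) = x t + η t * (1 - α - G t (x t)) + η t * e t) :
    Tendsto x atTop (nhds qstar) := by
  have hα1 := hα.1
  have hα2 := hα.2
  rw [Metric.tendsto_atTop]
  intro ε hε
  set ε' := ε / 8 with hε'def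
  have hε' : 0 < ε' := by positivity
  -- continuity points
  have hcs : {r : ℝ | ¬ ContinuousAt F r}.Countable := hFmono.countable_not_continuousAt
  have hdense : Dense {r : ℝ | ¬ ContinuousAt F r}ᶜ := hcs.dense_compl ℝ
  obtain ⟨a, ha_mem, ha1, ha2⟩ := hdense.exists_between (show qstar - ε' < qstar by linarith)
  obtain ⟨b, hb_mem, hb1, hb2⟩ := hdense.exists_between (show qstar < qstar + ε' by linarith)
  have ha_cont : ContinuousAt F a := not_not.mp ha_mem
  have hb_cont : ContinuousAt F b := not_not.mp hb_mem
  have hFa : F a < 1 - α := hlt a ha2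
  have hFb : 1 - α < F b := hgt b hb1
  have hab : a < b := ha2.trans hb1
  set δ := min (1 - α - F a) (F b - (1 - α)) with hδdef
  have hδ : 0 < δ := lt_min (by linarith) (by linarith)
  have hδa : δ ≤ 1 - α - F a := min_le_left _ _
  have hδb : δ ≤ F b - (1 - α) := min_le_right _ _
  set Q : ℕ → ℝ := fun n => ∑ t ∈ Finset.Ico 1 n, η t * e t with hQdef
  obtain ⟨T₁, hT₁⟩ := Metric.tendsto_atTop.mp hM (ε' / 2) (by positivity)
  have hQdiff : ∀ m n, T₁ ≤ m → T₁ ≤ n → |Q n - Q m| < ε' := by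
    intro m n hm hn
    have h1 := hT₁ n hn
    have h2 := hT₁ m hm
    rw [Real.dist_eq] at h1 h2
    have h3 := abs_sub_le (Q n) c (Q m)
    have h4 : |c - Q m| = |Q m - c| := abs_sub_comm _ _
    linarith
  obtain ⟨T₂, hT₂⟩ := Metric.tendsto_atTop.mp hη0 ε' hε'
  have hηsmall : ∀ t, T₂ ≤ t → η t ≤ ε' := by
    intro t ht
    have := hT₂ t ht
    rw [Real.dist_eq, sub_zero] at this
    exact (abs_lt.mp this).2.le
  obtain ⟨T₃, hT₃⟩ := Metric.tendsto_atTop.mp (hGconv a ha_cont) (δ / 2) (by positivity)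
  obtain ⟨T₄, hT₄⟩ := Metric.tendsto_atTop.mp (hGconv b hb_cont) (δ / 2) (by positivity)
  set T := max (max T₁ T₂) (max (max T₃ T₄) 1) with hTdef
  have hT1 : T₁ ≤ T := le_max_of_le_left (le_max_left _ _)
  have hT2 : T₂ ≤ T := le_max_of_le_left (le_max_right _ _)
  have hT3 : T₃ ≤ T := le_max_of_le_right (le_max_of_le_left (le_max_left _ _))
  have hT4 : T₄ ≤ T := le_max_of_le_right (le_max_of_le_left (le_max_right _ _))
  have hT_ge1 : 1 ≤ T := le_max_of_le_right (le_max_right _ _)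
  -- drift bounds
  have hdrift_neg : ∀ t y, T ≤ t → b ≤ y → 1 - α - G t y ≤ -(δ / 2) := by
    intro t y ht hy
    have h1 := hT₄ t (hT4.trans ht)
    rw [Real.dist_eq] at h1
    have h2 : G t b ≤ G t y := hGmono t (hT_ge1.trans ht) hy
    have := abs_lt.mp h1
    linarith
  have hdrift_pos : ∀ t y, T ≤ t → y ≤ a → δ / 2 ≤ 1 - α - G t y := by
    intro t y ht hy
    have h1 := hT₃ t (hT3.trans ht)
    rw [Real.dist_eq] at h1
    have h2 : G t y ≤ G t a := hGmono t (hT_ge1.trans ht) hy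
    have := abs_lt.mp h1
    linarith
  -- single step bound
  have hstep : ∀ t, 1 ≤ t → |x (t + 1) - x t| ≤ 2 * η t := by
    intro t ht
    have h01 := hG01 t ht (x t)
    have h01a := h01.1
    have h01b := h01.2
    have he1 := abs_le.mp (he t ht)
    have hηt := hη_nonneg t ht
    have hx : x (t + 1) - x t = η t * ((1 - α - G t (x t)) + e t) := by
      rw [hrec t ht]; ring
    rw [hx, abs_mul, abs_of_nonneg hηt]
    have hfac : |(1 - α - G t (x t)) + e t| ≤ 2 := by
      rw [abs_le]
      constructor <;> [skip; skip] <;> linarith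
    nlinarith
  -- sum identity
  have hsum : ∀ m n, 1 ≤ m → m ≤ n →
      x n = x m + ∑ t ∈ Finset.Ico m n, (η t * (1 - α - G t (x t)) + η t * e t) := by
    intro m n hm hmn
    induction n, hmn using Nat.le_induction with
    | base => simp
    | succ n hmn ih =>
        rw [Finset.sum_Ico_succ_top hmn, ← add_assoc, ← ih, hrec n (hm.trans hmn)]
        ring
  have hQseg : ∀ m n, 1 ≤ m → m ≤ n → ∑ t ∈ Finset.Ico m n, η t * e t = Q n - Q m := by
    intro m n hm hmn
    have h := Finset.sum_Ico_consecutive (fun t => η t * e t) hm hmn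
    simp only [hQdef]
    linarith [h]
  -- divergence of partial sums of η
  have hdiv1 : Tendsto (fun n => ∑ t ∈ Finset.Ico 1 n, η t) atTop atTop := by
    have h1 : Tendsto (fun n => ∑ t ∈ Finset.range n, η (t + 1)) atTop atTop :=
      (not_summable_iff_tendsto_nat_atTop_of_nonneg
        (fun t => hη_nonneg (t + 1) (Nat.le_add_left 1 t))).mp hη_div
    have h2 : ∀ n : ℕ, ∑ t ∈ Finset.range n, η (t + 1) = ∑ t ∈ Finset.Ico 1 (n + 1), η t := by
      intro n
      rw [Finset.sum_Ico_eq_sum_range]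
      simp [add_comm]
    rw [show (fun n => ∑ t ∈ Finset.range n, η (t+1))
        = fun n => ∑ t ∈ Finset.Ico 1 (n + 1), η t from funext h2] at h1
    exact (tendsto_add_atTop_iff_nat 1).mp h1
  have hdiv : ∀ N, 1 ≤ N → Tendsto (fun n => ∑ t ∈ Finset.Ico N n, η t) atTop atTop := by
    intro N hN
    have h1 : Tendsto (fun n => (∑ t ∈ Finset.Ico 1 n, η t) + (-(∑ t ∈ Finset.Ico 1 N, η t)))
        atTop atTop := tendsto_atTop_add_const_right _ _ hdiv1
    refine Tendsto.congr' ?_ h1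
    filter_upwards [eventually_ge_atTop N] with n hn
    have := Finset.sum_Ico_consecutive (fun t => η t) hN hn
    linarith
  -- entry and stability, upper side
  have hentry_upper : ∃ n₀, T ≤ n₀ ∧ x n₀ ≤ b := by
    by_contra hcon
    push_neg at hcon
    have hbound : ∀ n, T ≤ n →
        x n ≤ x T + (Q n - Q T) - δ / 2 * ∑ t ∈ Finset.Ico T n, η t := by
      intro n hn
      have hs := hsum T n hT_ge1 hn
      rw [Finset.sum_add_distrib, hQseg T n hT_ge1 hn] at hs
      have hd : ∑ t ∈ Finset.Ico T n, η t * (1 - α - G t (x t))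
          ≤ ∑ t ∈ Finset.Ico T n, η t * (-(δ / 2)) := by
        refine Finset.sum_le_sum fun t htmem => ?_
        have ht' : T ≤ t := (Finset.mem_Ico.mp htmem).1
        exact mul_le_mul_of_nonneg_left
          (hdrift_neg t (x t) ht' (hcon t ht').le) (hη_nonneg t (hT_ge1.trans ht'))
      rw [← Finset.sum_mul] at hd
      rw [hs]
      linarith [hd]
    set K := (x T + ε' - b + 1) * (2 / δ) with hK
    obtain ⟨n, hn1, hn2⟩ := ((hdiv T hT_ge1).eventually_ge_atTop K).and
      (eventually_ge_atTop T) |>.exists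
    have hb1' := hbound n hn2
    have hQb := hQdiff T n hT1 (hT1.trans hn2)
    have habs := (abs_lt.mp hQb).2
    have hKmul : δ / 2 * K = x T + ε' - b + 1 := by
      rw [hK]; field_simp
    have h5 : δ / 2 * K ≤ δ / 2 * ∑ t ∈ Finset.Ico T n, η t :=
      mul_le_mul_of_nonneg_left hn1 (by linarith)
    have := hcon n hn2
    rw [hKmul] at h5
    linarith
  have hstay_upper : ∀ n₀, T ≤ n₀ → x n₀ ≤ b → ∀ n, n₀ ≤ n → x n ≤ b + 3 * ε' := by
    intro n₀ hn₀T hxn₀ n hn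
    have hlast : ∀ n, n₀ ≤ n → ∃ k, n₀ ≤ k ∧ k ≤ n ∧ x k ≤ b ∧
        ∀ j, k < j → j ≤ n → b < x j := by
      intro n hn
      induction n, hn using Nat.le_induction with
      | base => exact ⟨n₀, le_rfl, le_rfl, hxn₀, fun j h1 h2 => by omega⟩
      | succ n hn ih =>
          by_cases hx : x (n + 1) ≤ b
          · exact ⟨n + 1, hn.trans (Nat.le_succ n), le_rfl, hx, fun j h1 h2 => by omega⟩
          · obtain ⟨k, hk1, hk2, hk3, hk4⟩ := ih
            refine ⟨k, hk1, hk2.trans (Nat.le_succ n), hk3, fun j h1 h2 => ?_⟩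
            rcases Nat.lt_succ_iff_lt_or_eq.mp (Nat.lt_succ_of_le h2) with h | h
            · exact hk4 j h1 (by omega)
            · rw [h]; exact not_le.mp hx
    obtain ⟨k, hk1, hk2, hk3, hk4⟩ := hlast n hn
    rcases eq_or_lt_of_le hk2 with heq | hkn
    · rw [← heq]; linarith
    · have hk1T : T ≤ k := hn₀T.trans hk1
      have hkge1 : 1 ≤ k := hT_ge1.trans hk1T
      have hksucc : k + 1 ≤ n := hkn
      have hxk1 : x (k + 1) ≤ b + 2 * ε' := by
        have hab2 := abs_le.mp (hstep k hkge1)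
        have hηk : η k ≤ ε' := hηsmall k (hT2.trans hk1T)
        have hηk0 : 0 ≤ η k := hη_nonneg k hkge1
        linarith [hab2.2]
      have hsum2 := hsum (k + 1) n (by omega) hksucc
      rw [Finset.sum_add_distrib, hQseg (k + 1) n (by omega) hksucc] at hsum2
      have hdriftle : ∑ t ∈ Finset.Ico (k + 1) n, η t * (1 - α - G t (x t)) ≤ 0 := by
        refine Finset.sum_nonpos fun t htmem => ?_
        obtain ⟨ht1, ht2⟩ := Finset.mem_Ico.mp htmem
        have hbxt : b < x t := hk4 t (by omega) (by omega)
        have hd := hdrift_neg t (x t) (hk1T.trans (by omega)) hbxt.le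
        exact mul_nonpos_of_nonneg_of_nonpos (hη_nonneg t (by omega)) (by linarith)
      have hQb : |Q n - Q (k + 1)| < ε' := hQdiff (k + 1) n (by omega) (hT1.trans (hn₀T.trans hn))
      have habs := (abs_lt.mp hQb).2
      linarith
  -- entry and stability, lower side
  have hentry_lower : ∃ n₁, T ≤ n₁ ∧ a ≤ x n₁ := by
    by_contra hcon
    push_neg at hcon
    have hbound : ∀ n, T ≤ n →
        x T + (Q n - Q T) + δ / 2 * ∑ t ∈ Finset.Ico T n, η t ≤ x n := by
      intro n hn
      have hs := hsum T n hT_ge1 hn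
      rw [Finset.sum_add_distrib, hQseg T n hT_ge1 hn] at hs
      have hd : ∑ t ∈ Finset.Ico T n, η t * (δ / 2)
          ≤ ∑ t ∈ Finset.Ico T n, η t * (1 - α - G t (x t)) := by
        refine Finset.sum_le_sum fun t htmem => ?_
        have ht' : T ≤ t := (Finset.mem_Ico.mp htmem).1
        exact mul_le_mul_of_nonneg_left
          (hdrift_pos t (x t) ht' (hcon t ht').le) (hη_nonneg t (hT_ge1.trans ht'))
      rw [← Finset.sum_mul] at hd
      rw [hs]
      linarith [hd]
    set K := (a - x T + ε' + 1) * (2 / δ) with hK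
    obtain ⟨n, hn1, hn2⟩ := ((hdiv T hT_ge1).eventually_ge_atTop K).and
      (eventually_ge_atTop T) |>.exists
    have hb1' := hbound n hn2
    have hQb := hQdiff T n hT1 (hT1.trans hn2)
    have habs := (abs_lt.mp hQb).1
    have hKmul : δ / 2 * K = a - x T + ε' + 1 := by
      rw [hK]; field_simp
    have h5 : δ / 2 * K ≤ δ / 2 * ∑ t ∈ Finset.Ico T n, η t :=
      mul_le_mul_of_nonneg_left hn1 (by linarith)
    have := hcon n hn2
    rw [hKmul] at h5
    linarith
  have hstay_lower : ∀ n₁, T ≤ n₁ → a ≤ x n₁ → ∀ n, n₁ ≤ n → a - 3 * ε' ≤ x n := by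
    intro n₁ hn₁T hxn₁ n hn
    have hlast : ∀ n, n₁ ≤ n → ∃ k, n₁ ≤ k ∧ k ≤ n ∧ a ≤ x k ∧
        ∀ j, k < j → j ≤ n → x j < a := by
      intro n hn
      induction n, hn using Nat.le_induction with
      | base => exact ⟨n₁, le_rfl, le_rfl, hxn₁, fun j h1 h2 => by omega⟩
      | succ n hn ih =>
          by_cases hx : a ≤ x (n + 1)
          · exact ⟨n + 1, hn.trans (Nat.le_succ n), le_rfl, hx, fun j h1 h2 => by omega⟩
          · obtain ⟨k, hk1, hk2, hk3, hk4⟩ := ih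
            refine ⟨k, hk1, hk2.trans (Nat.le_succ n), hk3, fun j h1 h2 => ?_⟩
            rcases Nat.lt_succ_iff_lt_or_eq.mp (Nat.lt_succ_of_le h2) with h | h
            · exact hk4 j h1 (by omega)
            · rw [h]; exact not_le.mp hx
    obtain ⟨k, hk1, hk2, hk3, hk4⟩ := hlast n hn
    rcases eq_or_lt_of_le hk2 with heq | hkn
    · rw [← heq]; linarith
    · have hk1T : T ≤ k := hn₁T.trans hk1
      have hkge1 : 1 ≤ k := hT_ge1.trans hk1T
      have hksucc : k + 1 ≤ n := hkn
      have hxk1 : a - 2 * ε' ≤ x (k + 1) := by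
        have hab2 := abs_le.mp (hstep k hkge1)
        have hηk : η k ≤ ε' := hηsmall k (hT2.trans hk1T)
        have hηk0 : 0 ≤ η k := hη_nonneg k hkge1
        linarith [hab2.1]
      have hsum2 := hsum (k + 1) n (by omega) hksucc
      rw [Finset.sum_add_distrib, hQseg (k + 1) n (by omega) hksucc] at hsum2
      have hdriftge : 0 ≤ ∑ t ∈ Finset.Ico (k + 1) n, η t * (1 - α - G t (x t)) := by
        refine Finset.sum_nonneg fun t htmem => ?_
        obtain ⟨ht1, ht2⟩ := Finset.mem_Ico.mp htmem
        have hxa : x t < a := hk4 t (by omega) (by omega)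
        have hd := hdrift_pos t (x t) (hk1T.trans (by omega)) hxa.le
        exact mul_nonneg (hη_nonneg t (by omega)) (by linarith)
      have hQb : |Q n - Q (k + 1)| < ε' := hQdiff (k + 1) n (by omega) (hT1.trans (hn₁T.trans hn))
      have habs := (abs_lt.mp hQb).1
      linarith
  -- conclusion
  obtain ⟨n₀, hn₀T, hxn₀⟩ := hentry_upper
  obtain ⟨n₁, hn₁T, hxn₁⟩ := hentry_lower
  refine ⟨max n₀ n₁, fun n hn => ?_⟩
  have h1 := hstay_upper n₀ hn₀T hxn₀ n ((le_max_left _ _).trans hn)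
  have h2 := hstay_lower n₁ hn₁T hxn₁ n ((le_max_right _ _).trans hn)
  rw [Real.dist_eq, abs_lt]
  constructor
  · linarith
  · linarith



open OnlineConformal in
/-- **Convergence of the threshold with online-trained scores.**
Fix `α ∈ (0,1)` and `B > 0`. Let `(ℱ t)` be a filtration, `(S t)_{t ≥ 1}` scores in `[0,B]`
with `S t` being `ℱ t`-measurable, and `Fc t ω` a regular conditional CDF of `S t` given
`ℱ (t-1)`. Suppose the deterministic nonnegative step sizes satisfy `∑_{t≥1} η t = ∞` and
`∑_{t≥1} (η t)² < ∞`. Let `F` be a fixed CDF supported on `[0,B]` with unique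
`(1-α)`-quantile `q* ∈ [0,B]`. Then for the online conformal update
`q (t+1) = q t + η t * (1{S t > q t} - α)` with deterministic `q 1 = q1 ∈ [0,B]`, for
almost every `ω`: if `Fc t ω r → F r` at every continuity point `r` of `F`, then
`q t ω → q*`. -/
theorem threshold_converges_online_training
    {Ω : Type*} {mΩ : MeasurableSpace Ω} (μ : Measure Ω) [IsProbabilityMeasure μ]
    (ℱ : Filtration ℕ mΩ)
    (α B : ℝ) (hα : α ∈ Set.Ioo (0 : ℝ) 1) (hB : 0 < B)
    (S : ℕ → Ω → ℝ)
    (hSrange : ∀ t, 1 ≤ t → ∀ ω, S t ω ∈ Set.Icc 0 B)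
    (hSmeas : ∀ t, 1 ≤ t → Measurable[ℱ t] (S t))
    (Fc : ℕ → Ω → ℝ → ℝ)
    (hFc01 : ∀ t, 1 ≤ t → ∀ ω r, Fc t ω r ∈ Set.Icc (0 : ℝ) 1)
    (hFc_meas : ∀ t, 1 ≤ t → ∀ r, Measurable[ℱ (t - 1)] (fun ω => Fc t ω r))
    (hFc_cond : ∀ t, 1 ≤ t → ∀ r : ℝ,
      (fun ω => Fc t ω r) =ᵐ[μ] μ[fun ω => if S t ω ≤ r then (1 : ℝ) else 0|ℱ (t - 1)])
    (hFc_cdf : ∀ t, 1 ≤ t → ∀ᵐ ω ∂μ,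
      Monotone (Fc t ω) ∧ (∀ r, ContinuousWithinAt (Fc t ω) (Set.Ici r) r) ∧
      (∀ r, r < 0 → Fc t ω r = 0) ∧ (∀ r, B ≤ r → Fc t ω r = 1))
    (η : ℕ → ℝ)
    (hη_nonneg : ∀ t, 1 ≤ t → 0 ≤ η t)
    (hη_div : ¬ Summable (fun t => η (t + 1)))
    (hη_sq : Summable (fun t => (η (t + 1)) ^ 2))
    (F : ℝ → ℝ)
    (hF01 : ∀ r, F r ∈ Set.Icc (0 : ℝ) 1)
    (hFmono : Monotone F)
    (hFrc : ∀ r, ContinuousWithinAt F (Set.Ici r) r)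
    (hF0 : ∀ r, r < 0 → F r = 0) (hF1 : ∀ r, B ≤ r → F r = 1)
    (qstar : ℝ) (hqstar : qstar ∈ Set.Icc 0 B)
    (hlt : ∀ r, r < qstar → F r < 1 - α)
    (hgt : ∀ r, qstar < r → 1 - α < F r)
    (q1 : ℝ) (hq1 : q1 ∈ Set.Icc 0 B)
    (q : ℕ → Ω → ℝ) (hq_init : ∀ ω, q 1 ω = q1)
    (hrec : ∀ t, 1 ≤ t → ∀ ω,
      q (t + 1) ω = q t ω + η t * ((if q t ω < S t ω then (1 : ℝ) else 0) - α)) :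
    ∀ᵐ ω ∂μ,
      (∀ r : ℝ, ContinuousAt F r → Tendsto (fun t => Fc t ω r) atTop (nhds (F r))) →
      Tendsto (fun t => q t ω) atTop (nhds qstar) := by
  classical
  -- measurability of the thresholds
  have hq_meas : ∀ t, 1 ≤ t → Measurable[ℱ (t - 1)] (q t) := by
    intro t ht
    induction t, ht using Nat.le_induction with
    | base =>
        rw [show q 1 = fun _ => q1 from funext hq_init]
        exact measurable_const
    | succ t ht ih =>
        have h1 : Measurable[ℱ t] (q t) := ih.mono (ℱ.mono (Nat.sub_le t 1)) le_rfl
        have hSt : Measurable[ℱ t] (S t) := hSmeas t ht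
        have heq : q (t + 1) = fun ω =>
            q t ω + η t * ((if q t ω < S t ω then (1:ℝ) else 0) - α) :=
          funext (hrec t ht)
        rw [show t + 1 - 1 = t from rfl, heq]
        exact h1.add
          (((Measurable.ite (measurableSet_lt h1 hSt) measurable_const
            measurable_const).sub measurable_const).const_mul (η t))
  -- martingale part
  have hMconv := martingale_part μ ℱ S q Fc η hSmeas hq_meas hFc01 hFc_meas hFc_cond
    (fun t ht => (hFc_cdf t ht).mono fun ω h => h.2.1) hη_sq hη_nonneg
  -- step sizes tend to zero
  have hη0 : Tendsto η atTop (nhds 0) := by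
    have h1 : Tendsto (fun t => η (t + 1) ^ 2) atTop (nhds 0) := hη_sq.tendsto_atTop_zero
    have h3 := (Real.continuous_sqrt.tendsto 0).comp h1
    simp only [Function.comp_def, Real.sqrt_sq_eq_abs, Real.sqrt_zero] at h3
    have h4 : Tendsto (fun t => η (t + 1)) atTop (nhds 0) :=
      (tendsto_zero_iff_abs_tendsto_zero _).mpr h3
    exact (tendsto_add_atTop_iff_nat 1).mp h4
  -- a.e. regular cdf properties
  have hcdf_ae : ∀ᵐ ω ∂μ, ∀ t : ℕ, 1 ≤ t →
      (Monotone (Fc t ω) ∧ (∀ r, ContinuousWithinAt (Fc t ω) (Set.Ici r) r) ∧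
        (∀ r, r < 0 → Fc t ω r = 0) ∧ (∀ r, B ≤ r → Fc t ω r = 1)) := by
    rw [ae_all_iff]
    intro t
    by_cases ht : 1 ≤ t
    · exact (hFc_cdf t ht).mono fun ω h _ => h
    · exact Eventually.of_forall fun ω h => absurd h ht
  filter_upwards [hMconv, hcdf_ae] with ω hMc hcdf hant
  obtain ⟨c, hc⟩ := hMc
  -- rewrite the recursion with the compensator
  have hrec' : ∀ t, 1 ≤ t → q (t + 1) ω
      = q t ω + η t * (1 - α - Fc t ω (q t ω)) + η t * epsAux Fc S q t ω := by
    intro t ht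
    have hFqeq : gLim (Fc t) (q t) ω = Fc t ω (q t ω) :=
      gLim_eq ((hcdf t ht).2.1 (q t ω))
    have h1 := hrec t ht ω
    by_cases h : S t ω ≤ q t ω
    · rw [h1, epsAux, hFqeq, if_pos h, if_neg (not_lt.mpr h)]
      ring
    · rw [h1, epsAux, hFqeq, if_neg h, if_pos (not_le.mp h)]
      ring
  exact detD α hα F hFmono qstar hlt hgt η hη_nonneg hη_div hη0
    (fun t => Fc t ω) (fun t ht => (hcdf t ht).1) (fun t ht r => hFc01 t ht ω r) hant
    (fun t => epsAux Fc S q t ω) (fun t ht => epsAux_bd (hFc01 t ht) ω) c hc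
    (fun t => q t ω) hrec'
end
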